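/- arXiv:2510.01509 — 8 statements merged into one kernel-verified Lean document; each statement's English description precedes it below -/
import Mathlib

section
/- For every integer k ≥ 1 and every integer n ≥ (1/2)·(C(2k,k) − 2)·k², there exists a 2-semi-intersecting family with parameters n and k of size at least ⌊n/k⌋ + C(2k,k)·k/2 − k (where C(2k,k) denotes the central binomial coefficient). -/
open Finset


/-- A 2-semi-intersecting family with parameters `n` and `k`: two disjoint base sets
`A` and `B`, each of size `n`, and a family `𝒮` of subsets of `A ∪ B` such that
`|S ∩ A| = |S ∩ B| = k` for every `S ∈ 𝒮`, and for distinct `S, T ∈ 𝒮` exactly one of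
`S ∩ T ∩ A = ∅` and `S ∩ T ∩ B = ∅` holds. -/
def IsSemiIntersecting2 {α : Type*} [DecidableEq α] (n k : ℕ)
    (A B : Finset α) (𝒮 : Finset (Finset α)) : Prop :=
  Disjoint A B ∧ A.card = n ∧ B.card = n ∧
  (∀ S ∈ 𝒮, S ⊆ A ∪ B) ∧
  (∀ S ∈ 𝒮, (S ∩ A).card = k ∧ (S ∩ B).card = k) ∧
  (∀ S ∈ 𝒮, ∀ T ∈ 𝒮, S ≠ T → Xor' (S ∩ T ∩ A = ∅) (S ∩ T ∩ B = ∅))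



lemma key1 {k x y a b : ℕ} (hk : 0 < k) (ha : a < k) (hb : b < k)
    (h : x * k + a = y * k + b) : x = y ∧ a = b := by
  have hx : (x * k + a) / k = x := by
    rw [Nat.mul_comm x k, Nat.mul_add_div hk, Nat.div_eq_of_lt ha, Nat.add_zero]
  have hy : (y * k + b) / k = y := by
    rw [Nat.mul_comm y k, Nat.mul_add_div hk, Nat.div_eq_of_lt hb, Nat.add_zero]
  have hxy : x = y := by rw [← hx, ← hy, h]
  subst hxy
  exact ⟨rfl, by omega⟩

lemma key2 {k p q r s c d : ℕ} (hr : r < k) (hs : s < k) (hc : c < k) (hd : d < k)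
    (h : p * k ^ 2 + (r * k + c) = q * k ^ 2 + (s * k + d)) : p = q ∧ r = s ∧ c = d := by
  have hk : 0 < k := by omega
  have hk2 : 0 < k ^ 2 := by positivity
  have h1 : r * k + c < k ^ 2 := by
    have : r * k + c < (r + 1) * k := by nlinarith
    have : (r + 1) * k ≤ k * k := Nat.mul_le_mul_right k (by omega)
    nlinarith [this]
  have h2 : s * k + d < k ^ 2 := by
    have h3 : s * k + d < (s + 1) * k := by nlinarith
    have h4 : (s + 1) * k ≤ k * k := Nat.mul_le_mul_right k (by omega)
    nlinarith
  obtain ⟨hpq, hrest⟩ := key1 hk2 h1 h2 h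
  obtain ⟨hrs, hcd⟩ := key1 hk hc hd hrest
  exact ⟨hpq, hrs, hcd⟩

lemma choose_central (k : ℕ) (hk : 1 ≤ k) :
    Nat.choose (2 * k) k = 2 * Nat.choose (2 * k - 1) (k - 1) := by
  obtain ⟨j, rfl⟩ := Nat.exists_eq_add_of_le hk
  have h1 : 2 * (1 + j) = (2 * (1 + j) - 1) + 1 := by omega
  have h2 : (1 + j) = j + 1 := by omega
  rw [h1, h2, Nat.choose_succ_succ]
  have h3 : 2 * (1 + j) - 1 = 2 * j + 1 := by omega
  have h4 : Nat.choose (2 * j + 1) (j + 1) = Nat.choose (2 * j + 1) j := by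
    have := Nat.choose_symm (n := 2 * j + 1) (k := j + 1) (by omega)
    rw [show 2 * j + 1 - (j + 1) = j by omega] at this
    omega
  rw [show 2 * (j + 1) - 1 = 2 * j + 1 by omega, show j + 1 - 1 = j from rfl,
    show Nat.succ j = j + 1 from rfl, h4, show 2 * j + 1 + 1 - 1 = 2 * j + 1 by omega]
  omega


lemma card_Q (k : ℕ) (hk : 1 ≤ k) :
    (((range (2*k)).powersetCard k).filter (fun X => 0 ∈ X)).card
      = Nat.choose (2*k-1) (k-1) := by
  have h0 : (0:ℕ) ∈ range (2*k) := by simp; omega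
  have hcard : (((range (2*k)).powersetCard k).filter (fun X => 0 ∈ X)).card
      = (((range (2*k)).erase 0).powersetCard (k-1)).card := by
    refine Finset.card_bij' (fun X _ => X.erase 0) (fun Y _ => insert 0 Y) ?_ ?_ ?_ ?_
    · intro X hX
      simp only [mem_filter, mem_powersetCard] at hX
      obtain ⟨⟨hsub, hc⟩, h0X⟩ := hX
      simp only [mem_powersetCard]
      exact ⟨erase_subset_erase _ hsub, by rw [card_erase_of_mem h0X, hc]⟩
    · intro Y hY
      simp only [mem_powersetCard] at hY
      obtain ⟨hsub, hc⟩ := hY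
      have h0Y : 0 ∉ Y := fun h => (notMem_erase 0 _) (hsub h)
      simp only [mem_filter, mem_powersetCard]
      refine ⟨⟨insert_subset h0 (hsub.trans (erase_subset _ _)), ?_⟩, mem_insert_self _ _⟩
      rw [card_insert_of_notMem h0Y, hc]; omega
    · intro X hX
      simp only [mem_filter] at hX
      exact insert_erase hX.2
    · intro Y hY
      simp only [mem_powersetCard] at hY
      have h0Y : 0 ∉ Y := fun h => (notMem_erase 0 _) (hY.1 h)
      exact erase_insert h0Y
  rw [hcard, card_powersetCard, card_erase_of_mem h0, card_range]

lemma L1 {C X Y : Finset ℕ} (hY : Y ⊆ C) (h : Y ∩ (C \ X) = ∅) : Y ⊆ X := by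
  intro a ha
  by_contra haX
  have : a ∈ Y ∩ (C \ X) := by
    simp only [mem_inter, mem_sdiff]
    exact ⟨ha, hY ha, haX⟩
  rw [h] at this
  exact notMem_empty a this


def apf (k s d : ℕ) : Finset ℕ := (Finset.range k).image (fun j => s + d * j)

lemma apf_mem {k s d x : ℕ} : x ∈ apf k s d ↔ ∃ j < k, s + d * j = x := by
  simp [apf]

lemma apf_card {k s d : ℕ} (hd : 0 < d) : (apf k s d).card = k := by
  rw [apf, card_image_of_injOn, card_range]
  intro a _ b _ hab
  simp only at hab
  have := Nat.eq_of_mul_eq_mul_left hd (by omega : d * a = d * b)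
  omega

lemma apf_one_disj {k I J n : ℕ} (hIJ : I ≠ J) :
    apf k (n + I * k) 1 ∩ apf k (n + J * k) 1 = ∅ := by
  rw [eq_empty_iff_forall_notMem]
  intro x hx
  rw [mem_inter, apf_mem, apf_mem] at hx
  obtain ⟨⟨j, hj, hxe⟩, ⟨j', hj', hxe'⟩⟩ := hx
  have hk : 0 < k := by omega
  have : I * k + j = J * k + j' := by omega
  exact hIJ (key1 hk hj hj' this).1

lemma apf_col_col {k n p q c d : ℕ} (hk : 0 < k) (hc : c < k) (hd : d < k)
    (h : p ≠ q ∨ c ≠ d) :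
    apf k (n + p * k ^ 2 + c) k ∩ apf k (n + q * k ^ 2 + d) k = ∅ := by
  rw [eq_empty_iff_forall_notMem]
  intro x hx
  rw [mem_inter, apf_mem, apf_mem] at hx
  obtain ⟨⟨r, hr, hxe⟩, ⟨r', hr', hxe'⟩⟩ := hx
  have heq : p * k ^ 2 + (r * k + c) = q * k ^ 2 + (r' * k + d) := by
    have : k * r = r * k := Nat.mul_comm _ _
    have : k * r' = r' * k := Nat.mul_comm _ _
    omega
  obtain ⟨h1, _, h3⟩ := key2 hr hr' hc hd heq
  tauto

lemma apf_row_col_disj {k n p q r c : ℕ} (hk : 0 < k) (hr : r < k) (hc : c < k)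
    (hpq : p ≠ q) :
    apf k (n + p * k ^ 2 + r * k) 1 ∩ apf k (n + q * k ^ 2 + c) k = ∅ := by
  rw [eq_empty_iff_forall_notMem]
  intro x hx
  rw [mem_inter, apf_mem, apf_mem] at hx
  obtain ⟨⟨j, hj, hxe⟩, ⟨r', hr', hxe'⟩⟩ := hx
  have heq : p * k ^ 2 + (r * k + j) = q * k ^ 2 + (r' * k + c) := by
    have : k * r' = r' * k := Nat.mul_comm _ _
    omega
  exact hpq (key2 hr hr' hj hc heq).1

lemma apf_row_row {k n p q r s : ℕ} (hk : 0 < k) (hr : r < k) (hs : s < k)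
    (h : p ≠ q ∨ r ≠ s) :
    apf k (n + p * k ^ 2 + r * k) 1 ∩ apf k (n + q * k ^ 2 + s * k) 1 = ∅ := by
  rw [eq_empty_iff_forall_notMem]
  intro x hx
  rw [mem_inter, apf_mem, apf_mem] at hx
  obtain ⟨⟨j, hj, hxe⟩, ⟨j', hj', hxe'⟩⟩ := hx
  have heq : p * k ^ 2 + (r * k + j) = q * k ^ 2 + (s * k + j') := by omega
  obtain ⟨h1, h2, _⟩ := key2 hr hs hj hj' heq
  tauto

lemma apf_row_col_meet {k n p r c : ℕ} (hr : r < k) (hc : c < k) :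
    (apf k (n + p * k ^ 2 + r * k) 1 ∩ apf k (n + p * k ^ 2 + c) k).Nonempty := by
  refine ⟨n + p * k ^ 2 + r * k + c, ?_⟩
  rw [mem_inter, apf_mem, apf_mem]
  constructor
  · exact ⟨c, hc, by omega⟩
  · exact ⟨r, hr, by rw [Nat.mul_comm k r]; omega⟩

lemma apf_disj_of_lt {k s d s' d' : ℕ} (h : ∀ j < k, s + d * j < s') :
    apf k s d ∩ apf k s' d' = ∅ := by
  rw [eq_empty_iff_forall_notMem]
  intro x hx
  rw [mem_inter, apf_mem, apf_mem] at hx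
  obtain ⟨⟨j, hj, hxe⟩, ⟨j', hj', hxe'⟩⟩ := hx
  have := h j hj
  omega


lemma xorA {a b : Finset ℕ} (h1 : a.Nonempty) (h2 : b = ∅) : Xor' (a = ∅) (b = ∅) :=
  Or.inr ⟨h2, h1.ne_empty⟩

lemma xorB {a b : Finset ℕ} (h1 : a = ∅) (h2 : b.Nonempty) : Xor' (a = ∅) (b = ∅) :=
  Or.inl ⟨h1, h2.ne_empty⟩

lemma union_inter_split {a b A B : Finset ℕ} (ha : a ⊆ A) (hb : b ⊆ B)
    (hAB : Disjoint A B) : (a ∪ b) ∩ A = a ∧ (a ∪ b) ∩ B = b := by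
  constructor
  · ext x
    simp only [mem_inter, mem_union]
    constructor
    · rintro ⟨hx | hx, hxA⟩
      · exact hx
      · exact absurd hxA (disjoint_right.1 hAB (hb hx))
    · exact fun hx => ⟨Or.inl hx, ha hx⟩
  · ext x
    simp only [mem_inter, mem_union]
    constructor
    · rintro ⟨hx | hx, hxB⟩
      · exact absurd hxB (disjoint_left.1 hAB (ha hx))
      · exact hx
    · exact fun hx => ⟨Or.inr hx, hb hx⟩

lemma pair_inter {S T A : Finset ℕ} : S ∩ T ∩ A = (S ∩ A) ∩ (T ∩ A) := by
  ext x
  simp only [mem_inter]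
  tauto

lemma ne_diff_nonempty {C X Y : Finset ℕ} (hY : Y ⊆ C) (hcY : X.card ≤ Y.card)
    (hne : Y ≠ X) : (Y ∩ (C \ X)).Nonempty := by
  rw [nonempty_iff_ne_empty]
  intro h
  exact hne (eq_of_subset_of_card_le (L1 hY h) hcY)

lemma diff_diff_nonempty {C X Y : Finset ℕ} (hX : X ⊆ C) (h0X : 0 ∈ X) (h0Y : 0 ∈ Y)
    (hcard : Y.card ≤ (C \ X).card) : ((C \ X) ∩ (C \ Y)).Nonempty := by
  rw [nonempty_iff_ne_empty]
  intro h
  have hsub : C \ X ⊆ Y := L1 (sdiff_subset) h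
  have heq : C \ X = Y := eq_of_subset_of_card_le hsub hcard
  have : 0 ∈ C \ X := heq ▸ h0Y
  exact (mem_sdiff.1 this).2 h0X


def Pk (k : ℕ) : Finset (Finset ℕ) :=
  ((((Finset.range (2*k)).powersetCard k).filter (fun X => 0 ∈ X))).erase (Finset.range k)

lemma Pk_mem {k : ℕ} {X : Finset ℕ} :
    X ∈ Pk k ↔ X ≠ Finset.range k ∧ X ⊆ Finset.range (2*k) ∧ X.card = k ∧ 0 ∈ X := by
  simp only [Pk, mem_erase, mem_filter, mem_powersetCard]
  tauto

lemma Pk_card (k : ℕ) (hk : 1 ≤ k) :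
    (Pk k).card = Nat.choose (2*k-1) (k-1) - 1 := by
  have hQ : (((Finset.range (2*k)).powersetCard k).filter (fun X => 0 ∈ X)).card
      = Nat.choose (2*k-1) (k-1) := card_Q k hk
  rw [Pk, card_erase_of_mem, hQ]
  simp only [mem_filter, mem_powersetCard]
  refine ⟨⟨fun x hx => ?_, card_range k⟩, by simp only [mem_range]; omega⟩
  simp only [mem_range] at hx ⊢
  omega

lemma Pk_k2 {k : ℕ} {X : Finset ℕ} (h : X ∈ Pk k) : 2 ≤ k := by
  rw [Pk_mem] at h
  obtain ⟨hne, hsub, hc, h0⟩ := h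
  by_contra hlt
  have hk0 : 0 < k := by rw [← hc]; exact Finset.card_pos.2 ⟨0, h0⟩
  have hk1 : k = 1 := by omega
  subst hk1
  apply hne
  have hX1 : {0} = X :=
    Finset.eq_of_subset_of_card_le (singleton_subset_iff.2 h0) (by simp [hc])
  rw [← hX1, Finset.range_one]


noncomputable def pidxf (k : ℕ) (X : {x // x ∈ Pk k}) : ℕ := ((Pk k).equivFin X : ℕ)

lemma pidxf_lt {k : ℕ} (X : {x // x ∈ Pk k}) : pidxf k X < (Pk k).card :=
  ((Pk k).equivFin X).isLt

lemma pidxf_inj {k : ℕ} {X Y : {x // x ∈ Pk k}} (h : pidxf k X = pidxf k Y) : X = Y :=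
  (Pk k).equivFin.injective (Fin.ext h)

def f1 (k n l : ℕ) : Finset ℕ := Finset.range k ∪ apf k (n + l * k) 1

noncomputable def f2 (k n t : ℕ) (z : {x // x ∈ Pk k} × ℕ) : Finset ℕ :=
  z.1.1 ∪ apf k (n + t * k + pidxf k z.1 * k ^ 2 + z.2 * k) 1

noncomputable def f3 (k n t : ℕ) (z : {x // x ∈ Pk k} × ℕ) : Finset ℕ :=
  (Finset.range (2 * k) \ z.1.1) ∪ apf k (n + t * k + pidxf k z.1 * k ^ 2 + z.2) k

noncomputable def Sfam (k n t : ℕ) : Finset (Finset ℕ) :=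
  ((Finset.range t).image (f1 k n)) ∪
  (((Pk k).attach ×ˢ Finset.range k).image (f2 k n t)) ∪
  (((Pk k).attach ×ˢ Finset.range k).image (f3 k n t))

lemma Sfam_cases {k n t : ℕ} {S : Finset ℕ} (hS : S ∈ Sfam k n t) :
    (∃ l, l < t ∧ S = f1 k n l) ∨
    (∃ z : {x // x ∈ Pk k} × ℕ, z.2 < k ∧ S = f2 k n t z) ∨
    (∃ z : {x // x ∈ Pk k} × ℕ, z.2 < k ∧ S = f3 k n t z) := by
  simp only [Sfam, mem_union, mem_image, Finset.mem_product, mem_range, mem_attach,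
    true_and] at hS
  rcases hS with (⟨l, hl, he⟩ | ⟨z, hz, he⟩) | ⟨z, hz, he⟩
  · exact Or.inl ⟨l, hl, he.symm⟩
  · exact Or.inr (Or.inl ⟨z, hz, he.symm⟩)
  · exact Or.inr (Or.inr ⟨z, hz, he.symm⟩)

lemma mem_Bset {n x : ℕ} : x ∈ (Finset.range n).image (· + n) ↔ n ≤ x ∧ x < 2 * n := by
  simp only [mem_image, mem_range]
  constructor
  · rintro ⟨i, hi, rfl⟩; omega
  · intro ⟨h1, h2⟩; exact ⟨x - n, by omega, by omega⟩

lemma apf_subset_B {k w d n : ℕ} (h : ∀ j < k, w + d * j < n) :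
    apf k (n + w) d ⊆ (Finset.range n).image (· + n) := by
  intro x hx
  simp only [apf, mem_image, mem_range] at hx
  obtain ⟨j, hj, rfl⟩ := hx
  rw [mem_Bset]
  have := h j hj
  omega

lemma main (k n t : ℕ) (hk : 1 ≤ k) (hB : t * k + (Pk k).card * k ^ 2 ≤ n) :
    IsSemiIntersecting2 n k (Finset.range n) ((Finset.range n).image (· + n)) (Sfam k n t) ∧
    (Sfam k n t).card = t + 2 * ((Pk k).card * k) := by
  have hk0 : 0 < k := hk
  set m := (Pk k).card with hm
  set A := Finset.range n with hA
  set Bf := (Finset.range n).image (· + n) with hBf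
  have hAB : Disjoint A Bf := by
    rw [Finset.disjoint_left]
    intro x hx hxB
    rw [hA, mem_range] at hx
    rw [hBf, mem_Bset] at hxB
    omega
  -- basic bounds
  have htk : t * k ≤ n := by
    have : 0 ≤ m * k ^ 2 := Nat.zero_le _
    omega
  -- chain facts
  have hs1 : ∀ l, l < t → Finset.range k ⊆ A ∧ apf k (n + l * k) 1 ⊆ Bf := by
    intro l hl
    have h1 : (l + 1) * k ≤ t * k := Nat.mul_le_mul_right _ (by omega)
    have h2 : (l + 1) * k = l * k + k := by ring
    constructor
    · rw [hA]
      apply Finset.range_subset_range.2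
      omega
    · apply apf_subset_B
      intro j hj
      omega
  -- extras facts
  have hPfacts : ∀ (X : {x // x ∈ Pk k}),
      X.1 ≠ Finset.range k ∧ X.1 ⊆ Finset.range (2 * k) ∧ X.1.card = k ∧ 0 ∈ X.1 :=
    fun X => Pk_mem.1 X.2
  have h2kn : ∀ (_ : {x // x ∈ Pk k}), 2 * k ≤ n := by
    intro X
    have hk2 : 2 ≤ k := Pk_k2 X.2
    have hm1 : 1 ≤ m := Finset.card_pos.2 ⟨X.1, X.2⟩
    have h1 : 2 * k ≤ k * k := Nat.mul_le_mul_right _ hk2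
    have h2 : 1 * k ^ 2 ≤ m * k ^ 2 := Nat.mul_le_mul_right _ hm1
    have h3 : k ^ 2 = k * k := by ring
    omega
  have hwlt : ∀ (X : {x // x ∈ Pk k}) (r c : ℕ), r < k → c < k →
      t * k + pidxf k X * k ^ 2 + (r * k + c) < n := by
    intro X r c hr hc
    have hp : pidxf k X < m := pidxf_lt X
    have h1 : (pidxf k X + 1) * k ^ 2 ≤ m * k ^ 2 := Nat.mul_le_mul_right _ (by omega)
    have h2 : (pidxf k X + 1) * k ^ 2 = pidxf k X * k ^ 2 + k ^ 2 := by ring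
    have h3 : (r + 1) * k ≤ k * k := Nat.mul_le_mul_right _ (by omega)
    have h4 : (r + 1) * k = r * k + k := by ring
    have h5 : k ^ 2 = k * k := by ring
    omega
  have hs2 : ∀ (z : {x // x ∈ Pk k} × ℕ), z.2 < k →
      z.1.1 ⊆ A ∧ apf k (n + t * k + pidxf k z.1 * k ^ 2 + z.2 * k) 1 ⊆ Bf := by
    intro z hz
    constructor
    · rw [hA]
      exact (hPfacts z.1).2.1.trans (Finset.range_subset_range.2 (h2kn z.1))
    · have he : n + t * k + pidxf k z.1 * k ^ 2 + z.2 * k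
          = n + (t * k + pidxf k z.1 * k ^ 2 + z.2 * k) := by ring
      rw [he]
      apply apf_subset_B
      intro j hj
      have := hwlt z.1 z.2 j hz hj
      omega
  have hs3 : ∀ (z : {x // x ∈ Pk k} × ℕ), z.2 < k →
      (Finset.range (2 * k) \ z.1.1) ⊆ A ∧
        apf k (n + t * k + pidxf k z.1 * k ^ 2 + z.2) k ⊆ Bf := by
    intro z hz
    constructor
    · rw [hA]
      exact (Finset.sdiff_subset).trans (Finset.range_subset_range.2 (h2kn z.1))
    · have he : n + t * k + pidxf k z.1 * k ^ 2 + z.2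
          = n + (t * k + pidxf k z.1 * k ^ 2 + z.2) := by ring
      rw [he]
      apply apf_subset_B
      intro j hj
      have := hwlt z.1 j z.2 hj hz
      have hc : k * j = j * k := Nat.mul_comm _ _
      omega
  -- splits
  have hsp1 : ∀ l, l < t →
      f1 k n l ∩ A = Finset.range k ∧ f1 k n l ∩ Bf = apf k (n + l * k) 1 :=
    fun l hl => union_inter_split (hs1 l hl).1 (hs1 l hl).2 hAB
  have hsp2 : ∀ (z : {x // x ∈ Pk k} × ℕ), z.2 < k →
      f2 k n t z ∩ A = z.1.1 ∧
        f2 k n t z ∩ Bf = apf k (n + t * k + pidxf k z.1 * k ^ 2 + z.2 * k) 1 :=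
    fun z hz => union_inter_split (hs2 z hz).1 (hs2 z hz).2 hAB
  have hsp3 : ∀ (z : {x // x ∈ Pk k} × ℕ), z.2 < k →
      f3 k n t z ∩ A = Finset.range (2 * k) \ z.1.1 ∧
        f3 k n t z ∩ Bf = apf k (n + t * k + pidxf k z.1 * k ^ 2 + z.2) k :=
    fun z hz => union_inter_split (hs3 z hz).1 (hs3 z hz).2 hAB
  -- chain blocks are below extras blocks
  have hlow : ∀ l, l < t → ∀ (u v j : ℕ), j < k → n + l * k + 1 * j < n + t * k + u + v := by
    intro l hl u v j hj
    have h1 : (l + 1) * k ≤ t * k := Nat.mul_le_mul_right _ (by omega)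
    have h2 : (l + 1) * k = l * k + k := by ring
    omega
  constructor
  · refine ⟨hAB, Finset.card_range n, ?_, ?_, ?_, ?_⟩
    · rw [hBf, Finset.card_image_of_injective _ (add_left_injective n),
        Finset.card_range]
    · -- subsets
      intro S hS
      rcases Sfam_cases hS with ⟨l, hl, rfl⟩ | ⟨z, hz, rfl⟩ | ⟨z, hz, rfl⟩
      · exact Finset.union_subset_union (hs1 l hl).1 (hs1 l hl).2
      · exact Finset.union_subset_union (hs2 z hz).1 (hs2 z hz).2
      · exact Finset.union_subset_union (hs3 z hz).1 (hs3 z hz).2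
    · -- cards
      intro S hS
      rcases Sfam_cases hS with ⟨l, hl, rfl⟩ | ⟨z, hz, rfl⟩ | ⟨z, hz, rfl⟩
      · rw [(hsp1 l hl).1, (hsp1 l hl).2, Finset.card_range, apf_card Nat.one_pos]
        exact ⟨rfl, rfl⟩
      · rw [(hsp2 z hz).1, (hsp2 z hz).2, apf_card Nat.one_pos]
        exact ⟨(hPfacts z.1).2.2.1, rfl⟩
      · rw [(hsp3 z hz).1, (hsp3 z hz).2, apf_card hk0,
          Finset.card_sdiff_of_subset (hPfacts z.1).2.1, Finset.card_range, (hPfacts z.1).2.2.1]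
        exact ⟨by omega, rfl⟩
    · -- xor
      intro S hS T hT hne
      rcases Sfam_cases hS with ⟨l, hl, rfl⟩ | ⟨z, hz, rfl⟩ | ⟨z, hz, rfl⟩ <;>
        rcases Sfam_cases hT with ⟨l', hl', rfl⟩ | ⟨z', hz', rfl⟩ | ⟨z', hz', rfl⟩
      · -- chain chain
        rcases eq_or_ne l l' with rfl | hll
        · exact absurd rfl hne
        · rw [pair_inter (A := A), pair_inter (A := Bf), (hsp1 l hl).1, (hsp1 l hl).2,
            (hsp1 l' hl').1, (hsp1 l' hl').2]
          exact xorA (by rw [Finset.inter_self]; exact ⟨0, Finset.mem_range.2 hk0⟩)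
            (apf_one_disj hll)
      · -- chain row
        rw [pair_inter (A := A), pair_inter (A := Bf), (hsp1 l hl).1, (hsp1 l hl).2,
          (hsp2 z' hz').1, (hsp2 z' hz').2]
        refine xorA ⟨0, Finset.mem_inter.2 ⟨Finset.mem_range.2 hk0, (hPfacts z'.1).2.2.2⟩⟩ ?_
        exact apf_disj_of_lt (fun j hj => hlow l hl _ _ j hj)
      · -- chain col
        rw [pair_inter (A := A), pair_inter (A := Bf), (hsp1 l hl).1, (hsp1 l hl).2,
          (hsp3 z' hz').1, (hsp3 z' hz').2]
        refine xorA ?_ (apf_disj_of_lt (fun j hj => hlow l hl _ _ j hj))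
        exact ne_diff_nonempty (Finset.range_subset_range.2 (by omega))
          (by rw [(hPfacts z'.1).2.2.1, Finset.card_range]) (Ne.symm (hPfacts z'.1).1)
      · -- row chain
        rw [pair_inter (A := A), pair_inter (A := Bf), (hsp2 z hz).1, (hsp2 z hz).2,
          (hsp1 l' hl').1, (hsp1 l' hl').2]
        refine xorA ⟨0, Finset.mem_inter.2 ⟨(hPfacts z.1).2.2.2, Finset.mem_range.2 hk0⟩⟩ ?_
        rw [Finset.inter_comm]
        exact apf_disj_of_lt (fun j hj => hlow l' hl' _ _ j hj)
      · -- row row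
        rcases eq_or_ne z.1 z'.1 with hzz | hzz
        · rcases eq_or_ne z.2 z'.2 with hrr | hrr
          · exact absurd (by rw [show z = z' from Prod.ext hzz hrr]) hne
          · rw [pair_inter (A := A), pair_inter (A := Bf), (hsp2 z hz).1, (hsp2 z hz).2,
              (hsp2 z' hz').1, (hsp2 z' hz').2, hzz]
            exact xorA ⟨0, Finset.mem_inter.2 ⟨(hPfacts z'.1).2.2.2, (hPfacts z'.1).2.2.2⟩⟩
              (apf_row_row hk0 hz hz' (Or.inr hrr))
        · have hpp : pidxf k z.1 ≠ pidxf k z'.1 := fun h => hzz (pidxf_inj h)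
          rw [pair_inter (A := A), pair_inter (A := Bf), (hsp2 z hz).1, (hsp2 z hz).2,
            (hsp2 z' hz').1, (hsp2 z' hz').2]
          exact xorA ⟨0, Finset.mem_inter.2 ⟨(hPfacts z.1).2.2.2, (hPfacts z'.1).2.2.2⟩⟩
            (apf_row_row hk0 hz hz' (Or.inl hpp))
      · -- row col
        rw [pair_inter (A := A), pair_inter (A := Bf), (hsp2 z hz).1, (hsp2 z hz).2,
          (hsp3 z' hz').1, (hsp3 z' hz').2]
        rcases eq_or_ne z.1 z'.1 with hzz | hzz
        · rw [hzz]
          exact xorB (Finset.inter_sdiff_self _ _) (apf_row_col_meet hz hz')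
        · have hpp : pidxf k z.1 ≠ pidxf k z'.1 := fun h => hzz (pidxf_inj h)
          refine xorA ?_ (apf_row_col_disj hk0 hz hz' hpp)
          refine ne_diff_nonempty (hPfacts z.1).2.1 ?_ ?_
          · rw [(hPfacts z.1).2.2.1, (hPfacts z'.1).2.2.1]
          · exact fun h => hzz (Subtype.ext h)
      · -- col chain
        rw [pair_inter (A := A), pair_inter (A := Bf), (hsp3 z hz).1, (hsp3 z hz).2,
          (hsp1 l' hl').1, (hsp1 l' hl').2]
        refine xorA ?_ ?_
        · rw [Finset.inter_comm]
          exact ne_diff_nonempty (Finset.range_subset_range.2 (by omega))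
            (by rw [(hPfacts z.1).2.2.1, Finset.card_range]) (Ne.symm (hPfacts z.1).1)
        · rw [Finset.inter_comm]
          exact apf_disj_of_lt (fun j hj => hlow l' hl' _ _ j hj)
      · -- col row
        rw [pair_inter (A := A), pair_inter (A := Bf), (hsp3 z hz).1, (hsp3 z hz).2,
          (hsp2 z' hz').1, (hsp2 z' hz').2]
        rcases eq_or_ne z.1 z'.1 with hzz | hzz
        · rw [hzz]
          refine xorB (by rw [Finset.inter_comm]; exact Finset.inter_sdiff_self _ _) ?_
          rw [Finset.inter_comm]
          exact apf_row_col_meet hz' hz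
        · have hpp : pidxf k z'.1 ≠ pidxf k z.1 := fun h => hzz (pidxf_inj h).symm
          refine xorA ?_ ?_
          · rw [Finset.inter_comm]
            refine ne_diff_nonempty (hPfacts z'.1).2.1 ?_ ?_
            · rw [(hPfacts z.1).2.2.1, (hPfacts z'.1).2.2.1]
            · exact fun h => hzz (Subtype.ext h.symm)
          · rw [Finset.inter_comm]
            exact apf_row_col_disj hk0 hz' hz hpp
      · -- col col
        rcases eq_or_ne z.1 z'.1 with hzz | hzz
        · rcases eq_or_ne z.2 z'.2 with hrr | hrr
          · exact absurd (by rw [show z = z' from Prod.ext hzz hrr]) hne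
          · rw [pair_inter (A := A), pair_inter (A := Bf), (hsp3 z hz).1, (hsp3 z hz).2,
              (hsp3 z' hz').1, (hsp3 z' hz').2, hzz]
            refine xorA ?_ (apf_col_col hk0 hz hz' (Or.inr hrr))
            rw [Finset.inter_self]
            rw [← Finset.card_pos, Finset.card_sdiff_of_subset (hPfacts z'.1).2.1,
              Finset.card_range, (hPfacts z'.1).2.2.1]
            omega
        · have hpp : pidxf k z.1 ≠ pidxf k z'.1 := fun h => hzz (pidxf_inj h)
          rw [pair_inter (A := A), pair_inter (A := Bf), (hsp3 z hz).1, (hsp3 z hz).2,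
            (hsp3 z' hz').1, (hsp3 z' hz').2]
          refine xorA ?_ (apf_col_col hk0 hz hz' (Or.inl hpp))
          refine diff_diff_nonempty (hPfacts z.1).2.1 (hPfacts z.1).2.2.2
            (hPfacts z'.1).2.2.2 ?_
          rw [Finset.card_sdiff_of_subset (hPfacts z.1).2.1, Finset.card_range,
            (hPfacts z.1).2.2.1, (hPfacts z'.1).2.2.1]
          omega
  · -- counting
    have hmemz : ∀ z : {x // x ∈ Pk k} × ℕ, z ∈ (Pk k).attach ×ˢ Finset.range k → z.2 < k := by
      intro z hz
      exact Finset.mem_range.1 (Finset.mem_product.1 hz).2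
    have hinj1 : Set.InjOn (f1 k n) ↑(Finset.range t) := by
      intro l hl l' hl' he
      rw [Finset.mem_coe, Finset.mem_range] at hl hl'
      have hBeq : apf k (n + l * k) 1 = apf k (n + l' * k) 1 := by
        rw [← (hsp1 l hl).2, ← (hsp1 l' hl').2, he]
      have hmem : n + l * k ∈ apf k (n + l' * k) 1 := by
        rw [← hBeq]
        exact apf_mem.2 ⟨0, hk0, by ring⟩
      obtain ⟨j, hj, hje⟩ := apf_mem.1 hmem
      have heq : l' * k + j = l * k + 0 := by omega
      exact ((key1 hk0 hj hk0 heq).1).symm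
    have hinj2 : Set.InjOn (f2 k n t) ↑((Pk k).attach ×ˢ Finset.range k) := by
      intro z hz z' hz' he
      have hz2 : z.2 < k := hmemz z (Finset.mem_coe.1 hz)
      have hz2' : z'.2 < k := hmemz z' (Finset.mem_coe.1 hz')
      have hAeq : z.1.1 = z'.1.1 := by
        rw [← (hsp2 z hz2).1, ← (hsp2 z' hz2').1, he]
      have h1 : z.1 = z'.1 := Subtype.ext hAeq
      have hBeq := ((hsp2 z hz2).2).symm.trans (by rw [he, (hsp2 z' hz2').2])
      rw [h1] at hBeq
      have hmem : n + t * k + pidxf k z'.1 * k ^ 2 + z.2 * k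
          ∈ apf k (n + t * k + pidxf k z'.1 * k ^ 2 + z'.2 * k) 1 := by
        rw [← hBeq]
        exact apf_mem.2 ⟨0, hk0, by ring⟩
      obtain ⟨j, hj, hje⟩ := apf_mem.1 hmem
      have heq : z'.2 * k + j = z.2 * k + 0 := by omega
      exact Prod.ext h1 ((key1 hk0 hj hk0 heq).1).symm
    have hsd : ∀ (X : Finset ℕ), X ⊆ Finset.range (2 * k) →
        Finset.range (2 * k) \ (Finset.range (2 * k) \ X) = X := by
      intro X hX
      rw [Finset.sdiff_sdiff_self_left, Finset.inter_eq_right.2 hX]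
    have hinj3 : Set.InjOn (f3 k n t) ↑((Pk k).attach ×ˢ Finset.range k) := by
      intro z hz z' hz' he
      have hz2 : z.2 < k := hmemz z (Finset.mem_coe.1 hz)
      have hz2' : z'.2 < k := hmemz z' (Finset.mem_coe.1 hz')
      have hAeq : Finset.range (2 * k) \ z.1.1 = Finset.range (2 * k) \ z'.1.1 := by
        rw [← (hsp3 z hz2).1, ← (hsp3 z' hz2').1, he]
      have hXeq : z.1.1 = z'.1.1 := by
        rw [← hsd z.1.1 (hPfacts z.1).2.1, hAeq, hsd z'.1.1 (hPfacts z'.1).2.1]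
      have h1 : z.1 = z'.1 := Subtype.ext hXeq
      have hBeq := ((hsp3 z hz2).2).symm.trans (by rw [he, (hsp3 z' hz2').2])
      rw [h1] at hBeq
      have hmem : n + t * k + pidxf k z'.1 * k ^ 2 + z.2
          ∈ apf k (n + t * k + pidxf k z'.1 * k ^ 2 + z'.2) k := by
        rw [← hBeq]
        exact apf_mem.2 ⟨0, hk0, by ring⟩
      obtain ⟨j, hj, hje⟩ := apf_mem.1 hmem
      have hkj : k * j = j * k := Nat.mul_comm _ _
      have heq : j * k + z'.2 = 0 * k + z.2 := by omega
      exact Prod.ext h1 ((key1 hk0 hz2' hz2 heq).2).symm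
    have hd12 : Disjoint ((Finset.range t).image (f1 k n))
        (((Pk k).attach ×ˢ Finset.range k).image (f2 k n t)) := by
      rw [Finset.disjoint_left]
      rintro S hS1 hS2
      obtain ⟨l, hl, rfl⟩ := Finset.mem_image.1 hS1
      obtain ⟨z, hz, he⟩ := Finset.mem_image.1 hS2
      rw [Finset.mem_range] at hl
      have hz2 : z.2 < k := hmemz z hz
      have : z.1.1 = Finset.range k := by
        rw [← (hsp2 z hz2).1, he, (hsp1 l hl).1]
      exact (hPfacts z.1).1 this
    have hd13 : Disjoint ((Finset.range t).image (f1 k n))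
        (((Pk k).attach ×ˢ Finset.range k).image (f3 k n t)) := by
      rw [Finset.disjoint_left]
      rintro S hS1 hS2
      obtain ⟨l, hl, rfl⟩ := Finset.mem_image.1 hS1
      obtain ⟨z, hz, he⟩ := Finset.mem_image.1 hS2
      rw [Finset.mem_range] at hl
      have hz2 : z.2 < k := hmemz z hz
      have hAe : Finset.range (2 * k) \ z.1.1 = Finset.range k := by
        rw [← (hsp3 z hz2).1, he, (hsp1 l hl).1]
      have h0 : (0 : ℕ) ∈ Finset.range (2 * k) \ z.1.1 := by
        rw [hAe]
        exact Finset.mem_range.2 hk0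
      exact (Finset.mem_sdiff.1 h0).2 (hPfacts z.1).2.2.2
    have hd23 : Disjoint (((Pk k).attach ×ˢ Finset.range k).image (f2 k n t))
        (((Pk k).attach ×ˢ Finset.range k).image (f3 k n t)) := by
      rw [Finset.disjoint_left]
      rintro S hS1 hS2
      obtain ⟨z, hz, rfl⟩ := Finset.mem_image.1 hS1
      obtain ⟨z', hz', he⟩ := Finset.mem_image.1 hS2
      have hz2 : z.2 < k := hmemz z hz
      have hz2' : z'.2 < k := hmemz z' hz'
      have hAe : Finset.range (2 * k) \ z'.1.1 = z.1.1 := by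
        rw [← (hsp3 z' hz2').1, he, (hsp2 z hz2).1]
      have h0 : (0 : ℕ) ∈ Finset.range (2 * k) \ z'.1.1 := by
        rw [hAe]
        exact (hPfacts z.1).2.2.2
      exact (Finset.mem_sdiff.1 h0).2 (hPfacts z'.1).2.2.2
    have c1 : ((Finset.range t).image (f1 k n)).card = t := by
      rw [Finset.card_image_of_injOn hinj1, Finset.card_range]
    have c2 : (((Pk k).attach ×ˢ Finset.range k).image (f2 k n t)).card = m * k := by
      rw [Finset.card_image_of_injOn hinj2, Finset.card_product, Finset.card_attach,
        Finset.card_range]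
    have c3 : (((Pk k).attach ×ˢ Finset.range k).image (f3 k n t)).card = m * k := by
      rw [Finset.card_image_of_injOn hinj3, Finset.card_product, Finset.card_attach,
        Finset.card_range]
    rw [Sfam, Finset.card_union_of_disjoint
        (Finset.disjoint_union_left.2 ⟨hd13, hd23⟩),
      Finset.card_union_of_disjoint hd12, c1, c2, c3]
    ring
/-- For every `k ≥ 1` and `n ≥ (1/2)(C(2k,k) − 2)k²` there is a 2-semi-intersecting
family with parameters `n` and `k` of size at least `⌊n/k⌋ + C(2k,k)·k/2 − k`. -/
theorem stmt_0 (k n : ℕ) (hk : 1 ≤ k)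
    (hn : (Nat.choose (2 * k) k - 2) * k ^ 2 ≤ 2 * n) :
    ∃ (A B : Finset ℕ) (𝒮 : Finset (Finset ℕ)),
      IsSemiIntersecting2 n k A B 𝒮 ∧
      n / k + Nat.choose (2 * k) k * k / 2 - k ≤ 𝒮.card := by
  set m := (Pk k).card with hm
  have hmc : m = Nat.choose (2*k-1) (k-1) - 1 := Pk_card k hk
  have hcc : Nat.choose (2*k) k = 2 * Nat.choose (2*k-1) (k-1) := choose_central k hk
  have hpos : 1 ≤ Nat.choose (2*k-1) (k-1) := Nat.choose_pos (by omega)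
  have hm1 : Nat.choose (2*k-1) (k-1) = m + 1 := by omega
  have hnn : m * k ^ 2 ≤ n := by
    have h1 : Nat.choose (2*k) k - 2 = 2 * m := by omega
    rw [h1] at hn
    have h2 : 2 * m * k ^ 2 = 2 * (m * k ^ 2) := by ring
    omega
  set t := n / k - m * k with ht
  have hmkdiv : m * k ≤ n / k := by
    rw [Nat.le_div_iff_mul_le hk]
    have : m * k * k = m * k ^ 2 := by ring
    omega
  have hBbound : t * k + m * k ^ 2 ≤ n := by
    have h1 : t * k = (n / k) * k - (m * k) * k := by rw [ht, Nat.sub_mul]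
    have h2 : (m * k) * k = m * k ^ 2 := by ring
    have h3 : (n / k) * k ≤ n := Nat.div_mul_le_self n k
    have h4 : (m * k) * k ≤ (n / k) * k := Nat.mul_le_mul_right _ hmkdiv
    omega
  obtain ⟨hfam, hcard⟩ := main k n t hk hBbound
  refine ⟨_, _, _, hfam, ?_⟩
  rw [hcard]
  have h5 : Nat.choose (2 * k) k * k / 2 = (m + 1) * k := by
    rw [hcc, hm1]
    have h6 : 2 * (m + 1) * k = 2 * ((m + 1) * k) := by ring
    rw [h6, Nat.mul_div_cancel_left _ (by norm_num)]
  rw [h5]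
  have h6 : (m + 1) * k = m * k + k := by ring
  have h7 : (Pk k).card = m := hm.symm
  rw [h7, h6]
  omega
end

section
/- For every integer k ≥ 2 and every k-uniform cross intersecting matching 𝒜_1, …, 𝒜_t of type (d_1, …, d_t), the following inequality holds in the rationals: (∑_{i=1}^{t} d_i(d_i − 1)) · (1 − (k−2)(k−3)/(2·C(2k,k)) − (k−2)/C(3k,2k) − (k−2)·C(2k,k)/C(3k,k)) ≤ C(2k,k), where C(m,r) denotes the binomial coefficient m choose r. -/
open Finset
namespace CIM
set_option linter.unusedSectionVars false
set_option maxHeartbeats 1000000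



section Rank
variable {β : Type*} [LinearOrder β] [DecidableEq β]

/-- rank of `x` within `S`: number of elements of `S` strictly below `x`. -/
def rk (S : Finset β) (x : β) : ℕ := (S.filter (fun y => y < x)).card

lemma rk_lt_card {S : Finset β} {x : β} (hx : x ∈ S) : rk S x < S.card := by
  apply Finset.card_lt_card
  refine ⟨Finset.filter_subset _ _, fun hsub => ?_⟩
  have := hsub hx
  simp [Finset.mem_filter] at this

lemma rk_strictMonoOn {S : Finset β} {x y : β} (hx : x ∈ S) (hxy : x < y) :
    rk S x < rk S y := by
  apply Finset.card_lt_card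
  constructor
  · intro z hz
    simp only [Finset.mem_filter] at hz ⊢
    exact ⟨hz.1, hz.2.trans hxy⟩
  · intro hsub
    have hxmem : x ∈ S.filter (fun z => z < y) := by
      simp [Finset.mem_filter, hx, hxy]
    have := hsub hxmem
    simp [Finset.mem_filter] at this

lemma rk_injOn {S : Finset β} {x y : β} (hx : x ∈ S) (hy : y ∈ S)
    (h : rk S x = rk S y) : x = y := by
  rcases lt_trichotomy x y with h' | h' | h'
  · have := rk_strictMonoOn hx h'; omega
  · exact h'
  · have := rk_strictMonoOn hy h'; omega

lemma rk_image {S : Finset β} : S.image (rk S) = Finset.range S.card := by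
  apply Finset.eq_of_subset_of_card_le
  · intro j hj
    simp only [Finset.mem_image] at hj
    obtain ⟨x, hx, rfl⟩ := hj
    exact Finset.mem_range.mpr (rk_lt_card hx)
  · rw [Finset.card_range, Finset.card_image_of_injOn]
    intro x hx y hy h
    exact rk_injOn hx hy h

lemma card_rk_lt {S : Finset β} {j : ℕ} (hj : j ≤ S.card) :
    (S.filter (fun x => rk S x < j)).card = j := by
  have himg : (S.filter (fun x => rk S x < j)).image (rk S) = Finset.range j := by
    apply subset_antisymm
    · intro m hm
      simp only [Finset.mem_image, Finset.mem_filter] at hm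
      obtain ⟨x, ⟨_, hxj⟩, rfl⟩ := hm
      exact Finset.mem_range.mpr hxj
    · intro m hm
      rw [Finset.mem_range] at hm
      have hm2 : m ∈ S.image (rk S) := by
        rw [rk_image]; exact Finset.mem_range.mpr (lt_of_lt_of_le hm hj)
      simp only [Finset.mem_image] at hm2 ⊢
      obtain ⟨x, hx, rfl⟩ := hm2
      exact ⟨x, by simp [Finset.mem_filter, hx, hm], rfl⟩
  have hinj : Set.InjOn (rk S) ↑(S.filter (fun x => rk S x < j)) := by
    intro x hx y hy h
    simp only [Finset.coe_filter, Set.mem_setOf_eq] at hx hy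
    exact rk_injOn hx.1 hy.1 h
  calc (S.filter (fun x => rk S x < j)).card
      = ((S.filter (fun x => rk S x < j)).image (rk S)).card :=
        (Finset.card_image_of_injOn hinj).symm
    _ = j := by rw [himg, Finset.card_range]

end Rank





section Builder
variable {γ : Type*} [Fintype γ] [DecidableEq γ]

/-- The space of linear orderings of `γ`. -/
abbrev Sp (γ : Type*) [Fintype γ] : Type _ := γ ≃ Fin (Fintype.card γ)

instance : DecidableEq (Sp γ) := fun σ τ =>
  decidable_of_iff (∀ x, σ x = τ x) ⟨fun h => Equiv.ext h, fun h x => by rw [h]⟩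

/-- Two orderings are related if they agree outside `T`. -/
def Rel (T : Finset γ) (σ σ' : Sp γ) : Prop := ∀ x, x ∉ T → σ' x = σ x

instance (T : Finset γ) (σ σ' : Sp γ) : Decidable (Rel T σ σ') := by
  unfold Rel; infer_instance

lemma Rel.symm' {T : Finset γ} {σ σ' : Sp γ} (h : Rel T σ σ') : Rel T σ' σ :=
  fun x hx => (h x hx).symm

lemma rel_comm {T : Finset γ} {σ σ' : Sp γ} : Rel T σ σ' ↔ Rel T σ' σ :=
  ⟨Rel.symm', Rel.symm'⟩

lemma image_univ_equiv (τ : Sp γ) : Finset.univ.image τ = Finset.univ := by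
  apply Finset.eq_univ_of_card
  rw [Finset.card_image_of_injective _ τ.injective]
  simp

lemma image_eq_of_rel {T : Finset γ} {σ σ' : Sp γ} (h : Rel T σ σ') :
    T.image σ' = T.image σ := by
  have key : ∀ τ : Sp γ, T.image τ = Finset.univ \ Tᶜ.image τ := by
    intro τ
    have hu : T.image τ ∪ Tᶜ.image τ = Finset.univ := by
      rw [← Finset.image_union, Finset.union_compl, image_univ_equiv]
    have hd : Disjoint (T.image τ) (Tᶜ.image τ) := by
      rw [Finset.disjoint_left]
      intro a ha ha'
      simp only [Finset.mem_image] at ha ha'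
      obtain ⟨x, hx, rfl⟩ := ha
      obtain ⟨y, hy, hyx⟩ := ha'
      have : y = x := τ.injective hyx
      subst this
      simp [Finset.mem_compl, hx] at hy
    rw [← hu, Finset.union_sdiff_cancel_right hd]
  have himg : Tᶜ.image σ' = Tᶜ.image σ := by
    apply Finset.image_congr
    intro x hx
    exact h x (by simpa using hx)
  rw [key σ', key σ, himg]

lemma mem_image_of_rel {T : Finset γ} {σ σ' : Sp γ} (h : Rel T σ σ') {x : γ}
    (hx : x ∈ T) : σ' x ∈ T.image σ := by
  rw [← image_eq_of_rel h]
  exact Finset.mem_image_of_mem σ' hx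

/-- Build an ordering from a shuffle pattern `h` on `T`. -/
noncomputable def bequiv (σ : Sp γ) (T : Finset γ) (h : ↥T ≃ ↥(T.image σ)) : Sp γ :=
  Equiv.ofBijective (fun x => if hx : x ∈ T then (h ⟨x, hx⟩ : Fin (Fintype.card γ)) else σ x) <| by
    rw [Fintype.bijective_iff_injective_and_card]
    refine ⟨?_, by simp⟩
    have hout : ∀ x, x ∉ T → σ x ∉ T.image σ := by
      intro x hx hmem
      simp only [Finset.mem_image] at hmem
      obtain ⟨y, hy, hyx⟩ := hmem
      exact hx (σ.injective hyx ▸ hy)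
    intro x y hxy
    dsimp only at hxy
    by_cases hx : x ∈ T <;> by_cases hy : y ∈ T
    · rw [dif_pos hx, dif_pos hy] at hxy
      have := h.injective (Subtype.ext hxy)
      simpa using congrArg Subtype.val this
    · rw [dif_pos hx, dif_neg hy] at hxy
      exact absurd (hxy ▸ (h ⟨x, hx⟩).2) (hout y hy)
    · rw [dif_neg hx, dif_pos hy] at hxy
      exact absurd (hxy ▸ (h ⟨y, hy⟩).2) (hout x hx)
    · rw [dif_neg hx, dif_neg hy] at hxy
      exact σ.injective hxy

lemma bequiv_apply (σ : Sp γ) (T : Finset γ) (h : ↥T ≃ ↥(T.image σ)) (x : γ) :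
    bequiv σ T h x = if hx : x ∈ T then (h ⟨x, hx⟩ : Fin (Fintype.card γ)) else σ x := rfl

lemma bequiv_apply_mem (σ : Sp γ) (T : Finset γ) (h : ↥T ≃ ↥(T.image σ)) {x : γ}
    (hx : x ∈ T) : bequiv σ T h x = (h ⟨x, hx⟩ : Fin (Fintype.card γ)) := by
  rw [bequiv_apply, dif_pos hx]

lemma rel_bequiv (σ : Sp γ) (T : Finset γ) (h : ↥T ≃ ↥(T.image σ)) :
    Rel T σ (bequiv σ T h) := fun x hx => by rw [bequiv_apply, dif_neg hx]

lemma bequiv_injective (σ : Sp γ) (T : Finset γ) :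
    Function.Injective (bequiv σ T) := by
  intro h₁ h₂ he
  apply Equiv.ext
  rintro ⟨x, hx⟩
  apply Subtype.ext
  have := congrArg (fun τ : Sp γ => τ x) he
  simpa [bequiv_apply_mem _ _ _ hx] using this

lemma bequiv_surjective (σ : Sp γ) (T : Finset γ) {σ' : Sp γ} (hrel : Rel T σ σ') :
    ∃ h, bequiv σ T h = σ' := by
  have hbij : Function.Bijective
      (fun x : ↥T => (⟨σ' x.1, mem_image_of_rel hrel x.2⟩ : ↥(T.image σ))) := by
    rw [Fintype.bijective_iff_injective_and_card]
    constructor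
    · intro a b hab
      exact Subtype.ext (σ'.injective (congrArg Subtype.val hab))
    · rw [Fintype.card_coe, Fintype.card_coe, Finset.card_image_of_injective _ σ.injective]
  refine ⟨Equiv.ofBijective _ hbij, ?_⟩
  apply Equiv.ext
  intro x
  by_cases hx : x ∈ T
  · rw [bequiv_apply, dif_pos hx]; rfl
  · rw [bequiv_apply, dif_neg hx]; exact (hrel x hx).symm

/-- Counting orderings in a shuffle class satisfying a property. -/
lemma card_rel_filter (σ : Sp γ) (T : Finset γ) (P : Sp γ → Prop) [DecidablePred P] :
    (Finset.univ.filter (fun σ' => Rel T σ σ' ∧ P σ')).card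
      = (Finset.univ.filter (fun h : ↥T ≃ ↥(T.image σ) => P (bequiv σ T h))).card := by
  symm
  apply Finset.card_bij (fun h _ => bequiv σ T h)
  · intro h hh
    simp only [Finset.mem_filter, Finset.mem_univ, true_and] at hh ⊢
    exact ⟨rel_bequiv σ T h, hh⟩
  · intro h₁ _ h₂ _ he
    exact bequiv_injective σ T he
  · intro σ' hσ'
    simp only [Finset.mem_filter, Finset.mem_univ, true_and] at hσ'
    obtain ⟨h, rfl⟩ := bequiv_surjective σ T hσ'.1
    exact ⟨h, by simp [hσ'.2], rfl⟩

/-- A full shuffle class has size `|T|!`. -/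
lemma card_rel (σ : Sp γ) (T : Finset γ) :
    (Finset.univ.filter (fun σ' => Rel T σ σ')).card = (T.card).factorial := by
  have h1 : (Finset.univ.filter (fun σ' => Rel T σ σ')).card
      = (Finset.univ.filter (fun σ' => Rel T σ σ' ∧ True)).card := by
    simp
  rw [h1, card_rel_filter σ T (fun _ => True)]
  simp only [Finset.filter_true]
  rw [Finset.card_univ]
  have hcards : Fintype.card ↥T = Fintype.card ↥(T.image σ) := by
    rw [Fintype.card_coe, Fintype.card_coe, Finset.card_image_of_injective _ σ.injective]
  rw [Fintype.card_equiv (Fintype.equivOfCardEq hcards), Fintype.card_coe]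

end Builder



section CL
variable {γ : Type*} [Fintype γ] [DecidableEq γ]

/-- helper to build equivalences between coercions of finsets. -/
noncomputable def mkEquivOf {α₁ α₂ : Type*} {A : Finset α₁} {B : Finset α₂}
    (f : α₁ → α₂) (hmap : ∀ x ∈ A, f x ∈ B)
    (hinj : ∀ x ∈ A, ∀ y ∈ A, f x = f y → x = y)
    (hcard : A.card = B.card) : ↥A ≃ ↥B :=
  Equiv.ofBijective (fun x => ⟨f x.1, hmap x.1 x.2⟩) (by
    rw [Fintype.bijective_iff_injective_and_card]
    refine ⟨?_, by rw [Fintype.card_coe, Fintype.card_coe, hcard]⟩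
    intro a b hab
    exact Subtype.ext (hinj a.1 a.2 b.1 b.2 (congrArg Subtype.val hab)))

lemma mkEquivOf_apply {α₁ α₂ : Type*} {A : Finset α₁} {B : Finset α₂}
    (f : α₁ → α₂) (hmap : ∀ x ∈ A, f x ∈ B)
    (hinj : ∀ x ∈ A, ∀ y ∈ A, f x = f y → x = y)
    (hcard : A.card = B.card) (x : ↥A) :
    (mkEquivOf f hmap hinj hcard x : α₂) = f x.1 := rfl

lemma CL1main {k : ℕ} (hk : 1 ≤ k) {U V : Finset γ} (hUV : Disjoint U V)
    (hU : U.card = k) (hV : V.card = k) :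
    (Fintype.card γ).factorial * (k.factorial * k.factorial) ≤
      (Finset.univ.filter (fun σ' : Sp γ => ∀ a ∈ U, ∀ b ∈ V, σ' a < σ' b)).card
        * (2 * k).factorial := by
  have hTcard : (U ∪ V).card = 2 * k := by
    rw [Finset.card_union_of_disjoint hUV, hU, hV]; ring
  have main : ∀ σ : Sp γ, k.factorial * k.factorial ≤
      (Finset.univ.filter (fun σ' : Sp γ =>
        Rel (U ∪ V) σ σ' ∧ ∀ a ∈ U, ∀ b ∈ V, σ' a < σ' b)).card := by
    intro σ
    rw [card_rel_filter]
    set T := U ∪ V with hT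
    set S := T.image σ with hS
    have hScard : S.card = 2 * k := by
      rw [hS, Finset.card_image_of_injective _ σ.injective, hTcard]
    set L := S.filter (fun x => rk S x < k) with hL
    set H := S.filter (fun x => ¬ rk S x < k) with hH
    have hLcard : L.card = k := card_rk_lt (by omega)
    have hpart : L.card + H.card = S.card := by
      rw [hL, hH]
      exact Finset.card_filter_add_card_filter_not _
    have hHcard : H.card = k := by omega
    have hLS : ∀ x ∈ L, x ∈ S := fun x hx => Finset.mem_of_mem_filter x hx
    have hHS : ∀ x ∈ H, x ∈ S := fun x hx => Finset.mem_of_mem_filter x hx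
    have hLH : ∀ l ∈ L, ∀ h' ∈ H, l < h' := by
      intro l hl h' hh'
      rw [hL, Finset.mem_filter] at hl
      rw [hH, Finset.mem_filter] at hh'
      rcases lt_trichotomy l h' with h | h | h
      · exact h
      · exact absurd (h ▸ hl.2) hh'.2
      · exact absurd (lt_trans (rk_strictMonoOn hh'.1 h) hl.2) hh'.2
    have hLHdisj : ∀ z, z ∈ L → z ∈ H → False := by
      intro z h1 h2
      rw [hL, Finset.mem_filter] at h1
      rw [hH, Finset.mem_filter] at h2
      exact h2.2 h1.2
    have hUT : U ⊆ T := Finset.subset_union_left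
    have hVT : V ⊆ T := Finset.subset_union_right
    set F : ((↥U ≃ ↥L) × (↥V ≃ ↥H)) → ↥T → ↥S := fun fg x =>
      if hx : (x : γ) ∈ U then ⟨(fg.1 ⟨x, hx⟩ : Fin (Fintype.card γ)), hLS _ (fg.1 ⟨x, hx⟩).2⟩
      else ⟨(fg.2 ⟨x, Or.resolve_left (Finset.mem_union.mp x.2) hx⟩ : Fin (Fintype.card γ)),
        hHS _ (fg.2 ⟨x, Or.resolve_left (Finset.mem_union.mp x.2) hx⟩).2⟩ with hF
    have hFU : ∀ fg (x : ↥T) (hx : (x : γ) ∈ U),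
        (F fg x : Fin (Fintype.card γ)) = (fg.1 ⟨x, hx⟩ : Fin (Fintype.card γ)) := by
      intro fg x hx
      rw [hF]
      dsimp only
      rw [dif_pos hx]
    have hFV : ∀ fg (x : ↥T) (hx : (x : γ) ∉ U), (F fg x : Fin (Fintype.card γ))
        = (fg.2 ⟨x, Or.resolve_left (Finset.mem_union.mp x.2) hx⟩ : Fin (Fintype.card γ)) := by
      intro fg x hx
      rw [hF]
      dsimp only
      rw [dif_neg hx]
    have hFmemL : ∀ fg (x : ↥T) (hx : (x : γ) ∈ U), (F fg x : Fin (Fintype.card γ)) ∈ L := by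
      intro fg x hx
      rw [hFU fg x hx]
      exact (fg.1 _).2
    have hFmemH : ∀ fg (x : ↥T) (hx : (x : γ) ∉ U), (F fg x : Fin (Fintype.card γ)) ∈ H := by
      intro fg x hx
      rw [hFV fg x hx]
      exact (fg.2 _).2
    have hbij : ∀ fg, Function.Bijective (F fg) := by
      intro fg
      rw [Fintype.bijective_iff_injective_and_card]
      refine ⟨?_, by rw [Fintype.card_coe, Fintype.card_coe, hTcard, hScard]⟩
      intro x y hxy
      have hv : (F fg x : Fin (Fintype.card γ)) = (F fg y : Fin (Fintype.card γ)) := congrArg Subtype.val hxy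
      by_cases hx : (x : γ) ∈ U <;> by_cases hy : (y : γ) ∈ U
      · rw [hFU fg x hx, hFU fg y hy] at hv
        have h2 := fg.1.injective (Subtype.ext hv)
        simp only [Subtype.mk.injEq] at h2
        exact Subtype.ext h2
      · exact (hLHdisj _ (hv ▸ hFmemL fg x hx) (hFmemH fg y hy)).elim
      · exact (hLHdisj _ (hv.symm ▸ hFmemL fg y hy) (hFmemH fg x hx)).elim
      · rw [hFV fg x hx, hFV fg y hy] at hv
        have h2 := fg.2.injective (Subtype.ext hv)
        simp only [Subtype.mk.injEq] at h2
        exact Subtype.ext h2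
    have hΦmem : ∀ fg, Equiv.ofBijective (F fg) (hbij fg) ∈ Finset.univ.filter
        (fun h : ↥T ≃ ↥S => ∀ a ∈ U, ∀ b ∈ V, bequiv σ T h a < bequiv σ T h b) := by
      intro fg
      rw [Finset.mem_filter]
      refine ⟨Finset.mem_univ _, ?_⟩
      intro a ha b hb
      rw [bequiv_apply_mem σ T _ (hUT ha), bequiv_apply_mem σ T _ (hVT hb)]
      have hbU : (b : γ) ∉ U := Finset.disjoint_right.mp hUV hb
      show (F fg ⟨a, hUT ha⟩ : Fin (Fintype.card γ)) < (F fg ⟨b, hVT hb⟩ : Fin (Fintype.card γ))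
      exact hLH _ (hFmemL fg ⟨a, hUT ha⟩ ha) _ (hFmemH fg ⟨b, hVT hb⟩ hbU)
    have hΦinj : Function.Injective (fun fg => Equiv.ofBijective (F fg) (hbij fg)) := by
      intro fg₁ fg₂ he
      have hval : ∀ x : ↥T, (F fg₁ x : Fin (Fintype.card γ)) = (F fg₂ x : Fin (Fintype.card γ)) := by
        intro x
        exact congrArg (fun e : ↥T ≃ ↥S => (e x : Fin (Fintype.card γ))) he
      obtain ⟨f₁, g₁⟩ := fg₁
      obtain ⟨f₂, g₂⟩ := fg₂
      simp only [Prod.mk.injEq]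
      constructor
      · apply Equiv.ext
        intro u
        have h0 := hval ⟨u.1, hUT u.2⟩
        rw [hFU _ _ u.2, hFU _ _ u.2] at h0
        exact Subtype.ext h0
      · apply Equiv.ext
        intro v
        have hvU : (v : γ) ∉ U := Finset.disjoint_right.mp hUV v.2
        have h0 := hval ⟨v.1, hVT v.2⟩
        rw [hFV _ _ hvU, hFV _ _ hvU] at h0
        exact Subtype.ext h0
    have hcard1 : Fintype.card ((↥U ≃ ↥L) × (↥V ≃ ↥H)) = k.factorial * k.factorial := by
      rw [Fintype.card_prod]
      rw [Fintype.card_equiv (Fintype.equivOfCardEq (by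
        rw [Fintype.card_coe, Fintype.card_coe, hU, hLcard]))]
      rw [Fintype.card_equiv (Fintype.equivOfCardEq (by
        rw [Fintype.card_coe, Fintype.card_coe, hV, hHcard]))]
      rw [Fintype.card_coe, Fintype.card_coe, hU, hV]
    calc k.factorial * k.factorial
        = Fintype.card ((↥U ≃ ↥L) × (↥V ≃ ↥H)) := hcard1.symm
      _ ≤ Fintype.card ↥(Finset.univ.filter
            (fun h : ↥T ≃ ↥S => ∀ a ∈ U, ∀ b ∈ V, bequiv σ T h a < bequiv σ T h b)) := by
          apply Fintype.card_le_of_injective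
            (fun fg => (⟨Equiv.ofBijective (F fg) (hbij fg), hΦmem fg⟩ : ↥(Finset.univ.filter _)))
          intro a b hab
          exact hΦinj (congrArg Subtype.val hab)
      _ = _ := Fintype.card_coe _
  have hdc := Finset.card_mul_le_card_mul (fun σ σ' : Sp γ => Rel (U ∪ V) σ σ')
    (s := Finset.univ)
    (t := Finset.univ.filter (fun σ' : Sp γ => ∀ a ∈ U, ∀ b ∈ V, σ' a < σ' b))
    (m := k.factorial * k.factorial) (n := (2*k).factorial)
    (fun σ _ => by
      have heq : (Finset.univ.filter (fun σ' : Sp γ =>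
          ∀ a ∈ U, ∀ b ∈ V, σ' a < σ' b)).bipartiteAbove
            (fun σ σ' : Sp γ => Rel (U ∪ V) σ σ') σ
          = Finset.univ.filter (fun σ' : Sp γ =>
              Rel (U ∪ V) σ σ' ∧ ∀ a ∈ U, ∀ b ∈ V, σ' a < σ' b) := by
        unfold Finset.bipartiteAbove
        rw [Finset.filter_filter]
        exact Finset.filter_congr (fun x _ => and_comm)
      rw [heq]
      exact main σ)
    (fun σ' _ => by
      have heq : (Finset.univ : Finset (Sp γ)).bipartiteBelow
          (fun σ σ'' : Sp γ => Rel (U ∪ V) σ σ'') σ'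
          = Finset.univ.filter (fun σ : Sp γ => Rel (U ∪ V) σ' σ) := by
        unfold Finset.bipartiteBelow
        exact Finset.filter_congr (fun x _ => rel_comm)
      rw [heq, card_rel σ' (U ∪ V), hTcard])
  rwa [Finset.card_univ, Fintype.card_equiv (Fintype.equivFin γ)] at hdc


lemma CL2main {k : ℕ} (hk : 1 ≤ k) {U V W : Finset γ} (hUV : Disjoint U V)
    (hUW : Disjoint U W) (hVW : Disjoint V W)
    (hU : U.card = k) (hV : V.card = k) (hW : W.card = k) :
    (Finset.univ.filter (fun σ' : Sp γ =>
        (∀ a ∈ U, ∀ b ∈ V, σ' a < σ' b) ∧ ∀ w ∈ W, ∃ a ∈ U, σ' w < σ' a)).card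
      * (3 * k).factorial
    ≤ (Fintype.card γ).factorial * (k.factorial * (k * (2 * k - 1).factorial)) := by
  classical
  set T := U ∪ V ∪ W with hT
  have hUT : U ⊆ T := Finset.subset_union_left.trans Finset.subset_union_left
  have hVT : V ⊆ T := Finset.subset_union_right.trans Finset.subset_union_left
  have hWT : W ⊆ T := Finset.subset_union_right
  have hUWd : Disjoint (U ∪ V) W := Finset.disjoint_union_left.mpr ⟨hUW, hVW⟩
  have hUWV : Disjoint (U ∪ W) V := Finset.disjoint_union_left.mpr ⟨hUV, hVW.symm⟩
  have hTcard : T.card = 3 * k := by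
    rw [hT, Finset.card_union_of_disjoint hUWd, Finset.card_union_of_disjoint hUV,
      hU, hV, hW]
    ring
  have hUWcard : (U ∪ W).card = 2 * k := by
    rw [Finset.card_union_of_disjoint hUW, hU, hW]
    ring
  have main : ∀ σ'' : Sp γ,
      (Finset.univ.filter (fun σ' : Sp γ =>
        ((∀ a ∈ U, ∀ b ∈ V, σ' a < σ' b) ∧ ∀ w ∈ W, ∃ a ∈ U, σ' w < σ' a)
          ∧ Rel T σ' σ'')).card
      ≤ k.factorial * (k * (2 * k - 1).factorial) := by
    intro σ''
    set S := T.image σ'' with hS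
    have hScard : S.card = 3 * k := by
      rw [hS, Finset.card_image_of_injective _ σ''.injective, hTcard]
    set L := S.filter (fun x => rk S x < 2 * k) with hL
    set H := S.filter (fun x => ¬ rk S x < 2 * k) with hH
    have hLcard : L.card = 2 * k := card_rk_lt (by omega)
    have hpart : L.card + H.card = S.card := by
      rw [hL, hH]
      exact Finset.card_filter_add_card_filter_not _
    have hHcard : H.card = k := by omega
    have hLne : L.Nonempty := Finset.card_pos.mp (by omega)
    set m₀ := L.max' hLne with hm₀
    have hm₀L : m₀ ∈ L := Finset.max'_mem _ _
    have hm₀L' : m₀ ∈ S.filter (fun x => rk S x < 2 * k) := hL ▸ hm₀L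
    have hm₀S : m₀ ∈ S := (Finset.mem_filter.mp hm₀L').1
    have hm₀rk : rk S m₀ < 2 * k := (Finset.mem_filter.mp hm₀L').2
    have facts : ∀ σ' : Sp γ, (∀ a ∈ U, ∀ b ∈ V, σ' a < σ' b) →
        (∀ w ∈ W, ∃ a ∈ U, σ' w < σ' a) → Rel T σ' σ'' →
        (∀ b ∈ V, σ' b ∈ H) ∧ (∀ y ∈ U ∪ W, σ' y ∈ L) ∧ (∃ u ∈ U, σ' u = m₀) := by
      intro σ' hc1 hc2 hrel
      have hrel' : Rel T σ'' σ' := hrel.symm'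
      have hmemS : ∀ x ∈ T, σ' x ∈ S := by
        intro x hx
        rw [hS]
        exact mem_image_of_rel hrel' hx
      have hUWsubT : ∀ y ∈ U ∪ W, y ∈ T := by
        intro y hy
        rcases Finset.mem_union.mp hy with h | h
        exacts [hUT h, hWT h]
      have hltUV : ∀ y ∈ U ∪ W, ∀ b ∈ V, σ' y < σ' b := by
        intro y hy b hb
        rcases Finset.mem_union.mp hy with h | h
        · exact hc1 y h b hb
        · obtain ⟨a, ha, hlt⟩ := hc2 y h
          exact lt_trans hlt (hc1 a ha b hb)
      have hF2 : ∀ b ∈ V, σ' b ∈ H := by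
        intro b hb
        have hsub : (U ∪ W).image σ' ⊆ S.filter (fun z => z < σ' b) := by
          intro z hz
          obtain ⟨y, hy, rfl⟩ := Finset.mem_image.mp hz
          rw [Finset.mem_filter]
          exact ⟨hmemS y (hUWsubT y hy), hltUV y hy b hb⟩
        have hcard2 : 2 * k ≤ rk S (σ' b) := by
          have hle := Finset.card_le_card hsub
          rwa [Finset.card_image_of_injective _ σ'.injective, hUWcard] at hle
        rw [hH, Finset.mem_filter]
        exact ⟨hmemS b (hVT hb), by omega⟩
      have hF1 : ∀ y ∈ U ∪ W, σ' y ∈ L := by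
        intro y hy
        have hyT : y ∈ T := hUWsubT y hy
        have hsub : S.filter (fun z => z < σ' y) ⊆ S \ insert (σ' y) (V.image σ') := by
          intro z hz
          rw [Finset.mem_filter] at hz
          rw [Finset.mem_sdiff]
          refine ⟨hz.1, ?_⟩
          intro hzmem
          rcases Finset.mem_insert.mp hzmem with h | h
          · exact absurd (h ▸ hz.2) (lt_irrefl _)
          · obtain ⟨b, hb, rfl⟩ := Finset.mem_image.mp h
            exact absurd (lt_trans hz.2 (hltUV y hy b hb)) (lt_irrefl _)
        have hins : insert (σ' y) (V.image σ') ⊆ S := by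
          intro z hz
          rcases Finset.mem_insert.mp hz with h | h
          · exact h ▸ hmemS y hyT
          · obtain ⟨b, hb, rfl⟩ := Finset.mem_image.mp h
            exact hmemS b (hVT hb)
        have hnotmem : σ' y ∉ V.image σ' := by
          intro hmem
          obtain ⟨b, hb, hbe⟩ := Finset.mem_image.mp hmem
          have hby : b = y := σ'.injective hbe
          subst hby
          exact (Finset.disjoint_right.mp hUWV hb) hy
        have hcardins : (insert (σ' y) (V.image σ')).card = k + 1 := by
          rw [Finset.card_insert_of_notMem hnotmem,
            Finset.card_image_of_injective _ σ'.injective, hV]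
        have hle := Finset.card_le_card hsub
        rw [Finset.card_sdiff_of_subset hins, hScard, hcardins] at hle
        rw [hL, Finset.mem_filter]
        refine ⟨hmemS y hyT, ?_⟩
        have hrkdef : rk S (σ' y) = (S.filter (fun z => z < σ' y)).card := rfl
        omega
      refine ⟨hF2, hF1, ?_⟩
      have hm₀img : m₀ ∈ T.image σ' := by
        rw [image_eq_of_rel hrel', ← hS]
        exact hm₀S
      obtain ⟨z, hzT, hze⟩ := Finset.mem_image.mp hm₀img
      rw [hT] at hzT
      rcases Finset.mem_union.mp hzT with hz1 | hzW
      · rcases Finset.mem_union.mp hz1 with hzU | hzV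
        · exact ⟨z, hzU, hze⟩
        · exfalso
          have hzH := hF2 z hzV
          rw [hze, hH, Finset.mem_filter] at hzH
          exact hzH.2 hm₀rk
      · exfalso
        obtain ⟨a, haU, hlt⟩ := hc2 z hzW
        have haL : σ' a ∈ L := hF1 a (Finset.mem_union_left _ haU)
        have hle : σ' a ≤ m₀ := Finset.le_max' L _ haL
        rw [← hze] at hle
        exact absurd (lt_of_lt_of_le hlt hle) (lt_irrefl _)
    -- cardinality of the target structure
    have hTgtcard : Fintype.card ((↥V ≃ ↥H) ×
        ((u : ↥U) × (↥((U ∪ W).erase u.1) ≃ ↥(L.erase m₀))))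
        = k.factorial * (k * (2 * k - 1).factorial) := by
      rw [Fintype.card_prod, Fintype.card_sigma]
      have h1 : Fintype.card (↥V ≃ ↥H) = k.factorial := by
        rw [Fintype.card_equiv (Fintype.equivOfCardEq (by
          rw [Fintype.card_coe, Fintype.card_coe, hV, hHcard]))]
        rw [Fintype.card_coe, hV]
      have h2 : ∀ u : ↥U, Fintype.card (↥((U ∪ W).erase u.1) ≃ ↥(L.erase m₀))
          = (2 * k - 1).factorial := by
        intro u
        have hc1 : ((U ∪ W).erase u.1).card = 2 * k - 1 := by
          rw [Finset.card_erase_of_mem (Finset.mem_union_left _ u.2), hUWcard]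
        have hc2 : (L.erase m₀).card = 2 * k - 1 := by
          rw [Finset.card_erase_of_mem hm₀L, hLcard]
        rw [Fintype.card_equiv (Fintype.equivOfCardEq (by
          rw [Fintype.card_coe, Fintype.card_coe, hc1, hc2]))]
        rw [Fintype.card_coe, hc1]
      rw [h1]
      congr 1
      rw [Finset.sum_congr rfl (fun u _ => h2 u), Finset.sum_const, Finset.card_univ,
        Fintype.card_coe, hU, smul_eq_mul]
    set Flt := Finset.univ.filter (fun σ' : Sp γ =>
        ((∀ a ∈ U, ∀ b ∈ V, σ' a < σ' b) ∧ ∀ w ∈ W, ∃ a ∈ U, σ' w < σ' a)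
          ∧ Rel T σ' σ'') with hFlt
    have hmemP : ∀ p : ↥Flt,
        ((∀ a ∈ U, ∀ b ∈ V, p.1 a < p.1 b) ∧ ∀ w ∈ W, ∃ a ∈ U, p.1 w < p.1 a)
          ∧ Rel T p.1 σ'' := by
      intro p
      exact (Finset.mem_filter.mp p.2).2
    have hfacts : ∀ p : ↥Flt,
        (∀ b ∈ V, p.1 b ∈ H) ∧ (∀ y ∈ U ∪ W, p.1 y ∈ L) ∧ (∃ u ∈ U, p.1 u = m₀) :=
      fun p => facts p.1 (hmemP p).1.1 (hmemP p).1.2 (hmemP p).2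
    have hex : ∀ p : ↥Flt, ∃! u, u ∈ U ∧ p.1 u = m₀ := by
      intro p
      obtain ⟨u, hu, hue⟩ := (hfacts p).2.2
      exact ⟨u, ⟨hu, hue⟩, fun y hy => p.1.injective (hy.2.trans hue.symm)⟩
    -- the injection
    let uof : ↥Flt → γ := fun p => Finset.choose (fun u => p.1 u = m₀) U (hex p)
    have huofU : ∀ p : ↥Flt, uof p ∈ U := fun p => Finset.choose_mem (fun u => p.1 u = m₀) U (hex p)
    have huofval : ∀ p : ↥Flt, p.1 (uof p) = m₀ := fun p => Finset.choose_property (fun u => p.1 u = m₀) U (hex p)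
    have huofUW : ∀ p : ↥Flt, uof p ∈ U ∪ W := fun p => Finset.mem_union_left _ (huofU p)
    have hmap3 : ∀ p : ↥Flt, ∀ y ∈ (U ∪ W).erase (uof p), p.1 y ∈ L.erase m₀ := by
      intro p y hy
      rw [Finset.mem_erase] at hy
      rw [Finset.mem_erase]
      refine ⟨?_, (hfacts p).2.1 y hy.2⟩
      intro hcon
      exact hy.1 (p.1.injective (hcon.trans (huofval p).symm))
    have hc3a : ∀ p : ↥Flt, ((U ∪ W).erase (uof p)).card = (L.erase m₀).card := by
      intro p
      rw [Finset.card_erase_of_mem (huofUW p), Finset.card_erase_of_mem hm₀L,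
        hUWcard, hLcard]
    set Φ : ↥Flt → ((↥V ≃ ↥H) ×
        ((u : ↥U) × (↥((U ∪ W).erase u.1) ≃ ↥(L.erase m₀)))) := fun p =>
      (mkEquivOf p.1 (fun b hb => (hfacts p).1 b hb)
          (fun x _ y _ h => p.1.injective h) (by rw [hV, hHcard]),
        ⟨⟨uof p, huofU p⟩,
          mkEquivOf p.1 (hmap3 p) (fun x _ y _ h => p.1.injective h) (hc3a p)⟩) with hΦ
    have hΦinj : Function.Injective Φ := by
      intro p q hpq
      have h1 := congrArg Prod.fst hpq
      have h2 := congrArg Prod.snd hpq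
      rw [hΦ] at h1 h2
      dsimp only at h1 h2
      have hufst : uof p = uof q := by
        have := congrArg Sigma.fst h2
        exact congrArg Subtype.val this
      -- value equality on V
      have hvalV : ∀ x (hx : x ∈ V), p.1 x = q.1 x := by
        intro x hx
        have := congrArg (fun e : ↥V ≃ ↥H => (e ⟨x, hx⟩ : Fin (Fintype.card γ))) h1
        exact this
      -- value equality on the erased set, via a non-dependent evaluation
      have hvalE : ∀ x (hxp : x ∈ (U ∪ W).erase (uof p)), p.1 x = q.1 x := by
        intro x hxp
        have hxq : x ∈ (U ∪ W).erase (uof q) := by rwa [← hufst]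
        have := congrArg (fun s : ((u : ↥U) ×
            (↥((U ∪ W).erase u.1) ≃ ↥(L.erase m₀))) =>
            if hy : x ∈ (U ∪ W).erase s.1.1 then
              some ((s.2 ⟨x, hy⟩ : ↥(L.erase m₀)) : Fin (Fintype.card γ))
            else none) h2
        dsimp only at this
        rw [dif_pos hxp, dif_pos hxq] at this
        exact Option.some_injective _ this
      apply Subtype.ext
      apply Equiv.ext
      intro x
      by_cases hxT : x ∈ T
      · rw [hT] at hxT
        rcases Finset.mem_union.mp hxT with hx1 | hxW
        · rcases Finset.mem_union.mp hx1 with hxU | hxV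
          · by_cases hxu : x = uof p
            · rw [hxu, huofval p, hufst, huofval q]
            · exact hvalE x (Finset.mem_erase.mpr ⟨hxu, Finset.mem_union_left _ hxU⟩)
          · exact hvalV x hxV
        · by_cases hxu : x = uof p
          · rw [hxu, huofval p, hufst, huofval q]
          · exact hvalE x (Finset.mem_erase.mpr ⟨hxu, Finset.mem_union_right _ hxW⟩)
      · rw [← (hmemP p).2 x hxT, ← (hmemP q).2 x hxT]
    calc (Finset.univ.filter (fun σ' : Sp γ =>
        ((∀ a ∈ U, ∀ b ∈ V, σ' a < σ' b) ∧ ∀ w ∈ W, ∃ a ∈ U, σ' w < σ' a)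
          ∧ Rel T σ' σ'')).card
        = Fintype.card ↥Flt := by rw [Fintype.card_coe, hFlt]
      _ ≤ Fintype.card ((↥V ≃ ↥H) ×
            ((u : ↥U) × (↥((U ∪ W).erase u.1) ≃ ↥(L.erase m₀)))) :=
          Fintype.card_le_of_injective Φ hΦinj
      _ = k.factorial * (k * (2 * k - 1).factorial) := hTgtcard
  -- outer double counting
  have hdc := Finset.card_mul_le_card_mul (fun σ' σ : Sp γ => Rel T σ' σ)
    (s := Finset.univ.filter (fun σ' : Sp γ =>
        (∀ a ∈ U, ∀ b ∈ V, σ' a < σ' b) ∧ ∀ w ∈ W, ∃ a ∈ U, σ' w < σ' a))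
    (t := Finset.univ)
    (m := (3 * k).factorial) (n := k.factorial * (k * (2 * k - 1).factorial))
    (fun σ' _ => by
      have heq : (Finset.univ : Finset (Sp γ)).bipartiteAbove
          (fun σ' σ : Sp γ => Rel T σ' σ) σ'
          = Finset.univ.filter (fun σ : Sp γ => Rel T σ' σ) := by
        unfold Finset.bipartiteAbove
        rfl
      rw [heq, card_rel σ' T, hTcard])
    (fun σ'' _ => by
      have heq : (Finset.univ.filter (fun σ' : Sp γ =>
          (∀ a ∈ U, ∀ b ∈ V, σ' a < σ' b) ∧ ∀ w ∈ W, ∃ a ∈ U, σ' w < σ' a)).bipartiteBelow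
            (fun σ' σ : Sp γ => Rel T σ' σ) σ''
          = Finset.univ.filter (fun σ' : Sp γ =>
              ((∀ a ∈ U, ∀ b ∈ V, σ' a < σ' b) ∧ ∀ w ∈ W, ∃ a ∈ U, σ' w < σ' a)
                ∧ Rel T σ' σ'') := by
        unfold Finset.bipartiteBelow
        rw [Finset.filter_filter]
      rw [heq]
      exact main σ'')
  rwa [Finset.card_univ, Fintype.card_equiv (Fintype.equivFin γ)] at hdc

lemma CL3main {k : ℕ} (hk : 1 ≤ k) {U V W : Finset γ} (hUV : Disjoint U V)
    (hUW : Disjoint U W) (hVW : Disjoint V W)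
    (hU : U.card = k) (hV : V.card = k) (hW : W.card = k) :
    (Finset.univ.filter (fun σ' : Sp γ =>
        (∀ a ∈ U, ∀ b ∈ V, σ' a < σ' b) ∧ ∀ w ∈ W, ∃ b ∈ V, σ' b < σ' w)).card
      * (3 * k).factorial
    ≤ (Fintype.card γ).factorial * (k.factorial * (k * (2 * k - 1).factorial)) := by
  have hbijc : (Finset.univ.filter (fun σ' : Sp γ =>
      (∀ a ∈ U, ∀ b ∈ V, σ' a < σ' b) ∧ ∀ w ∈ W, ∃ b ∈ V, σ' b < σ' w)).card
      = (Finset.univ.filter (fun τ : Sp γ =>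
      (∀ a ∈ V, ∀ b ∈ U, τ a < τ b) ∧ ∀ w ∈ W, ∃ a ∈ V, τ w < τ a)).card := by
    apply Finset.card_bij (fun σ _ => σ.trans Fin.revPerm)
    · intro σ hσ
      rw [Finset.mem_filter] at hσ ⊢
      obtain ⟨_, h1, h2⟩ := hσ
      refine ⟨Finset.mem_univ _, ?_, ?_⟩
      · intro a ha b hb
        simp only [Equiv.trans_apply, Fin.revPerm_apply]
        exact Fin.rev_lt_rev.mpr (h1 b hb a ha)
      · intro w hw
        obtain ⟨b, hb, hlt⟩ := h2 w hw
        refine ⟨b, hb, ?_⟩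
        simp only [Equiv.trans_apply, Fin.revPerm_apply]
        exact Fin.rev_lt_rev.mpr hlt
    · intro a _ b _ hab
      apply Equiv.ext
      intro x
      have hx := congrArg (fun e : Sp γ => e x) hab
      simp only [Equiv.trans_apply] at hx
      exact Fin.rev_injective hx
    · intro τ hτ
      rw [Finset.mem_filter] at hτ
      obtain ⟨_, h1, h2⟩ := hτ
      refine ⟨τ.trans Fin.revPerm, ?_, ?_⟩
      · rw [Finset.mem_filter]
        refine ⟨Finset.mem_univ _, ?_, ?_⟩
        · intro a ha b hb
          simp only [Equiv.trans_apply, Fin.revPerm_apply]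
          exact Fin.rev_lt_rev.mpr (h1 b hb a ha)
        · intro w hw
          obtain ⟨b, hb, hlt⟩ := h2 w hw
          refine ⟨b, hb, ?_⟩
          simp only [Equiv.trans_apply, Fin.revPerm_apply]
          exact Fin.rev_lt_rev.mpr hlt
      · apply Equiv.ext
        intro x
        simp [Fin.rev_rev]
  rw [hbijc]
  exact CL2main hk hUV.symm hVW hUW hV hU hW


variable {t : ℕ}

/-- The event assigned to the ordered pair `(q.2.1, q.2.2)` of the family `ℬ q.1`. -/
def Ev (ℬ : Fin t → Finset (Finset γ)) (q : (_ : Fin t) × Finset γ × Finset γ)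
    (σ : Sp γ) : Prop :=
  (∀ a ∈ q.2.1, ∀ b ∈ q.2.2, σ a < σ b) ∧
    ∀ O ∈ ℬ q.1, O ≠ q.2.1 → O ≠ q.2.2 →
      ((∃ w ∈ O, ∀ a ∈ q.2.1, σ a < σ w) ∧ (∃ w ∈ O, ∀ b ∈ q.2.2, σ w < σ b))

noncomputable instance (ℬ : Fin t → Finset (Finset γ))
    (q : (_ : Fin t) × Finset γ × Finset γ) (σ : Sp γ) : Decidable (Ev ℬ q σ) :=
  Classical.dec _

lemma ev_disjoint (ℬ : Fin t → Finset (Finset γ))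
    (hdisj : ∀ i, ∀ X ∈ ℬ i, ∀ Y ∈ ℬ i, X ≠ Y → Disjoint X Y)
    (hcross : ∀ i j, i ≠ j → ∀ X ∈ ℬ i, ∀ Y ∈ ℬ j, (X ∩ Y).Nonempty)
    (hne : ∀ i, ∀ X ∈ ℬ i, X.Nonempty)
    {q r : (_ : Fin t) × Finset γ × Finset γ}
    (hq : q.2 ∈ (ℬ q.1).offDiag) (hr : r.2 ∈ (ℬ r.1).offDiag) (hqr : q ≠ r)
    (σ : Sp γ) (h1 : Ev ℬ q σ) (h2 : Ev ℬ r σ) : False := by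
  obtain ⟨i, X, Y⟩ := q
  obtain ⟨j, P, Q⟩ := r
  rw [Finset.mem_offDiag] at hq hr
  obtain ⟨hX, hY, hXY⟩ := hq
  obtain ⟨hP, hQ, hPQ⟩ := hr
  obtain ⟨h1c, h1r⟩ := h1
  obtain ⟨h2c, h2r⟩ := h2
  by_cases hij : i = j
  · -- same family
    subst hij
    have hpairne : ¬ (X = P ∧ Y = Q) := by
      intro ⟨e1, e2⟩
      subst e1; subst e2
      exact hqr rfl
    by_cases hPX : P = X
    · -- same first coordinate, different second
      subst hPX
      have hQY : Q ≠ Y := by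
        intro hc
        exact hpairne ⟨rfl, hc.symm⟩
      have hw1 := (h1r Q hQ (Ne.symm hPQ) hQY).2
      have hw2 := (h2r Y hY hXY.symm (Ne.symm hQY)).2
      obtain ⟨w, hwQ, hw⟩ := hw1
      obtain ⟨w', hw'Y, hw'⟩ := hw2
      exact lt_asymm (hw w' hw'Y) (hw' w hwQ)
    · by_cases hQY : Q = Y
      · -- same second coordinate, different first
        subst hQY
        have hPY : P ≠ Q := hPQ
        have hw1 := (h1r P hP hPX hPY).1
        have hw2 := (h2r X hX (Ne.symm hPX) hXY).1
        obtain ⟨w, hwP, hw⟩ := hw1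
        obtain ⟨w', hw'X, hw'⟩ := hw2
        exact lt_asymm (hw w' hw'X) (hw' w hwP)
      · by_cases hPY : P = Y
        · -- r = (Y, Q)
          subst hPY
          by_cases hQX : Q = X
          · subst hQX
            obtain ⟨x₀, hx₀⟩ := hne _ _ hX
            obtain ⟨y₀, hy₀⟩ := hne _ _ hY
            exact lt_asymm (h1c x₀ hx₀ y₀ hy₀) (h2c y₀ hy₀ x₀ hx₀)
          · have hw2 := (h2r X hX hXY (Ne.symm hQX)).1
            obtain ⟨w, hwX, hw⟩ := hw2
            obtain ⟨y₀, hy₀⟩ := hne _ _ hY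
            exact lt_asymm (h1c w hwX y₀ hy₀) (hw y₀ hy₀)
        · by_cases hQX : Q = X
          · -- r = (P, X) with P ∉ {X, Y}
            subst hQX
            have hw2 := (h2r Y hY (fun hc => hPY hc.symm) hXY.symm).2
            obtain ⟨w, hwY, hw⟩ := hw2
            obtain ⟨x₀, hx₀⟩ := hne _ _ hX
            exact lt_asymm (h1c x₀ hx₀ w hwY) (hw x₀ hx₀)
          · -- all four distinct
            have hw1 := (h1r P hP hPX hPY).1
            have hw2 := (h2r X hX (Ne.symm hPX) (Ne.symm hQX)).1
            obtain ⟨w, hwP, hw⟩ := hw1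
            obtain ⟨w', hw'X, hw'⟩ := hw2
            exact lt_asymm (hw w' hw'X) (hw' w hwP)
  · -- different families
    obtain ⟨x, hx⟩ := hcross i j hij X hX Q hQ
    obtain ⟨y, hy⟩ := hcross j i (Ne.symm hij) P hP Y hY
    rw [Finset.mem_inter] at hx hy
    exact lt_asymm (h1c x hx.1 y hy.2) (h2c y hy.1 x hx.2)

theorem core (k : ℕ) (hk : 2 ≤ k) (ht : 2 ≤ t)
    (ℬ : Fin t → Finset (Finset γ))
    (hd2 : ∀ i, 2 ≤ (ℬ i).card)
    (huni : ∀ i, ∀ X ∈ ℬ i, X.card = k)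
    (hdisj : ∀ i, ∀ X ∈ ℬ i, ∀ Y ∈ ℬ i, X ≠ Y → Disjoint X Y)
    (hcross : ∀ i j, i ≠ j → ∀ X ∈ ℬ i, ∀ Y ∈ ℬ j, (X ∩ Y).Nonempty) :
    ((∑ i, ((ℬ i).card * (ℬ i).card - (ℬ i).card) : ℕ) : ℚ)
        * (1 - ((k : ℚ) - 2) * (Nat.choose (2*k) k) / (Nat.choose (3*k) k))
      ≤ (Nat.choose (2*k) k : ℚ) := by
  classical
  have hk1 : 1 ≤ k := by omega
  have hne : ∀ i, ∀ X ∈ ℬ i, X.Nonempty := by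
    intro i X hX
    rw [← Finset.card_pos, huni i X hX]
    omega
  -- every family has size at most k
  have hdk : ∀ i, (ℬ i).card ≤ k := by
    intro i
    have hj : ∃ j : Fin t, j ≠ i := by
      by_cases h0 : i = (⟨0, by omega⟩ : Fin t)
      · refine ⟨⟨1, by omega⟩, ?_⟩
        rw [h0]
        intro hc
        have := congrArg Fin.val hc
        simp at this
      · exact ⟨⟨0, by omega⟩, fun hc => h0 hc.symm⟩
    obtain ⟨j, hji⟩ := hj
    obtain ⟨Y, hY⟩ := Finset.card_pos.mp (lt_of_lt_of_le two_pos (hd2 j))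
    have hYne : Y.Nonempty := hne j Y hY
    have hXY : ∀ X ∈ ℬ i, (X ∩ Y).Nonempty :=
      fun X hX => hcross i j (Ne.symm hji) X hX Y hY
    have hle : (ℬ i).card ≤ Y.card := by
      apply Finset.card_le_card_of_injOn
        (fun X => if h : (X ∩ Y).Nonempty then h.choose else hYne.choose)
      · intro X hX
        dsimp only
        rw [dif_pos (hXY X hX)]
        exact (Finset.mem_inter.mp (hXY X hX).choose_spec).2
      · intro X₁ hX₁ X₂ hX₂ hfe
        simp only [Finset.mem_coe] at hX₁ hX₂
        dsimp only at hfe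
        rw [dif_pos (hXY X₁ hX₁), dif_pos (hXY X₂ hX₂)] at hfe
        by_contra hc
        have hd := hdisj i X₁ hX₁ X₂ hX₂ hc
        have he1 := (Finset.mem_inter.mp (hXY X₁ hX₁).choose_spec).1
        have he2 := (Finset.mem_inter.mp (hXY X₂ hX₂).choose_spec).1
        rw [hfe] at he1
        exact Finset.disjoint_left.mp hd he1 he2
    calc (ℬ i).card ≤ Y.card := hle
      _ = k := huni j Y hY
  -- the index set of ordered pairs
  set Q : Finset ((_ : Fin t) × Finset γ × Finset γ) :=
    Finset.univ.sigma (fun i => (ℬ i).offDiag) with hQ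
  have hQcard : Q.card = ∑ i, ((ℬ i).card * (ℬ i).card - (ℬ i).card) := by
    rw [hQ, Finset.card_sigma]
    exact Finset.sum_congr rfl (fun i _ => Finset.offDiag_card _)
  -- disjointness of events, hence the total count is at most n!
  have hsum : ∑ q ∈ Q, (Finset.univ.filter (Ev ℬ q)).card
      ≤ (Fintype.card γ).factorial := by
    have hdisjf : ∀ q ∈ Q, ∀ r ∈ Q, q ≠ r →
        Disjoint (Finset.univ.filter (Ev ℬ q)) (Finset.univ.filter (Ev ℬ r)) := by
      intro q hq r hr hqr
      rw [Finset.disjoint_left]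
      intro σ hσq hσr
      rw [Finset.mem_filter] at hσq hσr
      rw [hQ, Finset.mem_sigma] at hq hr
      exact ev_disjoint ℬ hdisj hcross hne hq.2 hr.2 hqr σ hσq.2 hσr.2
    calc ∑ q ∈ Q, (Finset.univ.filter (Ev ℬ q)).card
        = (Q.biUnion (fun q => Finset.univ.filter (Ev ℬ q))).card :=
          (Finset.card_biUnion hdisjf).symm
      _ ≤ (Finset.univ : Finset (Sp γ)).card := Finset.card_le_card (Finset.subset_univ _)
      _ = (Fintype.card γ).factorial := by
          rw [Finset.card_univ, Fintype.card_equiv (Fintype.equivFin γ)]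
  -- rational constants
  set nQ : ℚ := ((Fintype.card γ).factorial : ℚ) with hnQ
  have hnQpos : 0 < nQ := by
    rw [hnQ]
    exact_mod_cast Nat.factorial_pos _
  set c₁ : ℚ := nQ * (k.factorial * k.factorial) / ((2*k).factorial : ℚ) with hc₁
  set c₂ : ℚ := nQ * (k.factorial * (k * (2*k-1).factorial)) / ((3*k).factorial : ℚ) with hc₂
  have hc₂nonneg : 0 ≤ c₂ := by
    rw [hc₂]
    positivity
  -- the per-pair lower bound
  have hperq : ∀ q ∈ Q, c₁ - ((k : ℚ) - 2) * (2 * c₂)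
      ≤ ((Finset.univ.filter (Ev ℬ q)).card : ℚ) := by
    rintro ⟨i, X, Y⟩ hq
    rw [hQ, Finset.mem_sigma] at hq
    rw [Finset.mem_offDiag] at hq
    obtain ⟨-, hX, hY, hXY⟩ := hq
    dsimp only at hX hY hXY
    have hXk : X.card = k := huni i X hX
    have hYk : Y.card = k := huni i Y hY
    have hdXY : Disjoint X Y := hdisj i X hX Y hY hXY
    set WS := ((ℬ i).erase X).erase Y with hWS
    have hYmem : Y ∈ (ℬ i).erase X := Finset.mem_erase.mpr ⟨Ne.symm hXY, hY⟩
    have hWScard : WS.card = (ℬ i).card - 2 := by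
      rw [hWS, Finset.card_erase_of_mem hYmem, Finset.card_erase_of_mem hX]
      omega
    have hWSmem : ∀ O ∈ WS, O ∈ ℬ i ∧ O ≠ X ∧ O ≠ Y := by
      intro O hO
      rw [hWS, Finset.mem_erase, Finset.mem_erase] at hO
      exact ⟨hO.2.2, hO.2.1, hO.1⟩
    -- inclusion of the plain event into the full event plus bad events
    have hincl : Finset.univ.filter (fun σ : Sp γ => ∀ a ∈ X, ∀ b ∈ Y, σ a < σ b) ⊆
        Finset.univ.filter (Ev ℬ ⟨i, X, Y⟩) ∪ WS.biUnion (fun O =>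
          (Finset.univ.filter (fun σ : Sp γ =>
            (∀ a ∈ X, ∀ b ∈ Y, σ a < σ b) ∧ ∀ w ∈ O, ∃ a ∈ X, σ w < σ a))
          ∪ (Finset.univ.filter (fun σ : Sp γ =>
            (∀ a ∈ X, ∀ b ∈ Y, σ a < σ b) ∧ ∀ w ∈ O, ∃ b ∈ Y, σ b < σ w))) := by
      intro σ hσ
      rw [Finset.mem_filter] at hσ
      by_cases hEv : Ev ℬ ⟨i, X, Y⟩ σ
      · exact Finset.mem_union_left _ (Finset.mem_filter.mpr ⟨Finset.mem_univ _, hEv⟩)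
      · apply Finset.mem_union_right
        have hrest : ¬ ∀ O ∈ ℬ i, O ≠ X → O ≠ Y →
            ((∃ w ∈ O, ∀ a ∈ X, σ a < σ w) ∧ (∃ w ∈ O, ∀ b ∈ Y, σ w < σ b)) :=
          fun hr => hEv ⟨hσ.2, hr⟩
        push_neg at hrest
        obtain ⟨O, hO, hOX, hOY, himp⟩ := hrest
        have hOmem : O ∈ WS := by
          rw [hWS, Finset.mem_erase, Finset.mem_erase]
          exact ⟨hOY, hOX, hO⟩
        have hdOX : Disjoint O X := hdisj i O hO X hX hOX
        have hdOY : Disjoint O Y := hdisj i O hO Y hY hOY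
        by_cases hA : ∃ w ∈ O, ∀ a ∈ X, σ a < σ w
        · have hB := himp hA
          refine Finset.mem_biUnion.mpr ⟨O, hOmem, Finset.mem_union_right _
            (Finset.mem_filter.mpr ⟨Finset.mem_univ _, hσ.2, ?_⟩)⟩
          intro w hw
          obtain ⟨b, hb, hle⟩ := hB w hw
          refine ⟨b, hb, lt_of_le_of_ne hle ?_⟩
          intro hc
          have hbw : b = w := σ.injective hc
          subst hbw
          exact Finset.disjoint_right.mp hdOY hb hw
        · push_neg at hA
          refine Finset.mem_biUnion.mpr ⟨O, hOmem, Finset.mem_union_left _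
            (Finset.mem_filter.mpr ⟨Finset.mem_univ _, hσ.2, ?_⟩)⟩
          intro w hw
          obtain ⟨a, ha, hle⟩ := hA w hw
          refine ⟨a, ha, lt_of_le_of_ne hle ?_⟩
          intro hc
          have hwa : w = a := σ.injective hc
          subst hwa
          exact Finset.disjoint_left.mp hdOX hw ha
    -- counting consequences
    have hcard1 : (Finset.univ.filter (fun σ : Sp γ => ∀ a ∈ X, ∀ b ∈ Y, σ a < σ b)).card
        ≤ (Finset.univ.filter (Ev ℬ ⟨i, X, Y⟩)).card + ∑ O ∈ WS,
          ((Finset.univ.filter (fun σ : Sp γ =>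
            (∀ a ∈ X, ∀ b ∈ Y, σ a < σ b) ∧ ∀ w ∈ O, ∃ a ∈ X, σ w < σ a)).card
          + (Finset.univ.filter (fun σ : Sp γ =>
            (∀ a ∈ X, ∀ b ∈ Y, σ a < σ b) ∧ ∀ w ∈ O, ∃ b ∈ Y, σ b < σ w)).card) := by
      calc (Finset.univ.filter (fun σ : Sp γ => ∀ a ∈ X, ∀ b ∈ Y, σ a < σ b)).card
          ≤ _ := Finset.card_le_card hincl
        _ ≤ _ + _ := Finset.card_union_le _ _
        _ ≤ _ + ∑ O ∈ WS, _ := by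
            refine Nat.add_le_add_left ?_ _
            calc (WS.biUnion _).card ≤ ∑ O ∈ WS, _ := Finset.card_biUnion_le
              _ ≤ ∑ O ∈ WS, _ := Finset.sum_le_sum (fun O _ => Finset.card_union_le _ _)
    -- rational bounds
    have hN1 : c₁ ≤ ((Finset.univ.filter
        (fun σ : Sp γ => ∀ a ∈ X, ∀ b ∈ Y, σ a < σ b)).card : ℚ) := by
      have h := CL1main hk1 hdXY hXk hYk
      rw [hc₁, div_le_iff₀ (by exact_mod_cast Nat.factorial_pos (2*k))]
      calc nQ * (k.factorial * k.factorial)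
          = (((Fintype.card γ).factorial * (k.factorial * k.factorial) : ℕ) : ℚ) := by
            rw [hnQ]; push_cast; ring
        _ ≤ (((Finset.univ.filter (fun σ : Sp γ => ∀ a ∈ X, ∀ b ∈ Y, σ a < σ b)).card
              * (2*k).factorial : ℕ) : ℚ) := by exact_mod_cast h
        _ = _ := by push_cast; ring
    have hN23 : ∀ O ∈ WS,
        ((Finset.univ.filter (fun σ : Sp γ =>
          (∀ a ∈ X, ∀ b ∈ Y, σ a < σ b) ∧ ∀ w ∈ O, ∃ a ∈ X, σ w < σ a)).card : ℚ)
        + ((Finset.univ.filter (fun σ : Sp γ =>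
          (∀ a ∈ X, ∀ b ∈ Y, σ a < σ b) ∧ ∀ w ∈ O, ∃ b ∈ Y, σ b < σ w)).card : ℚ)
        ≤ 2 * c₂ := by
      intro O hO
      obtain ⟨hOB, hOX, hOY⟩ := hWSmem O hO
      have hOk : O.card = k := huni i O hOB
      have hdXO : Disjoint X O := hdisj i X hX O hOB (Ne.symm hOX)
      have hdYO : Disjoint Y O := hdisj i Y hY O hOB (Ne.symm hOY)
      have h2 := CL2main hk1 hdXY hdXO hdYO hXk hYk hOk
      have h3 := CL3main hk1 hdXY hdXO hdYO hXk hYk hOk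
      have hb2 : ((Finset.univ.filter (fun σ : Sp γ =>
          (∀ a ∈ X, ∀ b ∈ Y, σ a < σ b) ∧ ∀ w ∈ O, ∃ a ∈ X, σ w < σ a)).card : ℚ) ≤ c₂ := by
        rw [hc₂, le_div_iff₀ (by exact_mod_cast Nat.factorial_pos (3*k))]
        calc ((Finset.univ.filter (fun σ : Sp γ =>
            (∀ a ∈ X, ∀ b ∈ Y, σ a < σ b) ∧ ∀ w ∈ O, ∃ a ∈ X, σ w < σ a)).card : ℚ)
              * ((3*k).factorial : ℚ)
            = (((Finset.univ.filter (fun σ : Sp γ =>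
              (∀ a ∈ X, ∀ b ∈ Y, σ a < σ b) ∧ ∀ w ∈ O, ∃ a ∈ X, σ w < σ a)).card
                * (3*k).factorial : ℕ) : ℚ) := by push_cast; ring
          _ ≤ (((Fintype.card γ).factorial
                * (k.factorial * (k * (2*k-1).factorial)) : ℕ) : ℚ) := by exact_mod_cast h2
          _ = nQ * (k.factorial * (k * (2*k-1).factorial)) := by rw [hnQ]; push_cast; ring
      have hb3 : ((Finset.univ.filter (fun σ : Sp γ =>
          (∀ a ∈ X, ∀ b ∈ Y, σ a < σ b) ∧ ∀ w ∈ O, ∃ b ∈ Y, σ b < σ w)).card : ℚ) ≤ c₂ := by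
        rw [hc₂, le_div_iff₀ (by exact_mod_cast Nat.factorial_pos (3*k))]
        calc ((Finset.univ.filter (fun σ : Sp γ =>
            (∀ a ∈ X, ∀ b ∈ Y, σ a < σ b) ∧ ∀ w ∈ O, ∃ b ∈ Y, σ b < σ w)).card : ℚ)
              * ((3*k).factorial : ℚ)
            = (((Finset.univ.filter (fun σ : Sp γ =>
              (∀ a ∈ X, ∀ b ∈ Y, σ a < σ b) ∧ ∀ w ∈ O, ∃ b ∈ Y, σ b < σ w)).card
                * (3*k).factorial : ℕ) : ℚ) := by push_cast; ring
          _ ≤ (((Fintype.card γ).factorial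
                * (k.factorial * (k * (2*k-1).factorial)) : ℕ) : ℚ) := by exact_mod_cast h3
          _ = nQ * (k.factorial * (k * (2*k-1).factorial)) := by rw [hnQ]; push_cast; ring
      linarith
    -- combine
    have hd2i := hd2 i
    have hdki := hdk i
    have hs : ∑ O ∈ WS,
        (((Finset.univ.filter (fun σ : Sp γ =>
          (∀ a ∈ X, ∀ b ∈ Y, σ a < σ b) ∧ ∀ w ∈ O, ∃ a ∈ X, σ w < σ a)).card : ℚ)
        + ((Finset.univ.filter (fun σ : Sp γ =>
          (∀ a ∈ X, ∀ b ∈ Y, σ a < σ b) ∧ ∀ w ∈ O, ∃ b ∈ Y, σ b < σ w)).card : ℚ))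
        ≤ ((k : ℚ) - 2) * (2 * c₂) := by
      calc ∑ O ∈ WS,
          (((Finset.univ.filter (fun σ : Sp γ =>
            (∀ a ∈ X, ∀ b ∈ Y, σ a < σ b) ∧ ∀ w ∈ O, ∃ a ∈ X, σ w < σ a)).card : ℚ)
          + ((Finset.univ.filter (fun σ : Sp γ =>
            (∀ a ∈ X, ∀ b ∈ Y, σ a < σ b) ∧ ∀ w ∈ O, ∃ b ∈ Y, σ b < σ w)).card : ℚ))
          ≤ ∑ _O ∈ WS, 2 * c₂ := Finset.sum_le_sum hN23
        _ = (WS.card : ℚ) * (2 * c₂) := by rw [Finset.sum_const, nsmul_eq_mul]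
        _ ≤ ((k : ℚ) - 2) * (2 * c₂) := by
            apply mul_le_mul_of_nonneg_right _ (by linarith)
            rw [hWScard]
            have h9 : ((ℬ i).card - 2 : ℕ) ≤ k - 2 := by omega
            calc (((ℬ i).card - 2 : ℕ) : ℚ) ≤ ((k - 2 : ℕ) : ℚ) := by exact_mod_cast h9
              _ = (k : ℚ) - 2 := by
                  have h8 : (2 : ℕ) ≤ k := hk
                  push_cast [Nat.cast_sub h8]
                  ring
    have hc : ((Finset.univ.filter
          (fun σ : Sp γ => ∀ a ∈ X, ∀ b ∈ Y, σ a < σ b)).card : ℚ)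
        ≤ ((Finset.univ.filter (Ev ℬ ⟨i, X, Y⟩)).card : ℚ) + ∑ O ∈ WS,
          (((Finset.univ.filter (fun σ : Sp γ =>
            (∀ a ∈ X, ∀ b ∈ Y, σ a < σ b) ∧ ∀ w ∈ O, ∃ a ∈ X, σ w < σ a)).card : ℚ)
          + ((Finset.univ.filter (fun σ : Sp γ =>
            (∀ a ∈ X, ∀ b ∈ Y, σ a < σ b) ∧ ∀ w ∈ O, ∃ b ∈ Y, σ b < σ w)).card : ℚ)) := by
      exact_mod_cast hcard1
    linarith [hN1, hc, hs]
  -- sum up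
  have hglobal : (Q.card : ℚ) * (c₁ - ((k : ℚ) - 2) * (2 * c₂)) ≤ nQ := by
    calc (Q.card : ℚ) * (c₁ - ((k : ℚ) - 2) * (2 * c₂))
        = Q.card • (c₁ - ((k : ℚ) - 2) * (2 * c₂)) := by rw [nsmul_eq_mul]
      _ ≤ ∑ q ∈ Q, ((Finset.univ.filter (Ev ℬ q)).card : ℚ) :=
          Finset.card_nsmul_le_sum Q _ _ hperq
      _ = ((∑ q ∈ Q, (Finset.univ.filter (Ev ℬ q)).card : ℕ) : ℚ) := by
          rw [Nat.cast_sum]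
      _ ≤ nQ := by rw [hnQ]; exact_mod_cast hsum
  -- final arithmetic
  have hC2pos : (0 : ℚ) < (Nat.choose (2*k) k : ℚ) := by
    exact_mod_cast Nat.choose_pos (by omega)
  have hC3pos : (0 : ℚ) < (Nat.choose (3*k) k : ℚ) := by
    exact_mod_cast Nat.choose_pos (by omega)
  have hf2pos : (0 : ℚ) < ((2*k).factorial : ℚ) := by exact_mod_cast Nat.factorial_pos _
  have hf3pos : (0 : ℚ) < ((3*k).factorial : ℚ) := by exact_mod_cast Nat.factorial_pos _
  have idC2 : (Nat.choose (2*k) k : ℚ) * (k.factorial * k.factorial)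
      = ((2*k).factorial : ℚ) := by
    have h := Nat.choose_mul_factorial_mul_factorial (show k ≤ 2*k by omega)
    have h2 : 2*k - k = k := by omega
    rw [h2] at h
    exact_mod_cast congrArg (fun m : ℕ => (m : ℚ)) (by rw [← h]; ring)
  have idC3 : (Nat.choose (3*k) k : ℚ) * (k.factorial * (2*k).factorial)
      = ((3*k).factorial : ℚ) := by
    have h := Nat.choose_mul_factorial_mul_factorial (show k ≤ 3*k by omega)
    have h2 : 3*k - k = 2*k := by omega
    rw [h2] at h
    exact_mod_cast congrArg (fun m : ℕ => (m : ℚ)) (by rw [← h]; ring)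
  have id2 : (2 : ℚ) * (k * (2*k-1).factorial) = ((2*k).factorial : ℚ) := by
    have h : 2 * k * (2*k-1).factorial = (2*k).factorial :=
      Nat.mul_factorial_pred (by omega)
    calc (2 : ℚ) * (k * (2*k-1).factorial)
        = ((2 * k * (2*k-1).factorial : ℕ) : ℚ) := by push_cast; ring
      _ = _ := by rw [h]
  rw [← hQcard]
  -- conclude from hglobal
  rw [← mul_le_mul_iff_of_pos_right hnQpos]
  have e1 : c₁ * (Nat.choose (2*k) k : ℚ) = nQ := by
    rw [hc₁]
    field_simp
    linear_combination idC2
  have h2c₂ : 2 * c₂ = nQ * (k.factorial * (2*k).factorial) / ((3*k).factorial : ℚ) := by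
    rw [hc₂]
    field_simp
    linear_combination id2
  have e2 : (2 * c₂) * (Nat.choose (2*k) k : ℚ)
      = nQ * (Nat.choose (2*k) k : ℚ) / (Nat.choose (3*k) k : ℚ) := by
    rw [h2c₂]
    rw [div_mul_eq_mul_div, div_eq_div_iff (ne_of_gt hf3pos) (ne_of_gt hC3pos)]
    linear_combination (nQ * (Nat.choose (2*k) k : ℚ)) * idC3
  have key : (Q.card : ℚ) * (1 - ((k : ℚ) - 2) * (Nat.choose (2*k) k) / (Nat.choose (3*k) k)) * nQ
      = (Q.card : ℚ) * (c₁ - ((k : ℚ) - 2) * (2 * c₂)) * (Nat.choose (2*k) k : ℚ) := by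
    calc (Q.card : ℚ) * (1 - ((k : ℚ) - 2) * (Nat.choose (2*k) k) / (Nat.choose (3*k) k)) * nQ
        = (Q.card : ℚ) * nQ - (Q.card : ℚ) * ((k : ℚ) - 2)
            * (nQ * (Nat.choose (2*k) k : ℚ) / (Nat.choose (3*k) k : ℚ)) := by ring
      _ = (Q.card : ℚ) * (c₁ * (Nat.choose (2*k) k : ℚ)) - (Q.card : ℚ) * ((k : ℚ) - 2)
            * ((2 * c₂) * (Nat.choose (2*k) k : ℚ)) := by rw [e1, e2]
      _ = (Q.card : ℚ) * (c₁ - ((k : ℚ) - 2) * (2 * c₂)) * (Nat.choose (2*k) k : ℚ) := by ring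
  rw [key]
  calc (Q.card : ℚ) * (c₁ - ((k : ℚ) - 2) * (2 * c₂)) * (Nat.choose (2*k) k : ℚ)
      ≤ nQ * (Nat.choose (2*k) k : ℚ) := by
        apply mul_le_mul_of_nonneg_right hglobal (le_of_lt hC2pos)
    _ = (Nat.choose (2*k) k : ℚ) * nQ := by ring


end CL
end CIM

/-- A `k`-uniform cross intersecting matching of type `(d 0, …, d (t-1))`. -/
def IsCrossIntersectingMatching {α : Type*} [DecidableEq α] (k t : ℕ)
    (d : Fin t → ℕ) (𝒜 : Fin t → Finset (Finset α)) : Prop :=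
  2 ≤ t ∧ 2 ≤ k ∧ (∀ i, 2 ≤ d i) ∧
  (∀ i, (𝒜 i).card = d i) ∧
  (∀ i, ∀ X ∈ 𝒜 i, X.card = k) ∧
  (∀ i, ∀ X ∈ 𝒜 i, ∀ Y ∈ 𝒜 i, X ≠ Y → Disjoint X Y) ∧
  (∀ i j, i ≠ j → ∀ X ∈ 𝒜 i, ∀ Y ∈ 𝒜 j, (X ∩ Y).Nonempty)

/-- For every `k ≥ 2` and every `k`-uniform cross intersecting matching of type
`(d_1, …, d_t)`, in the rationals:
`(∑ d_i(d_i−1)) · (1 − (k−2)(k−3)/(2·C(2k,k)) − (k−2)/C(3k,2k) − (k−2)·C(2k,k)/C(3k,k)) ≤ C(2k,k)`. -/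
theorem stmt_3 {α : Type*} [DecidableEq α] (k t : ℕ) (hk : 2 ≤ k)
    (d : Fin t → ℕ) (𝒜 : Fin t → Finset (Finset α))
    (h : IsCrossIntersectingMatching k t d 𝒜) :
    ((∑ i, d i * (d i - 1) : ℕ) : ℚ) *
      (1 - ((k : ℚ) - 2) * ((k : ℚ) - 3) / (2 * Nat.choose (2 * k) k)
        - ((k : ℚ) - 2) / Nat.choose (3 * k) (2 * k)
        - ((k : ℚ) - 2) * Nat.choose (2 * k) k / Nat.choose (3 * k) k)
      ≤ (Nat.choose (2 * k) k : ℚ) := by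
  classical
  obtain ⟨ht, hk2, hd2, hcards, huni, hdisj, hcross⟩ := h
  -- ground set
  set Ω : Finset α := Finset.univ.biUnion (fun i : Fin t => (𝒜 i).biUnion id) with hΩ
  have hsub : ∀ i, ∀ X ∈ 𝒜 i, X ⊆ Ω := by
    intro i X hX a ha
    rw [hΩ, Finset.mem_biUnion]
    exact ⟨i, Finset.mem_univ _, Finset.mem_biUnion.mpr ⟨X, hX, ha⟩⟩
  -- transported families
  set conv : Finset α → Finset ↥Ω := fun X => X.subtype (· ∈ Ω) with hconv
  have hconvmem : ∀ (X : Finset α) (a : ↥Ω), a ∈ conv X ↔ (a : α) ∈ X := by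
    intro X a
    rw [hconv]
    exact Finset.mem_subtype
  have hconvcard : ∀ X : Finset α, X ⊆ Ω → (conv X).card = X.card := by
    intro X hX
    rw [hconv]
    dsimp only
    rw [Finset.card_subtype, Finset.filter_true_of_mem (fun a ha => hX ha)]
  have hconvinj : ∀ X : Finset α, X ⊆ Ω → ∀ Y : Finset α, Y ⊆ Ω →
      conv X = conv Y → X = Y := by
    intro X hX Y hY he
    ext a
    constructor
    · intro ha
      have h1 : (⟨a, hX ha⟩ : ↥Ω) ∈ conv X := (hconvmem X _).mpr ha
      rw [he] at h1
      exact (hconvmem Y _).mp h1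
    · intro ha
      have h1 : (⟨a, hY ha⟩ : ↥Ω) ∈ conv Y := (hconvmem Y _).mpr ha
      rw [← he] at h1
      exact (hconvmem X _).mp h1
  set ℬ : Fin t → Finset (Finset ↥Ω) := fun i => (𝒜 i).image conv with hℬ
  have hcardℬ : ∀ i, (ℬ i).card = d i := by
    intro i
    rw [hℬ]
    dsimp only
    rw [Finset.card_image_of_injOn, hcards i]
    intro X hX Y hY he
    exact hconvinj X (hsub i X hX) Y (hsub i Y hY) he
  have hd2' : ∀ i, 2 ≤ (ℬ i).card := fun i => by rw [hcardℬ i]; exact hd2 i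
  have huni' : ∀ i, ∀ X' ∈ ℬ i, X'.card = k := by
    intro i X' hX'
    rw [hℬ] at hX'
    obtain ⟨X, hX, rfl⟩ := Finset.mem_image.mp hX'
    rw [hconvcard X (hsub i X hX)]
    exact huni i X hX
  have hdisj' : ∀ i, ∀ X' ∈ ℬ i, ∀ Y' ∈ ℬ i, X' ≠ Y' → Disjoint X' Y' := by
    intro i X' hX' Y' hY' hne
    rw [hℬ] at hX' hY'
    obtain ⟨X, hX, rfl⟩ := Finset.mem_image.mp hX'
    obtain ⟨Y, hY, rfl⟩ := Finset.mem_image.mp hY'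
    have hXY : X ≠ Y := fun hc => hne (by rw [hc])
    have hd := hdisj i X hX Y hY hXY
    rw [Finset.disjoint_left]
    intro a ha ha'
    rw [hconvmem] at ha ha'
    exact Finset.disjoint_left.mp hd ha ha'
  have hcross' : ∀ i j, i ≠ j → ∀ X' ∈ ℬ i, ∀ Y' ∈ ℬ j, (X' ∩ Y').Nonempty := by
    intro i j hij X' hX' Y' hY'
    rw [hℬ] at hX' hY'
    obtain ⟨X, hX, rfl⟩ := Finset.mem_image.mp hX'
    obtain ⟨Y, hY, rfl⟩ := Finset.mem_image.mp hY'
    obtain ⟨x, hx⟩ := hcross i j hij X hX Y hY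
    rw [Finset.mem_inter] at hx
    refine ⟨⟨x, hsub i X hX hx.1⟩, ?_⟩
    rw [Finset.mem_inter, hconvmem, hconvmem]
    exact hx
  have hcore := CIM.core k hk ht ℬ hd2' huni' hdisj' hcross'
  -- rewrite the sum
  have hmulsub : ∀ m : ℕ, m * (m - 1) = m * m - m := by
    intro m
    cases m with
    | zero => simp
    | succ n =>
        rw [Nat.succ_sub_one, Nat.mul_succ]
        omega
  have hsum_eq : (∑ i, d i * (d i - 1)) = ∑ i, ((ℬ i).card * (ℬ i).card - (ℬ i).card) := by
    apply Finset.sum_congr rfl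
    intro i _
    rw [hcardℬ i, hmulsub (d i)]
  rw [hsum_eq]
  -- nonnegativity of the two extra error terms
  have hC2pos : (0 : ℚ) < (Nat.choose (2*k) k : ℚ) := by
    exact_mod_cast Nat.choose_pos (by omega)
  have hk2Q : (2 : ℚ) ≤ (k : ℚ) := by exact_mod_cast hk
  have hA : 0 ≤ ((k : ℚ) - 2) * ((k : ℚ) - 3) / (2 * Nat.choose (2 * k) k) := by
    apply div_nonneg _ (by positivity)
    rcases Nat.lt_or_ge k 3 with h3 | h3
    · have hk2' : k = 2 := by omega
      subst hk2'
      norm_num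
    · have h3Q : (3 : ℚ) ≤ (k : ℚ) := by exact_mod_cast h3
      nlinarith
  have hB : 0 ≤ ((k : ℚ) - 2) / Nat.choose (3 * k) (2 * k) := by
    apply div_nonneg (by linarith) (by positivity)
  have hD : (0 : ℚ) ≤ ((∑ i, ((ℬ i).card * (ℬ i).card - (ℬ i).card) : ℕ) : ℚ) := by
    positivity
  calc ((∑ i, ((ℬ i).card * (ℬ i).card - (ℬ i).card) : ℕ) : ℚ) *
      (1 - ((k : ℚ) - 2) * ((k : ℚ) - 3) / (2 * Nat.choose (2 * k) k)
        - ((k : ℚ) - 2) / Nat.choose (3 * k) (2 * k)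
        - ((k : ℚ) - 2) * Nat.choose (2 * k) k / Nat.choose (3 * k) k)
      ≤ ((∑ i, ((ℬ i).card * (ℬ i).card - (ℬ i).card) : ℕ) : ℚ) *
        (1 - ((k : ℚ) - 2) * Nat.choose (2 * k) k / Nat.choose (3 * k) k) := by
        apply mul_le_mul_of_nonneg_left _ hD
        linarith
    _ ≤ (Nat.choose (2 * k) k : ℚ) := hcore
end

section
/- Let 𝒜_1, …, 𝒜_t be a k-uniform cross intersecting matching on a finite ground set A, and let π be a linear order on A. Say that π is of type i if there exist X, X' ∈ 𝒜_i such that every element of X is π-smaller than every element of X'. Then π is of type i for at most one index i ∈ {1, …, t}. -/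
theorem IsCrossIntersectingMatching.inter_nonempty {α : Type*} [DecidableEq α] {k t : ℕ}
    {d : Fin t → ℕ} {𝒜 : Fin t → Finset (Finset α)} (h : IsCrossIntersectingMatching k t d 𝒜)
    {i j : Fin t} (hij : i ≠ j) {X Y : Finset α} (hX : X ∈ 𝒜 i) (hY : Y ∈ 𝒜 j) :
    (X ∩ Y).Nonempty :=
  h.2.2.2.2.2.2 i j hij X hX Y hY

theorem Finset.disjoint_of_forall_lt_of_inter_nonempty {α : Type*} [Preorder α] [DecidableEq α]
    {X X' Y Y' : Finset α} (hX : ∀ x ∈ X, ∀ x' ∈ X', x < x') (hY : ∀ y ∈ Y, ∀ y' ∈ Y', y < y')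
    (hXY' : (X ∩ Y').Nonempty) : Disjoint X' Y := by
  obtain ⟨a, ha⟩ := hXY'
  rw [Finset.mem_inter] at ha
  exact Finset.disjoint_left.2 fun b hbX' hbY => lt_asymm (hX a ha.1 b hbX') (hY b hbY a ha.2)

theorem stmt_4_general {α : Type*} [LinearOrder α] (k t : ℕ)
    (d : Fin t → ℕ) (𝒜 : Fin t → Finset (Finset α))
    (h : IsCrossIntersectingMatching k t d 𝒜)
    (i j : Fin t)
    (hi : ∃ X ∈ 𝒜 i, ∃ X' ∈ 𝒜 i, ∀ x ∈ X, ∀ x' ∈ X', x < x')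
    (hj : ∃ Y ∈ 𝒜 j, ∃ Y' ∈ 𝒜 j, ∀ y ∈ Y, ∀ y' ∈ Y', y < y') :
    i = j := by
  by_contra hij
  obtain ⟨X, hX, X', hX', hXX'⟩ := hi
  obtain ⟨Y, hY, Y', hY', hYY'⟩ := hj
  have hdisj := Finset.disjoint_of_forall_lt_of_inter_nonempty hXX' hYY'
    (h.inter_nonempty hij hX hY')
  exact Finset.not_disjoint_iff_nonempty_inter.2 (h.inter_nonempty hij hX' hY) hdisj

/-- A linear order on the ground set is of type `i` if some `X, X' ∈ 𝒜 i` satisfy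
`X < X'` elementwise; every linear order has at most one type. -/
theorem stmt_4 {α : Type*} [Fintype α] [LinearOrder α] (k t : ℕ)
    (d : Fin t → ℕ) (𝒜 : Fin t → Finset (Finset α))
    (h : IsCrossIntersectingMatching k t d 𝒜)
    (i j : Fin t)
    (hi : ∃ X ∈ 𝒜 i, ∃ X' ∈ 𝒜 i, ∀ x ∈ X, ∀ x' ∈ X', x < x')
    (hj : ∃ Y ∈ 𝒜 j, ∃ Y' ∈ 𝒜 j, ∀ y ∈ Y, ∀ y' ∈ Y', y < y') :
    i = j :=
  stmt_4_general k t d 𝒜 h i j hi hj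
end

section
/- Let 𝒮 be a 2-semi-intersecting family with parameters n and k and base sets A and B. If some element a ∈ A is contained in at least k + 1 members of 𝒮, then every element y ∈ B is contained in at most k² members of 𝒮. -/
/-- If some `a ∈ A` lies in at least `k + 1` members of a 2-semi-intersecting family `𝒮`,
then every `y ∈ B` lies in at most `k²` members of `𝒮`. -/
theorem stmt_6 {α : Type*} [DecidableEq α] (n k : ℕ)
    (A B : Finset α) (𝒮 : Finset (Finset α))
    (h : IsSemiIntersecting2 n k A B 𝒮)
    (a : α) (ha : a ∈ A)
    (hdeg : k + 1 ≤ (𝒮.filter (fun S => a ∈ S)).card) :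
    ∀ y ∈ B, (𝒮.filter (fun S => y ∈ S)).card ≤ k ^ 2 := by
  classical
  obtain ⟨hdisj, hAn, hBn, hsub, hcards, hxor⟩ := h
  intro y hy
  set 𝒯 := 𝒮.filter (fun S => a ∈ S) with h𝒯def
  set 𝒟 := 𝒮.filter (fun S => y ∈ S) with h𝒟def
  have hTmem : ∀ T ∈ 𝒯, T ∈ 𝒮 ∧ a ∈ T := by
    intro T hT; simpa [h𝒯def] using hT
  have hDmem : ∀ S ∈ 𝒟, S ∈ 𝒮 ∧ y ∈ S := by
    intro S hS; simpa [h𝒟def] using hS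
  -- pairwise disjointness of B-parts of 𝒯
  have hTB : ∀ T₁ ∈ 𝒯, ∀ T₂ ∈ 𝒯, T₁ ≠ T₂ → T₁ ∩ T₂ ∩ B = ∅ := by
    intro T₁ h₁ T₂ h₂ hne
    obtain ⟨h₁S, h₁a⟩ := hTmem T₁ h₁
    obtain ⟨h₂S, h₂a⟩ := hTmem T₂ h₂
    have hA : T₁ ∩ T₂ ∩ A ≠ ∅ :=
      Finset.ne_empty_of_mem (a := a) (by simp [h₁a, h₂a, ha])
    rcases hxor T₁ h₁S T₂ h₂S hne with ⟨hh, _⟩ | ⟨hh, _⟩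
    · exact absurd hh hA
    · exact hh
  -- pairwise disjointness of A-parts of 𝒟
  have hDA : ∀ S₁ ∈ 𝒟, ∀ S₂ ∈ 𝒟, S₁ ≠ S₂ → S₁ ∩ S₂ ∩ A = ∅ := by
    intro S₁ h₁ S₂ h₂ hne
    obtain ⟨h₁S, h₁y⟩ := hDmem S₁ h₁
    obtain ⟨h₂S, h₂y⟩ := hDmem S₂ h₂
    have hB : S₁ ∩ S₂ ∩ B ≠ ∅ :=
      Finset.ne_empty_of_mem (a := y) (by simp [h₁y, h₂y, hy])
    rcases hxor S₁ h₁S S₂ h₂S hne with ⟨hh, _⟩ | ⟨hh, _⟩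
    · exact hh
    · exact absurd hh hB
  -- at most one member contains both a and y
  have hDT1 : (𝒟 ∩ 𝒯).card ≤ 1 := by
    rw [Finset.card_le_one]
    intro S₁ h₁ S₂ h₂
    by_contra hne
    obtain ⟨h₁D, h₁T⟩ := Finset.mem_inter.mp h₁
    obtain ⟨h₂D, h₂T⟩ := Finset.mem_inter.mp h₂
    have hAe := hDA S₁ h₁D S₂ h₂D hne
    have hBe := hTB S₁ h₁T S₂ h₂T hne
    rcases hxor S₁ (hDmem S₁ h₁D).1 S₂ (hDmem S₂ h₂D).1 hne with ⟨_, hh⟩ | ⟨_, hh⟩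
    · exact hh hBe
    · exact hh hAe
  rcases Finset.eq_empty_or_nonempty 𝒟 with hD | ⟨S₀, hS₀⟩
  · simp [hD]
  -- k ≥ 1
  have hk1 : 1 ≤ k := by
    obtain ⟨hS₀S, hS₀y⟩ := hDmem S₀ hS₀
    have hmem : y ∈ S₀ ∩ B := Finset.mem_inter.mpr ⟨hS₀y, hy⟩
    have hpos := Finset.card_pos.mpr ⟨y, hmem⟩
    rw [(hcards S₀ hS₀S).2] at hpos
    omega
  obtain ⟨j, rfl⟩ : ∃ j, k = j + 1 := ⟨k - 1, by omega⟩
  set m := 𝒯.card with hmdef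
  -- lower bound: every S ∈ 𝒟 \ 𝒯 meets at least m - (j+1) members of 𝒯 in A
  have hlow : ∀ S ∈ 𝒟 \ 𝒯,
      m - (j + 1) ≤ (𝒯.filter fun T => (S ∩ T ∩ A).Nonempty).card := by
    intro S hS
    obtain ⟨hS𝒟, hS𝒯⟩ := Finset.mem_sdiff.mp hS
    obtain ⟨hSS, hSy⟩ := hDmem S hS𝒟
    have haS : a ∉ S := fun hmem => hS𝒯 (by simp [h𝒯def, hSS, hmem])
    have hkey : ∀ T ∈ 𝒯.filter fun T => ¬(S ∩ T ∩ A).Nonempty,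
        (S ∩ T ∩ B).Nonempty := by
      intro T hT
      obtain ⟨hT𝒯, hTA⟩ := Finset.mem_filter.mp hT
      obtain ⟨hTS, hTa⟩ := hTmem T hT𝒯
      have hSne : S ≠ T := fun hh => haS (hh ▸ hTa)
      have hAe : S ∩ T ∩ A = ∅ := Finset.not_nonempty_iff_eq_empty.mp hTA
      rcases hxor S hSS T hTS hSne with ⟨_, hh⟩ | ⟨_, hh⟩
      · exact Finset.nonempty_iff_ne_empty.mpr hh
      · exact absurd hAe hh
    have hneg : (𝒯.filter fun T => ¬(S ∩ T ∩ A).Nonempty).card ≤ j + 1 := by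
      rw [← (hcards S hSS).2]
      apply Finset.card_le_card_of_injOn
        (fun T => if hh : (S ∩ T ∩ B).Nonempty then hh.choose else a)
      · intro T hT
        have hh := hkey T hT
        simp only [Finset.mem_coe, dif_pos hh]
        have hspec := hh.choose_spec
        simp only [Finset.mem_inter] at hspec ⊢
        exact ⟨hspec.1.1, hspec.2⟩
      · intro T₁ hT₁ T₂ hT₂ heq
        by_contra hne
        have h₁ := hkey T₁ (Finset.mem_coe.mp hT₁)
        have h₂ := hkey T₂ (Finset.mem_coe.mp hT₂)
        dsimp only at heq
        rw [dif_pos h₁, dif_pos h₂] at heq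
        have hs₁ := h₁.choose_spec
        have hs₂ := h₂.choose_spec
        rw [heq] at hs₁
        simp only [Finset.mem_inter] at hs₁ hs₂
        have hBe := hTB T₁ (Finset.mem_filter.mp (Finset.mem_coe.mp hT₁)).1
          T₂ (Finset.mem_filter.mp (Finset.mem_coe.mp hT₂)).1 hne
        exact Finset.ne_empty_of_mem
          (a := h₂.choose) (Finset.mem_inter.mpr
            ⟨Finset.mem_inter.mpr ⟨hs₁.1.2, hs₂.1.2⟩, hs₂.2⟩) hBe
    have hsplit := Finset.card_filter_add_card_filter_not
      (s := 𝒯) (p := fun T => (S ∩ T ∩ A).Nonempty)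
    omega
  -- upper bound: every T ∈ 𝒯 meets at most j members of 𝒟 \ 𝒯 in A
  have hup : ∀ T ∈ 𝒯,
      ((𝒟 \ 𝒯).filter fun S => (S ∩ T ∩ A).Nonempty).card ≤ j := by
    intro T hT
    obtain ⟨hTS, hTa⟩ := hTmem T hT
    have hTAcard : ((T ∩ A).erase a).card = j := by
      rw [Finset.card_erase_of_mem (Finset.mem_inter.mpr ⟨hTa, ha⟩),
        (hcards T hTS).1]
      omega
    rw [← hTAcard]
    have hkey : ∀ S ∈ (𝒟 \ 𝒯).filter fun S => (S ∩ T ∩ A).Nonempty,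
        (S ∩ T ∩ A).Nonempty ∧ a ∉ S ∧ S ∈ 𝒟 := by
      intro S hS
      obtain ⟨hS', hSA⟩ := Finset.mem_filter.mp hS
      obtain ⟨hS𝒟, hS𝒯⟩ := Finset.mem_sdiff.mp hS'
      exact ⟨hSA, fun hmem => hS𝒯 (by simp [h𝒯def, (hDmem S hS𝒟).1, hmem]), hS𝒟⟩
    apply Finset.card_le_card_of_injOn
      (fun S => if hh : (S ∩ T ∩ A).Nonempty then hh.choose else a)
    · intro S hS
      obtain ⟨hh, haS, _⟩ := hkey S hS
      simp only [Finset.mem_coe, dif_pos hh]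
      have hspec := hh.choose_spec
      simp only [Finset.mem_inter] at hspec
      refine Finset.mem_erase.mpr ⟨fun heq => haS (heq ▸ hspec.1.1), ?_⟩
      exact Finset.mem_inter.mpr ⟨hspec.1.2, hspec.2⟩
    · intro S₁ hS₁ S₂ hS₂ heq
      by_contra hne
      obtain ⟨h₁, _, h₁D⟩ := hkey S₁ (Finset.mem_coe.mp hS₁)
      obtain ⟨h₂, _, h₂D⟩ := hkey S₂ (Finset.mem_coe.mp hS₂)
      dsimp only at heq
      rw [dif_pos h₁, dif_pos h₂] at heq
      have hs₁ := h₁.choose_spec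
      have hs₂ := h₂.choose_spec
      rw [heq] at hs₁
      simp only [Finset.mem_inter] at hs₁ hs₂
      have hAe := hDA S₁ h₁D S₂ h₂D hne
      exact Finset.ne_empty_of_mem
        (a := h₂.choose) (Finset.mem_inter.mpr
          ⟨Finset.mem_inter.mpr ⟨hs₁.1.1, hs₂.1.1⟩, hs₂.2⟩) hAe
  -- double counting
  have hswap : ∑ S ∈ 𝒟 \ 𝒯, (𝒯.filter fun T => (S ∩ T ∩ A).Nonempty).card
      = ∑ T ∈ 𝒯, ((𝒟 \ 𝒯).filter fun S => (S ∩ T ∩ A).Nonempty).card := by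
    simp_rw [Finset.card_filter]
    exact Finset.sum_comm
  have h1 : (𝒟 \ 𝒯).card * (m - (j + 1))
      ≤ ∑ S ∈ 𝒟 \ 𝒯, (𝒯.filter fun T => (S ∩ T ∩ A).Nonempty).card := by
    simpa using Finset.card_nsmul_le_sum (𝒟 \ 𝒯) _ _ hlow
  have h2 : ∑ T ∈ 𝒯, ((𝒟 \ 𝒯).filter fun S => (S ∩ T ∩ A).Nonempty).card
      ≤ m * j := by
    simpa using Finset.sum_le_card_nsmul 𝒯 _ _ hup
  have hmain : (𝒟 \ 𝒯).card * (m - (j + 1)) ≤ m * j := by omega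
  have hm : j + 2 ≤ m := hdeg
  -- arithmetic
  have hd : (𝒟 \ 𝒯).card ≤ j ^ 2 + 2 * j := by
    set d := (𝒟 \ 𝒯).card
    obtain ⟨t, ht, hmt⟩ : ∃ t, 1 ≤ t ∧ m = j + 1 + t := ⟨m - (j + 1), by omega, by omega⟩
    have hmt' : m - (j + 1) = t := by omega
    rw [hmt', hmt] at hmain
    nlinarith [hmain, ht]
  have hfinal := Finset.card_sdiff_add_card_inter 𝒟 𝒯
  have : (j + 1) ^ 2 = j ^ 2 + 2 * j + 1 := by ring
  omega
end

section
/- Let ℓ ≥ 2 and let A_1, …, A_ℓ be pairwise disjoint finite nonempty sets with union V. Let 𝒮 be a family of subsets of V such that |S ∩ A_i| = 1 for every S ∈ 𝒮 and every i, and for any two distinct S, T ∈ 𝒮 the number of indices i with S ∩ T ∩ A_i = ∅ is odd. Then |𝒮| ≤ |V| − ℓ + 1. -/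
/-- `𝒮` is a family of subsets of `V = A 0 ∪ … ∪ A (ℓ-1)` such that `|S ∩ A i| = 1` for all
`S ∈ 𝒮` and all `i`, and for distinct `S, T ∈ 𝒮` the number of indices `i` with
`S ∩ T ∩ A i = ∅` is odd. -/
def IsXorSystem {α : Type*} [DecidableEq α] (ℓ : ℕ)
    (A : Fin ℓ → Finset α) (𝒮 : Finset (Finset α)) : Prop :=
  (∀ S ∈ 𝒮, S ⊆ Finset.univ.biUnion A) ∧
  (∀ S ∈ 𝒮, ∀ i, (S ∩ A i).card = 1) ∧
  (∀ S ∈ 𝒮, ∀ T ∈ 𝒮, S ≠ T →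
    Odd ((Finset.univ.filter (fun i => S ∩ T ∩ A i = ∅)).card))

/-!
Work in `𝔽₂^V`. Fix `S₀ ∈ 𝒮`. Each block `A i` meets every member of `𝒮` in exactly one point,
so `|S ∩ T| = ℓ - #{i | S ∩ T ∩ A i = ∅}`, and the oddness hypothesis says `|S ∩ T| ≡ ℓ + 1`
for `S ≠ T`, while `|S| = ℓ`. Hence the vectors `w_S = 1_S + 1_{S₀}`, `S ≠ S₀`, satisfy
`⟨w_S, 1_T⟩ = δ_{ST}`. A combination `u` of them has zero sum on every block; if it vanishes on
`V \ S₀` it therefore vanishes at the single point of `S₀` in each block, so `u = 0` and all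
coefficients vanish. Thus the `w_S` stay independent after restriction to `V \ S₀`, giving
`|𝒮| - 1 ≤ |V| - ℓ`.
-/

open Finset Function

section Blocks

variable {α ι : Type*} [DecidableEq α] [Fintype ι] {A : ι → Finset α}

theorem Finset.card_eq_sum_card_inter_of_subset_biUnion (hA : Pairwise (Disjoint on A))
    {s : Finset α} (hs : s ⊆ univ.biUnion A) : #s = ∑ i, #(s ∩ A i) := by
  nth_rw 1 [← inter_eq_left.2 hs]
  rw [inter_biUnion, card_biUnion fun i _ j _ hij =>
    (hA hij).mono inter_subset_right inter_subset_right]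

theorem Finset.card_eq_card_of_forall_card_inter_eq_one (hA : Pairwise (Disjoint on A))
    {s : Finset α} (hs : s ⊆ univ.biUnion A) (hsA : ∀ i, #(s ∩ A i) = 1) :
    #s = Fintype.card ι := by
  simp [card_eq_sum_card_inter_of_subset_biUnion hA hs, hsA]

theorem Finset.card_inter_add_card_filter_eq_card (hA : Pairwise (Disjoint on A))
    {s : Finset α} (hs : s ⊆ univ.biUnion A) (hsA : ∀ i, #(s ∩ A i) = 1) (t : Finset α) :
    #(s ∩ t) + #{i | s ∩ t ∩ A i = ∅} = Fintype.card ι := by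
  have hle : ∀ i, #(s ∩ t ∩ A i) ≤ 1 := fun i =>
    hsA i ▸ card_le_card (inter_subset_inter_right inter_subset_left)
  rw [card_eq_sum_card_inter_of_subset_biUnion hA (inter_subset_left.trans hs), card_filter,
    ← sum_add_distrib, ← card_univ, card_eq_sum_ones]
  refine sum_congr rfl fun i _ => ?_
  split_ifs with h
  · simp [h]
  · have := card_pos.2 (nonempty_iff_ne_empty.2 h)
    have := hle i
    omega

theorem forall_mem_biUnion_eq_zero_of_sum_eq_zero {M : Type*} [AddCommMonoid M]
    {s : Finset α} (hsA : ∀ i, #(s ∩ A i) ≤ 1) {u : α → M}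
    (hsum : ∀ i, ∑ x ∈ A i, u x = 0) (hu : ∀ x ∈ univ.biUnion A \ s, u x = 0) :
    ∀ x ∈ univ.biUnion A, u x = 0 := by
  intro x hx
  by_cases hxs : x ∈ s
  · obtain ⟨i, -, hxi⟩ := mem_biUnion.1 hx
    rw [← hsum i, ← add_sum_erase _ _ hxi, sum_eq_zero, add_zero]
    intro y hy
    obtain ⟨hyx, hyi⟩ := mem_erase.1 hy
    refine hu y (mem_sdiff.2 ⟨mem_biUnion.2 ⟨i, mem_univ i, hyi⟩, fun hys => hyx ?_⟩)
    exact card_le_one.1 (hsA i) y (mem_inter.2 ⟨hys, hyi⟩) x (mem_inter.2 ⟨hxs, hxi⟩)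
  · exact hu x (mem_sdiff.2 ⟨hx, hxs⟩)

end Blocks

def Finset.charVec {α : Type*} [DecidableEq α] (s : Finset α) (x : α) : ZMod 2 :=
  if x ∈ s then 1 else 0

theorem Finset.sum_charVec {α : Type*} [DecidableEq α] (s t : Finset α) :
    ∑ x ∈ t, s.charVec x = #(s ∩ t) := by
  simp only [charVec, sum_boole, filter_mem_eq_inter, inter_comm]

namespace IsXorSystem

variable {α : Type*} [DecidableEq α] {ℓ : ℕ} {A : Fin ℓ → Finset α} {𝒮 : Finset (Finset α)}

theorem card_eq (hA : Pairwise (Disjoint on A)) (h : IsXorSystem ℓ A 𝒮) {S : Finset α}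
    (hS : S ∈ 𝒮) : #S = ℓ := by
  simpa using card_eq_card_of_forall_card_inter_eq_one hA (h.1 S hS) (h.2.1 S hS)

theorem cast_card_inter (hA : Pairwise (Disjoint on A)) (h : IsXorSystem ℓ A 𝒮)
    {S T : Finset α} (hS : S ∈ 𝒮) (hT : T ∈ 𝒮) :
    (#(S ∩ T) : ZMod 2) = ℓ + 1 + if S = T then 1 else 0 := by
  split_ifs with hST
  · subst hST
    rw [inter_self, h.card_eq hA hS]
    grind
  · have hsum := congrArg (Nat.cast : ℕ → ZMod 2)
      (card_inter_add_card_filter_eq_card hA (h.1 S hS) (h.2.1 S hS) T)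
    rw [Nat.cast_add, Fintype.card_fin, ZMod.natCast_eq_one_iff_odd.2 (h.2.2 S hS T hT hST)]
      at hsum
    grind

theorem linearIndependent_restrict_sdiff (hA : Pairwise (Disjoint on A))
    (h : IsXorSystem ℓ A 𝒮) {S₀ : Finset α} (hS₀ : S₀ ∈ 𝒮) :
    LinearIndependent (ZMod 2) fun (S : 𝒮.erase S₀) (x : ↥(univ.biUnion A \ S₀)) =>
      (S : Finset α).charVec x + S₀.charVec x := by
  rw [Fintype.linearIndependent_iff]
  intro g hg T
  set u : α → ZMod 2 := fun x =>
    ∑ S : 𝒮.erase S₀, g S * ((S : Finset α).charVec x + S₀.charVec x)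
  have hsum : ∀ t, ∑ x ∈ t, u x =
      ∑ S : 𝒮.erase S₀, g S * (#((S : Finset α) ∩ t) + #(S₀ ∩ t)) := by
    intro t
    simp only [u]
    rw [sum_comm]
    simp only [← mul_sum, sum_add_distrib, sum_charVec]
  have hD : ∀ x ∈ univ.biUnion A \ S₀, u x = 0 := fun x hx => by
    simpa [u] using congrFun hg ⟨x, hx⟩
  have hV : ∀ x ∈ univ.biUnion A, u x = 0 := by
    refine forall_mem_biUnion_eq_zero_of_sum_eq_zero (fun i => (h.2.1 S₀ hS₀ i).le) ?_ hD
    intro i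
    rw [hsum]
    refine sum_eq_zero fun S _ => ?_
    rw [h.2.1 S (mem_of_mem_erase S.2), h.2.1 S₀ hS₀]
    grind
  have hpair : ∀ S : 𝒮.erase S₀,
      (#((S : Finset α) ∩ T) + #(S₀ ∩ T) : ZMod 2) = if S = T then 1 else 0 := by
    intro S
    rw [h.cast_card_inter hA (mem_of_mem_erase S.2) (mem_of_mem_erase T.2),
      h.cast_card_inter hA hS₀ (mem_of_mem_erase T.2), if_neg (ne_of_mem_erase T.2).symm]
    simp only [Subtype.coe_inj]
    grind
  calc g T = ∑ S : 𝒮.erase S₀, g S * (#((S : Finset α) ∩ T) + #(S₀ ∩ T)) := by simp [hpair]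
    _ = ∑ x ∈ T, u x := (hsum T).symm
    _ = 0 := sum_eq_zero fun x hx => hV x (h.1 T (mem_of_mem_erase T.2) hx)

end IsXorSystem

theorem stmt_7_general {α : Type*} [DecidableEq α] (ℓ : ℕ)
    (A : Fin ℓ → Finset α)
    (hdisj : ∀ i j, i ≠ j → Disjoint (A i) (A j))
    (𝒮 : Finset (Finset α)) (hS : IsXorSystem ℓ A 𝒮) :
    𝒮.card ≤ (Finset.univ.biUnion A).card - ℓ + 1 := by
  obtain rfl | ⟨S₀, hS₀⟩ := 𝒮.eq_empty_or_nonempty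
  · simp
  have hA : Pairwise (Disjoint on A) := hdisj
  have hcard := (hS.linearIndependent_restrict_sdiff hA hS₀).fintype_card_le_finrank
  rw [Module.finrank_fintype_fun_eq_card, Fintype.card_coe, Fintype.card_coe,
    card_erase_of_mem hS₀, card_sdiff_of_subset (hS.1 S₀ hS₀), hS.card_eq hA hS₀] at hcard
  have := card_pos.2 ⟨S₀, hS₀⟩
  omega

/-- Clique-number upper bound for the xor-product of complete graphs:
`|𝒮| ≤ |V| − ℓ + 1`. -/
theorem stmt_7 {α : Type*} [DecidableEq α] (ℓ : ℕ) (hℓ : 2 ≤ ℓ)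
    (A : Fin ℓ → Finset α)
    (hdisj : ∀ i j, i ≠ j → Disjoint (A i) (A j))
    (hne : ∀ i, (A i).Nonempty)
    (𝒮 : Finset (Finset α)) (hS : IsXorSystem ℓ A 𝒮) :
    𝒮.card ≤ (Finset.univ.biUnion A).card - ℓ + 1 :=
  stmt_7_general ℓ A hdisj 𝒮 hS
end

section
/- Let ℓ ≥ 3, let A_1, …, A_ℓ be pairwise disjoint finite sets with union V, and let ℬ = {B_1, …, B_ℓ} be an ℓ-core with U(ℬ) = B_1 ∪ … ∪ B_ℓ. Define 𝒮(ℬ) := { B_i ∪ {x} : i ∈ {1,…,ℓ}, x ∈ A_i \ U(ℬ) }. Then |S ∩ A_i| = 1 for every S ∈ 𝒮(ℬ) and every i; for any two distinct S, T ∈ 𝒮(ℬ) the number of indices i with S ∩ T ∩ A_i = ∅ is odd; and |𝒮(ℬ)| = |V| − |U(ℬ)|. -/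
/-!
Each `B i` meets every part except `A i` in exactly one point, so by counting it lies inside
`V = ⋃ A j`. Hence for any `D ⊆ B i` the parts missed by `D` and the points of `D` together
number `ℓ`. Two members `B i ∪ {x}`, `B j ∪ {y}` of `𝒮(ℬ)` (with `x, y ∉ U(ℬ)`) intersect in
`B i ∩ B j`, whose size has parity different from `ℓ`, so the number of parts it misses is odd.
Finally `B i ∪ {x}` determines `x` as its only point outside `U(ℬ)`, so `|𝒮(ℬ)| = |V \ U(ℬ)|`.
-/

/-- Given pairwise disjoint parts `A 0, …, A (ℓ-1)`, an `ℓ`-core is a family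
`B 0, …, B (ℓ-1)` such that each `B i` has `ℓ − 1` elements, `B i ∩ A i = ∅`,
`|B i ∩ A j| = 1` for `j ≠ i`, and `|B i ∩ B j| ≢ ℓ (mod 2)` for all `i, j`. -/
def IsCore {α : Type*} [DecidableEq α] (ℓ : ℕ)
    (A B : Fin ℓ → Finset α) : Prop :=
  (∀ i, (B i).card = ℓ - 1) ∧
  (∀ i, B i ∩ A i = ∅) ∧
  (∀ i j, i ≠ j → (B i ∩ A j).card = 1) ∧
  (∀ i j, ¬ ((B i ∩ B j).card ≡ ℓ [MOD 2]))

open Finset Function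

namespace Finset

variable {α : Type*} [DecidableEq α]

theorem insert_sdiff_of_subset_of_notMem {x : α} {s U : Finset α} (hs : s ⊆ U) (hx : x ∉ U) :
    insert x s \ U = {x} := by
  rw [insert_sdiff_of_notMem _ hx, sdiff_eq_empty_iff_subset.2 hs]
  rfl

theorem insert_inter_insert_of_ne {x y : α} {s t : Finset α} (hxy : x ≠ y) (hx : x ∉ t)
    (hy : y ∉ s) :
    insert x s ∩ insert y t = s ∩ t := by
  rw [insert_inter_of_notMem (by simp [hxy, hx]), inter_insert_of_notMem hy]

end Finset

section DisjointParts

variable {α ι : Type*} [DecidableEq α] [Fintype ι] {A : ι → Finset α}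

theorem card_inter_biUnion_eq_sum (hA : Pairwise (Disjoint on A)) (D : Finset α) :
    #(D ∩ univ.biUnion A) = ∑ k, #(D ∩ A k) := by
  rw [inter_biUnion, card_biUnion]
  exact fun k _ m _ hkm => (hA hkm).mono inter_subset_right inter_subset_right

theorem subset_biUnion_of_card_le_sum (hA : Pairwise (Disjoint on A)) {D : Finset α}
    (h : #D ≤ ∑ k, #(D ∩ A k)) : D ⊆ univ.biUnion A := by
  rw [← card_inter_biUnion_eq_sum hA] at h
  exact inter_eq_left.1 (eq_of_subset_of_card_le inter_subset_left h)

theorem card_filter_inter_eq_empty_add_card (hA : Pairwise (Disjoint on A)) {D : Finset α}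
    (hD : D ⊆ univ.biUnion A) (hle : ∀ k, #(D ∩ A k) ≤ 1) :
    #{k | D ∩ A k = ∅} + #D = Fintype.card ι := by
  have hsum : #D = #{k | ¬ D ∩ A k = ∅} := by
    conv_lhs => rw [← inter_eq_left.2 hD]
    rw [card_inter_biUnion_eq_sum hA, card_filter]
    refine sum_congr rfl fun k _ => ?_
    split_ifs with hk
    · simp [hk]
    · exact le_antisymm (hle k) (card_pos.2 (nonempty_iff_ne_empty.2 hk))
  rw [hsum, card_filter_add_card_filter_not, card_univ]

theorem card_biUnion_sdiff_eq_sum (hA : Pairwise (Disjoint on A)) (U : Finset α) :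
    #(univ.biUnion A \ U) = ∑ i, #(A i \ U) := by
  have : univ.biUnion A \ U = univ.biUnion fun i => A i \ U := by
    ext z
    simp only [mem_sdiff, mem_biUnion, mem_univ, true_and]
    tauto
  rw [this, card_biUnion]
  exact fun i _ j _ hij => (hA hij).mono sdiff_subset sdiff_subset

theorem card_biUnion_image_insert (hA : Pairwise (Disjoint on A)) {B : ι → Finset α}
    {U : Finset α} (hBU : ∀ i, B i ⊆ U) :
    #(univ.biUnion fun i => (A i \ U).image fun x => insert x (B i)) = #(univ.biUnion A \ U) := by
  have hrecover {i j x y} (hx : x ∈ A i \ U) (hy : y ∈ A j \ U)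
      (hxy : insert x (B i) = insert y (B j)) : x = y := by
    have := congrArg (· \ U) hxy
    simp only [insert_sdiff_of_subset_of_notMem (hBU _) (mem_sdiff.1 hx).2,
      insert_sdiff_of_subset_of_notMem (hBU _) (mem_sdiff.1 hy).2] at this
    exact singleton_injective this
  rw [card_biUnion_sdiff_eq_sum hA, card_biUnion]
  · exact sum_congr rfl fun i _ => card_image_of_injOn fun x hx y hy => hrecover hx hy
  · intro i _ j _ hij
    refine disjoint_left.2 fun S hSi hSj => ?_
    obtain ⟨x, hx, rfl⟩ := mem_image.1 hSi
    obtain ⟨y, hy, hxy⟩ := mem_image.1 hSj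
    obtain rfl := hrecover hx hy hxy.symm
    exact disjoint_left.1 (hA hij) (mem_sdiff.1 hx).1 (mem_sdiff.1 hy).1

end DisjointParts

namespace IsCore

variable {α : Type*} [DecidableEq α] {ℓ : ℕ} {A B : Fin ℓ → Finset α}

theorem card_inter_le_one (hB : IsCore ℓ A B) (i k : Fin ℓ) : #(B i ∩ A k) ≤ 1 := by
  rcases eq_or_ne i k with rfl | hik
  · simp [hB.2.1 i]
  · exact (hB.2.2.1 i k hik).le

theorem subset_biUnion (hA : Pairwise (Disjoint on A)) (hB : IsCore ℓ A B) (i : Fin ℓ) :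
    B i ⊆ univ.biUnion A := by
  refine subset_biUnion_of_card_le_sum hA (le_of_eq ?_)
  rw [hB.1 i, ← sum_erase univ (f := fun k => #(B i ∩ A k)) (a := i) (by simp [hB.2.1 i]),
    sum_congr rfl fun k hk => hB.2.2.1 i k (ne_of_mem_erase hk).symm]
  simp

theorem odd_card_filter_inter_eq_empty (hA : Pairwise (Disjoint on A)) (hB : IsCore ℓ A B)
    (i j : Fin ℓ) : Odd #{k | B i ∩ B j ∩ A k = ∅} := by
  have hsum := card_filter_inter_eq_empty_add_card hA (D := B i ∩ B j)
    (inter_subset_left.trans (hB.subset_biUnion hA i))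
    fun k => (card_le_card (inter_subset_inter_right inter_subset_left)).trans
      (hB.card_inter_le_one i k)
  have hpar := hB.2.2.2 i j
  rw [Fintype.card_fin] at hsum
  rw [Nat.ModEq] at hpar
  rw [Nat.odd_iff]
  omega

theorem card_insert_inter (hA : Pairwise (Disjoint on A)) (hB : IsCore ℓ A B) {i : Fin ℓ}
    {x : α} (hx : x ∈ A i) (k : Fin ℓ) : #(insert x (B i) ∩ A k) = 1 := by
  rcases eq_or_ne i k with rfl | hik
  · rw [insert_inter_of_mem hx, hB.2.1 i]
    rfl
  · rw [insert_inter_of_notMem (disjoint_left.1 (hA hik) hx)]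
    exact hB.2.2.1 i k hik

end IsCore

theorem stmt_10_general {α : Type*} [DecidableEq α] (ℓ : ℕ)
    (A B : Fin ℓ → Finset α)
    (hdisj : ∀ i j, i ≠ j → Disjoint (A i) (A j))
    (hcore : IsCore ℓ A B)
    (U : Finset α) (hU : U = Finset.univ.biUnion B)
    (𝒮 : Finset (Finset α))
    (h𝒮 : 𝒮 = Finset.univ.biUnion (fun i => (A i \ U).image (fun x => insert x (B i)))) :
    (∀ S ∈ 𝒮, ∀ i, (S ∩ A i).card = 1) ∧
    (∀ S ∈ 𝒮, ∀ T ∈ 𝒮, S ≠ T →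
      Odd ((Finset.univ.filter (fun i => S ∩ T ∩ A i = ∅)).card)) ∧
    𝒮.card = (Finset.univ.biUnion A).card - U.card := by
  have hA : Pairwise (Disjoint on A) := hdisj
  have hBU : ∀ i, B i ⊆ U := fun i => hU ▸ subset_biUnion_of_mem B (mem_univ i)
  have hmem : ∀ S ∈ 𝒮, ∃ i x, x ∈ A i ∧ x ∉ U ∧ insert x (B i) = S := by
    simp only [h𝒮, mem_biUnion, mem_univ, true_and, mem_image, mem_sdiff]
    rintro S ⟨i, x, ⟨hx, hxU⟩, rfl⟩
    exact ⟨i, x, hx, hxU, rfl⟩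
  refine ⟨?_, ?_, ?_⟩
  · rintro S hS k
    obtain ⟨i, x, hx, -, rfl⟩ := hmem S hS
    exact hcore.card_insert_inter hA hx k
  · rintro S hS T hT hST
    obtain ⟨i, x, hxA, hxU, rfl⟩ := hmem S hS
    obtain ⟨j, y, hyA, hyU, rfl⟩ := hmem T hT
    have hxy : x ≠ y := by
      rintro rfl
      obtain rfl : i = j := by_contra fun hij => disjoint_left.1 (hA hij) hxA hyA
      exact hST rfl
    rw [insert_inter_insert_of_ne hxy (fun h => hxU (hBU j h)) (fun h => hyU (hBU i h))]
    exact hcore.odd_card_filter_inter_eq_empty hA i j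
  · have hUV : U ⊆ univ.biUnion A := hU ▸ biUnion_subset.2 fun i _ => hcore.subset_biUnion hA i
    rw [h𝒮, card_biUnion_image_insert hA hBU, card_sdiff_of_subset hUV]

/-- The family `𝒮(ℬ) = { B i ∪ {x} : x ∈ A i \ U(ℬ) }` generated by an `ℓ`-core is an
`ℓ`-semi-intersecting family with `k = 1` of size `|V| − |U(ℬ)|`. -/
theorem stmt_10 {α : Type*} [DecidableEq α] (ℓ : ℕ) (hℓ : 3 ≤ ℓ)
    (A B : Fin ℓ → Finset α)
    (hdisj : ∀ i j, i ≠ j → Disjoint (A i) (A j))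
    (hcore : IsCore ℓ A B)
    (U : Finset α) (hU : U = Finset.univ.biUnion B)
    (𝒮 : Finset (Finset α))
    (h𝒮 : 𝒮 = Finset.univ.biUnion (fun i => (A i \ U).image (fun x => insert x (B i)))) :
    (∀ S ∈ 𝒮, ∀ i, (S ∩ A i).card = 1) ∧
    (∀ S ∈ 𝒮, ∀ T ∈ 𝒮, S ≠ T →
      Odd ((Finset.univ.filter (fun i => S ∩ T ∩ A i = ∅)).card)) ∧
    𝒮.card = (Finset.univ.biUnion A).card - U.card :=
  stmt_10_general ℓ A B hdisj hcore U hU 𝒮 h𝒮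
end

section
/- For all integers ℓ ≥ 1, n ≥ 1, k ≥ 1, every ℓ-semi-intersecting family with parameters n and k has size at most 2^{⌊ℓ/2⌋} · ⌊ℓ/2⌋! · n^{⌊(ℓ+1)/2⌋}. -/
/-- An `ℓ`-semi-intersecting family with parameters `n` and `k`: pairwise disjoint base
sets `A 0, …, A (ℓ-1)`, each of size `n`, and a family `𝒮` of subsets of their union such
that `|S ∩ A i| = k` for every `S ∈ 𝒮` and every `i`, and for distinct `S, T ∈ 𝒮` the
number of indices `i` with `S ∩ T ∩ A i = ∅` is odd. -/
def IsSemiIntersecting {α : Type*} [DecidableEq α] (ℓ n k : ℕ)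
    (A : Fin ℓ → Finset α) (𝒮 : Finset (Finset α)) : Prop :=
  (∀ i j, i ≠ j → Disjoint (A i) (A j)) ∧
  (∀ i, (A i).card = n) ∧
  (∀ S ∈ 𝒮, S ⊆ Finset.univ.biUnion A) ∧
  (∀ S ∈ 𝒮, ∀ i, (S ∩ A i).card = k) ∧
  (∀ S ∈ 𝒮, ∀ T ∈ 𝒮, S ≠ T →
    Odd ((Finset.univ.filter (fun i => S ∩ T ∩ A i = ∅)).card))

open Finset

namespace SemiIntersectingAux

/-- Stripping a block: given an `(L+1)`-semi-intersecting family and an element `x ∈ A j`,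
the subfamily of sets containing `x`, with block `j` deleted, is `L`-semi-intersecting
(over the remaining blocks), and no two of its members collapse. -/
lemma strip {α : Type*} [DecidableEq α] {L n k : ℕ} (hk : 1 ≤ k)
    {A : Fin (L + 1) → Finset α} {𝒮 : Finset (Finset α)}
    (h : IsSemiIntersecting (L + 1) n k A 𝒮) (j : Fin (L + 1)) (x : α) (hx : x ∈ A j) :
    IsSemiIntersecting L n k (fun i => A (j.succAbove i))
      (((𝒮.filter (fun S => x ∈ S)).image (fun S => S \ A j))) ∧
    (((𝒮.filter (fun S => x ∈ S)).image (fun S => S \ A j))).card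
      = (𝒮.filter (fun S => x ∈ S)).card := by
  obtain ⟨h1, h2, h3, h4, h5⟩ := h
  have hmem : ∀ {a : α} {i : Fin (L + 1)}, i ≠ j → a ∈ A i → a ∉ A j :=
    fun {a i} hij ha haj => Finset.disjoint_left.mp (h1 i j hij) ha haj
  -- basic rewriting facts
  have hsd : ∀ (S : Finset α) (i : Fin (L + 1)), i ≠ j → (S \ A j) ∩ A i = S ∩ A i := by
    intro S i hij
    ext a
    simp only [mem_inter, mem_sdiff]
    constructor
    · rintro ⟨⟨hS, -⟩, hA⟩; exact ⟨hS, hA⟩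
    · rintro ⟨hS, hA⟩; exact ⟨⟨hS, hmem hij hA⟩, hA⟩
  have hsd2 : ∀ (S T : Finset α) (i : Fin (L + 1)), i ≠ j →
      (S \ A j) ∩ (T \ A j) ∩ A i = S ∩ T ∩ A i := by
    intro S T i hij
    ext a
    simp only [mem_inter, mem_sdiff]
    constructor
    · rintro ⟨⟨⟨hS, -⟩, hT, -⟩, hA⟩; exact ⟨⟨hS, hT⟩, hA⟩
    · rintro ⟨⟨hS, hT⟩, hA⟩; exact ⟨⟨⟨hS, hmem hij hA⟩, hT, hmem hij hA⟩, hA⟩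
  -- injectivity of stripping on the subfamily
  have hinj : Set.InjOn (fun S => S \ A j) ↑(𝒮.filter (fun S => x ∈ S)) := by
    intro S hS T hT hST
    simp only [coe_filter, Set.mem_setOf_eq] at hS hT
    by_contra hne
    have hodd := h5 S hS.1 T hT.1 hne
    have hempty : (Finset.univ.filter (fun i => S ∩ T ∩ A i = ∅)) = ∅ := by
      apply Finset.filter_eq_empty_iff.mpr
      intro i _
      by_cases hij : i = j
      · subst hij
        intro hcon
        have : x ∈ S ∩ T ∩ A i := by
          simp only [mem_inter]; exact ⟨⟨hS.2, hT.2⟩, hx⟩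
        rw [hcon] at this; exact absurd this (notMem_empty x)
      · intro hcon
        have hST' : S ∩ A i = T ∩ A i := by
          rw [← hsd S i hij, ← hsd T i hij]
          simp only at hST
          rw [hST]
        have hpos : 0 < (S ∩ T ∩ A i).card := by
          have hsub : S ∩ A i ⊆ S ∩ T ∩ A i := by
            intro a ha
            have ha' : a ∈ T ∩ A i := hST' ▸ ha
            simp only [mem_inter] at ha ha' ⊢
            exact ⟨⟨ha.1, ha'.1⟩, ha.2⟩
          have : 0 < (S ∩ A i).card := by
            rw [h4 S hS.1 i]; omega
          exact lt_of_lt_of_le this (card_le_card hsub)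
        rw [hcon] at hpos; simp at hpos
    rw [hempty] at hodd
    simp [Nat.odd_iff] at hodd
  have hcard : (((𝒮.filter (fun S => x ∈ S)).image (fun S => S \ A j))).card
      = (𝒮.filter (fun S => x ∈ S)).card := Finset.card_image_of_injOn hinj
  refine ⟨⟨?_, ?_, ?_, ?_, ?_⟩, hcard⟩
  · -- disjointness of remaining blocks
    intro i i' hii'
    exact h1 _ _ (fun hcon => hii' (Fin.succAbove_right_injective hcon))
  · intro i; exact h2 _
  · -- subsets of the union of remaining blocks
    intro U hU
    obtain ⟨S, hS, rfl⟩ := Finset.mem_image.mp hU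
    simp only [mem_filter] at hS
    intro a ha
    have haS : a ∈ S := (mem_sdiff.mp ha).1
    have hanj : a ∉ A j := (mem_sdiff.mp ha).2
    have := h3 S hS.1 haS
    obtain ⟨i, -, hai⟩ := Finset.mem_biUnion.mp this
    have hij : i ≠ j := fun hcon => hanj (hcon ▸ hai)
    obtain ⟨i', hi'⟩ := Fin.exists_succAbove_eq hij
    exact Finset.mem_biUnion.mpr ⟨i', mem_univ i', by rw [hi']; exact hai⟩
  · -- trace sizes
    intro U hU i
    obtain ⟨S, hS, rfl⟩ := Finset.mem_image.mp hU
    simp only [mem_filter] at hS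
    rw [hsd S _ (Fin.succAbove_ne j i)]
    exact h4 S hS.1 _
  · -- parity
    intro U hU V hV hUV
    obtain ⟨S, hS, rfl⟩ := Finset.mem_image.mp hU
    obtain ⟨T, hT, rfl⟩ := Finset.mem_image.mp hV
    simp only [mem_filter] at hS hT
    have hSTne : S ≠ T := fun hcon => hUV (by rw [hcon])
    have hodd := h5 S hS.1 T hT.1 hSTne
    have hkey : (Finset.univ.filter
        (fun i : Fin L => (S \ A j) ∩ (T \ A j) ∩ A (j.succAbove i) = ∅)).card
        = (Finset.univ.filter (fun i => S ∩ T ∩ A i = ∅)).card := by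
      apply Finset.card_bij (fun i _ => j.succAbove i)
      · intro i hi
        simp only [mem_filter, mem_univ, true_and] at hi ⊢
        rw [← hsd2 S T _ (Fin.succAbove_ne j i)]
        exact hi
      · intro i₁ h₁ i₂ h₂ hcon
        exact Fin.succAbove_right_injective hcon
      · intro i hi
        simp only [mem_filter, mem_univ, true_and] at hi
        have hij : i ≠ j := by
          intro hcon
          subst hcon
          have : x ∈ S ∩ T ∩ A i := by
            simp only [mem_inter]; exact ⟨⟨hS.2, hT.2⟩, hx⟩
          rw [hi] at this; exact absurd this (notMem_empty x)
        obtain ⟨i', hi'⟩ := Fin.exists_succAbove_eq hij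
        refine ⟨i', ?_, hi'⟩
        simp only [mem_filter, mem_univ, true_and]
        rw [hi', hsd2 S T i hij]
        exact hi
    rw [hkey]
    exact hodd

/-- Double counting step: `k·|𝒮| ≤ n·C` where `C` bounds all `L`-semi-intersecting
families. -/
lemma count_step {α : Type*} [DecidableEq α] {L n k : ℕ} (hk : 1 ≤ k)
    {A : Fin (L + 1) → Finset α} {𝒮 : Finset (Finset α)}
    (h : IsSemiIntersecting (L + 1) n k A 𝒮) (C : ℕ)
    (hP : ∀ (A' : Fin L → Finset α) (𝒮' : Finset (Finset α)),
      IsSemiIntersecting L n k A' 𝒮' → 𝒮'.card ≤ C) :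
    k * 𝒮.card ≤ n * C := by
  obtain ⟨h1, h2, h3, h4, h5⟩ := h
  set j₀ : Fin (L + 1) := 0 with hj₀
  have step1 : k * 𝒮.card = ∑ S ∈ 𝒮, (S ∩ A j₀).card := by
    rw [Finset.sum_congr rfl (fun S hS => h4 S hS j₀)]
    rw [Finset.sum_const, smul_eq_mul, mul_comm]
  have step2 : ∑ S ∈ 𝒮, (S ∩ A j₀).card
      = ∑ x ∈ A j₀, (𝒮.filter (fun S => x ∈ S)).card := by
    have e1 : ∀ S : Finset α, (S ∩ A j₀).card = ∑ x ∈ A j₀, if x ∈ S then 1 else 0 := by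
      intro S
      rw [Finset.inter_comm, ← Finset.filter_mem_eq_inter, Finset.card_filter]
    have e2 : ∀ x : α, (𝒮.filter (fun S => x ∈ S)).card
        = ∑ S ∈ 𝒮, if x ∈ S then 1 else 0 := fun x => Finset.card_filter _ _
    rw [Finset.sum_congr rfl (fun S _ => e1 S), Finset.sum_comm]
    exact Finset.sum_congr rfl (fun x _ => (e2 x).symm)
  have step3 : ∀ x ∈ A j₀, (𝒮.filter (fun S => x ∈ S)).card ≤ C := by
    intro x hx
    obtain ⟨hsi', hcard'⟩ := strip hk ⟨h1, h2, h3, h4, h5⟩ j₀ x hx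
    rw [← hcard']
    exact hP _ _ hsi'
  calc k * 𝒮.card = ∑ x ∈ A j₀, (𝒮.filter (fun S => x ∈ S)).card := by rw [step1, step2]
    _ ≤ (A j₀).card * C := by
        rw [← smul_eq_mul]
        exact Finset.sum_le_card_nsmul _ _ C step3
    _ = n * C := by rw [h2 j₀]

/-- The main bound, proved by strong induction on the number of blocks. -/
lemma main_bound {α : Type*} [DecidableEq α] (n k : ℕ) (hn : 1 ≤ n) (hk : 1 ≤ k) :
    ∀ ℓ : ℕ, ∀ (A : Fin ℓ → Finset α) (𝒮 : Finset (Finset α)),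
      IsSemiIntersecting ℓ n k A 𝒮 →
      𝒮.card ≤ 2 ^ (ℓ / 2) * Nat.factorial (ℓ / 2) * n ^ ((ℓ + 1) / 2) := by
  intro ℓ
  induction ℓ using Nat.strong_induction_on with
  | _ ℓ ih =>
    intro A 𝒮 hsi
    by_cases h0 : ℓ = 0
    · -- zero blocks: at most one (empty) set
      subst h0
      have hone : 𝒮.card ≤ 1 := by
        apply Finset.card_le_one.mpr
        intro a ha b hb
        have ha' : a = ∅ := by
          have := hsi.2.2.1 a ha
          simpa [Finset.subset_empty] using this
        have hb' : b = ∅ := by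
          have := hsi.2.2.1 b hb
          simpa [Finset.subset_empty] using this
        rw [ha', hb']
      simpa using hone
    · obtain ⟨L, rfl⟩ := Nat.exists_eq_succ_of_ne_zero h0
      rcases Nat.even_or_odd (L + 1) with he | ho
      · -- even number of blocks : pivot step
        have hL0 : L ≠ 0 := by
          intro hcon; subst hcon
          rw [Nat.even_iff] at he; omega
        obtain ⟨M, rfl⟩ := Nat.exists_eq_succ_of_ne_zero hL0
        have hM : M % 2 = 0 := by
          rw [Nat.even_iff] at he; omega
        by_cases hS0 : 𝒮 = ∅
        · subst hS0; simp
        obtain ⟨S₀, hS₀⟩ := Finset.nonempty_iff_ne_empty.mpr hS0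
        obtain ⟨h1, h2, h3, h4, h5⟩ := hsi
        have hkn : k ≤ n := by
          have hc := h4 S₀ hS₀ 0
          calc k = (S₀ ∩ A 0).card := hc.symm
            _ ≤ (A 0).card := card_le_card inter_subset_right
            _ = n := h2 0
        set C : ℕ := 2 ^ (M / 2) * Nat.factorial (M / 2) * n ^ ((M + 1) / 2) with hCdef
        have hC1 : 1 ≤ C := by
          rw [hCdef]
          have : 0 < 2 ^ (M / 2) * Nat.factorial (M / 2) * n ^ ((M + 1) / 2) :=
            Nat.mul_pos (Nat.mul_pos (Nat.pow_pos (by norm_num))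
              (Nat.factorial_pos _)) (Nat.pow_pos hn)
          omega
        have hQ : ∀ (j : Fin (M + 1 + 1)) (x : α), x ∈ A j →
            k * (𝒮.filter (fun S => x ∈ S)).card ≤ n * C := by
          intro j x hx
          obtain ⟨hsi', hcard'⟩ := strip hk ⟨h1, h2, h3, h4, h5⟩ j x hx
          have := count_step hk hsi' C (fun A' 𝒮' h' => ih M (by omega) A' 𝒮' h')
          rw [hcard'] at this
          exact this
        -- the covering
        have hcov : 𝒮 ⊆ insert S₀ ((Finset.univ : Finset (Fin (M + 1 + 1))).biUnion fun j =>
            (S₀ ∩ A j).biUnion fun x => ((𝒮.filter (fun S => x ∈ S)).erase S₀)) := by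
          intro T hT
          by_cases hTS : T = S₀
          · exact Finset.mem_insert.mpr (Or.inl hTS)
          · refine Finset.mem_insert.mpr (Or.inr ?_)
            have hex : ∃ jj : Fin (M + 1 + 1), (S₀ ∩ T ∩ A jj).Nonempty := by
              by_contra hno
              push_neg at hno
              have hall : ∀ jj, S₀ ∩ T ∩ A jj = ∅ :=
                fun jj => hno jj
              have hodd := h5 S₀ hS₀ T hT (fun hcon => hTS hcon.symm)
              have huniv : (Finset.univ.filter (fun i => S₀ ∩ T ∩ A i = ∅))
                  = (Finset.univ : Finset (Fin (M + 1 + 1))) :=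
                Finset.filter_true_of_mem (fun i _ => hall i)
              rw [huniv, Finset.card_univ, Fintype.card_fin, Nat.odd_iff] at hodd
              omega
            obtain ⟨jj, ⟨x, hxmem⟩⟩ := hex
            simp only [mem_inter] at hxmem
            refine Finset.mem_biUnion.mpr ⟨jj, mem_univ jj, ?_⟩
            refine Finset.mem_biUnion.mpr ⟨x, Finset.mem_inter.mpr ⟨hxmem.1.1, hxmem.2⟩, ?_⟩
            exact Finset.mem_erase.mpr ⟨hTS, Finset.mem_filter.mpr ⟨hT, hxmem.1.2⟩⟩
        have hcard1 : 𝒮.card ≤ 1 + ∑ j : Fin (M + 1 + 1), ∑ x ∈ S₀ ∩ A j,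
            ((𝒮.filter (fun S => x ∈ S)).erase S₀).card := by
          calc 𝒮.card ≤ _ := Finset.card_le_card hcov
            _ ≤ ((Finset.univ : Finset (Fin (M + 1 + 1))).biUnion fun j =>
                (S₀ ∩ A j).biUnion fun x =>
                  ((𝒮.filter (fun S => x ∈ S)).erase S₀)).card + 1 :=
              Finset.card_insert_le _ _
            _ ≤ (∑ j : Fin (M + 1 + 1), ((S₀ ∩ A j).biUnion fun x =>
                ((𝒮.filter (fun S => x ∈ S)).erase S₀)).card) + 1 :=
              Nat.add_le_add_right (Finset.card_biUnion_le) 1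
            _ ≤ (∑ j : Fin (M + 1 + 1), ∑ x ∈ S₀ ∩ A j,
                ((𝒮.filter (fun S => x ∈ S)).erase S₀).card) + 1 :=
              Nat.add_le_add_right
                (Finset.sum_le_sum (fun j _ => Finset.card_biUnion_le)) 1
            _ = _ := by omega
        have hterm : ∀ (j : Fin (M + 1 + 1)), ∀ x ∈ S₀ ∩ A j,
            k * ((𝒮.filter (fun S => x ∈ S)).erase S₀).card ≤ n * C - k := by
          intro j x hxmem
          obtain ⟨hxS₀, hxA⟩ := Finset.mem_inter.mp hxmem
          have hmemf : S₀ ∈ 𝒮.filter (fun S => x ∈ S) :=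
            Finset.mem_filter.mpr ⟨hS₀, hxS₀⟩
          have hcQ := hQ j x hxA
          have hcpos : 0 < (𝒮.filter (fun S => x ∈ S)).card :=
            Finset.card_pos.mpr ⟨S₀, hmemf⟩
          have he : ((𝒮.filter (fun S => x ∈ S)).erase S₀).card + 1
              = (𝒮.filter (fun S => x ∈ S)).card := by
            rw [Finset.card_erase_of_mem hmemf]
            omega
          apply Nat.le_sub_of_add_le
          calc k * ((𝒮.filter (fun S => x ∈ S)).erase S₀).card + k
              = k * (((𝒮.filter (fun S => x ∈ S)).erase S₀).card + 1) := by ring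
            _ = k * (𝒮.filter (fun S => x ∈ S)).card := by rw [he]
            _ ≤ n * C := hcQ
        have hsum : k * 𝒮.card ≤ k * (1 + (M + 1 + 1) * (n * C - k)) := by
          calc k * 𝒮.card
              ≤ k * (1 + ∑ j : Fin (M + 1 + 1), ∑ x ∈ S₀ ∩ A j,
                ((𝒮.filter (fun S => x ∈ S)).erase S₀).card) :=
                Nat.mul_le_mul_left k hcard1
            _ = k + ∑ j : Fin (M + 1 + 1), ∑ x ∈ S₀ ∩ A j,
                k * ((𝒮.filter (fun S => x ∈ S)).erase S₀).card := by
                rw [Nat.mul_add, Nat.mul_one, Finset.mul_sum]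
                congr 1
                exact Finset.sum_congr rfl (fun j _ => Finset.mul_sum _ _ _)
            _ ≤ k + ∑ j : Fin (M + 1 + 1), ∑ x ∈ S₀ ∩ A j, (n * C - k) := by
                apply Nat.add_le_add_left
                apply Finset.sum_le_sum
                intro j _
                exact Finset.sum_le_sum (fun x hxm => hterm j x hxm)
            _ = k + ∑ j : Fin (M + 1 + 1), k * (n * C - k) := by
                congr 1
                apply Finset.sum_congr rfl
                intro j _
                rw [Finset.sum_const, h4 S₀ hS₀ j, smul_eq_mul]
            _ = k + (M + 1 + 1) * (k * (n * C - k)) := by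
                rw [Finset.sum_const, Finset.card_univ, Fintype.card_fin, smul_eq_mul]
            _ = k * (1 + (M + 1 + 1) * (n * C - k)) := by ring
        have hfinal : 𝒮.card ≤ 1 + (M + 1 + 1) * (n * C - k) :=
          Nat.le_of_mul_le_mul_left hsum (by omega)
        have hnCk : k ≤ n * C := le_trans hkn (Nat.le_mul_of_pos_right n (by omega))
        have hexp : (M + 1 + 1) * (n * C - k) + (M + 1 + 1) * k = (M + 1 + 1) * (n * C) := by
          rw [← Nat.mul_add, Nat.sub_add_cancel hnCk]
        have hMk : M + 1 + 1 ≤ (M + 1 + 1) * k := Nat.le_mul_of_pos_right _ (by omega)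
        have hbound : 𝒮.card ≤ (M + 1 + 1) * (n * C) := by omega
        -- final arithmetic identity
        obtain ⟨t, rfl⟩ : ∃ t, M = 2 * t := ⟨M / 2, by omega⟩
        have e1 : (2 * t + 1 + 1) / 2 = t + 1 := by omega
        have e2 : (2 * t + 1 + 1 + 1) / 2 = t + 1 := by omega
        have e3 : (2 * t) / 2 = t := by omega
        have e4 : (2 * t + 1) / 2 = t := by omega
        rw [e1, e2]
        rw [hCdef, e3, e4] at hbound
        calc 𝒮.card ≤ (2 * t + 1 + 1) * (n * (2 ^ t * Nat.factorial t * n ^ t)) := hbound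
          _ = 2 ^ (t + 1) * ((t + 1) * Nat.factorial t) * n ^ (t + 1) := by ring
          _ = 2 ^ (t + 1) * Nat.factorial (t + 1) * n ^ (t + 1) := by
              rw [Nat.factorial_succ]
      · -- odd number of blocks : pure counting step
        have hkey := count_step hk hsi (2 ^ (L / 2) * Nat.factorial (L / 2) * n ^ ((L + 1) / 2))
          (fun A' 𝒮' h' => ih L (by omega) A' 𝒮' h')
        have hle : 𝒮.card ≤ k * 𝒮.card := Nat.le_mul_of_pos_left _ (by omega)
        have hL : L % 2 = 0 := by
          rw [Nat.odd_iff] at ho; omega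
        obtain ⟨t, rfl⟩ : ∃ t, L = 2 * t := ⟨L / 2, by omega⟩
        have e1 : (2 * t + 1) / 2 = t := by omega
        have e2 : (2 * t + 1 + 1) / 2 = t + 1 := by omega
        have e3 : (2 * t) / 2 = t := by omega
        rw [e1, e2]
        rw [e3, e1] at hkey
        calc 𝒮.card ≤ k * 𝒮.card := hle
          _ ≤ n * (2 ^ t * Nat.factorial t * n ^ t) := hkey
          _ = 2 ^ t * Nat.factorial t * n ^ (t + 1) := by ring

end SemiIntersectingAux

/-- Every `ℓ`-semi-intersecting family with parameters `n` and `k` has size at most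
`2^⌊ℓ/2⌋ · ⌊ℓ/2⌋! · n^⌊(ℓ+1)/2⌋`. -/
theorem stmt_13 {α : Type*} [DecidableEq α] (ℓ n k : ℕ)
    (hℓ : 1 ≤ ℓ) (hn : 1 ≤ n) (hk : 1 ≤ k)
    (A : Fin ℓ → Finset α) (𝒮 : Finset (Finset α))
    (h : IsSemiIntersecting ℓ n k A 𝒮) :
    𝒮.card ≤ 2 ^ (ℓ / 2) * Nat.factorial (ℓ / 2) * n ^ ((ℓ + 1) / 2) := by
  exact SemiIntersectingAux.main_bound n k hn hk ℓ A 𝒮 h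
end

section
/- For all integers ℓ ≥ 1, n ≥ 1, and k ≥ ⌊log₂(ℓ+1)⌋ with k ≥ 1, there exists an ℓ-semi-intersecting family with parameters n and k of size at least ⌊n/k⌋^{⌊log₂(ℓ+1)⌋}. -/
open Finset

/-- Euclidean uniqueness helper. -/
lemma euclid_aux {m a b p q : ℕ} (ha : a < m) (hb : b < m) (h : p * m + a = q * m + b) :
    p = q ∧ a = b := by
  have h1 : (m * p + a) / m = p := by
    rw [Nat.mul_add_div (by omega)]
    simp [Nat.div_eq_of_lt ha]
  have h2 : (m * q + b) / m = q := by
    rw [Nat.mul_add_div (by omega)]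
    simp [Nat.div_eq_of_lt hb]
  have h' : m * p + a = m * q + b := by rw [mul_comm m p, mul_comm m q]; exact h
  have hpq : p = q := by rw [← h1, h', h2]
  subst hpq
  exact ⟨rfl, by omega⟩

/-- The trace of the set `S_v` inside the base set indexed by `J ⊆ Fin t`. -/
def blockC (t m k : ℕ) (J : Finset (Fin t)) (v : Fin t → Fin m) : Finset ℕ :=
  if hJ : J.Nonempty then
    ((Finset.range (k + 1 - J.card)).image
        (fun x => (v (J.min' hJ) : ℕ) * (k + 1 - J.card) + x))
    ∪ ((J.erase (J.min' hJ)).image (fun j =>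
        m * (k + 1 - J.card) + ((J.erase (J.min' hJ)).filter (· < j)).card * m + (v j : ℕ)))
  else Finset.range k

section blockC

variable {t m k : ℕ} {J : Finset (Fin t)} {v w : Fin t → Fin m}

/-- rank is injective on the erased set -/
lemma rank_injOn (hJ : J.Nonempty) :
    ∀ j ∈ J.erase (J.min' hJ), ∀ j' ∈ J.erase (J.min' hJ),
      ((J.erase (J.min' hJ)).filter (· < j)).card =
        ((J.erase (J.min' hJ)).filter (· < j')).card → j = j' := by
  set E := J.erase (J.min' hJ)
  have key : ∀ j ∈ E, ∀ j' ∈ E, j < j' →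
      (E.filter (· < j)).card < (E.filter (· < j')).card := by
    intro j hj j' hj' hlt
    apply Finset.card_lt_card
    constructor
    · intro x hx
      simp only [Finset.mem_filter] at hx ⊢
      exact ⟨hx.1, lt_trans hx.2 hlt⟩
    · intro hsub
      have : j ∈ E.filter (· < j') := by simp [Finset.mem_filter, hj, hlt]
      have := hsub this
      simp [Finset.mem_filter] at this
  intro j hj j' hj' heq
  rcases lt_trichotomy j j' with h | h | h
  · exact absurd heq (Nat.ne_of_lt (key j hj j' hj' h))
  · exact h
  · exact absurd heq.symm (Nat.ne_of_lt (key j' hj' j hj h))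

lemma myRank_le (hJ : J.Nonempty) {j : Fin t} (hj : j ∈ J.erase (J.min' hJ)) :
    ((J.erase (J.min' hJ)).filter (· < j)).card + 2 ≤ J.card := by
  set E := J.erase (J.min' hJ)
  have h1 : E.filter (· < j) ⊆ E.erase j := by
    intro x hx
    simp only [Finset.mem_filter] at hx
    exact Finset.mem_erase.mpr ⟨ne_of_lt hx.2, hx.1⟩
  have h2 : (E.erase j).card = E.card - 1 := Finset.card_erase_of_mem hj
  have h3 : E.card = J.card - 1 := Finset.card_erase_of_mem (J.min'_mem hJ)
  have h4 : (E.filter (· < j)).card ≤ E.card - 1 := h2 ▸ Finset.card_le_card h1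
  have h5 : 1 ≤ E.card := Finset.card_pos.mpr ⟨j, hj⟩
  have h6 : 2 ≤ J.card := by omega
  omega

lemma blockC_card (hJk : J.card ≤ k) : (blockC t m k J v).card = k := by
  unfold blockC
  split_ifs with hJ
  · set L := k + 1 - J.card with hL
    set E := J.erase (J.min' hJ) with hE
    have hL1 : 1 ≤ L := by
      have := Finset.card_pos.mpr hJ
      omega
    have hbig : ((Finset.range L).image
        (fun x => (v (J.min' hJ) : ℕ) * L + x)).card = L := by
      rw [Finset.card_image_of_injective _ (fun a b h => by omega), Finset.card_range]
    have hsing : (E.image (fun j =>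
        m * L + (E.filter (· < j)).card * m + (v j : ℕ))).card = E.card := by
      apply Finset.card_image_of_injOn
      intro j hj j' hj' h
      simp only at h
      have h' : (E.filter (· < j)).card * m + (v j : ℕ) =
          (E.filter (· < j')).card * m + (v j' : ℕ) := by omega
      have := euclid_aux (v j).isLt (v j').isLt h'
      exact rank_injOn hJ j hj j' hj' this.1
    have hdisj : Disjoint ((Finset.range L).image
          (fun x => (v (J.min' hJ) : ℕ) * L + x))
        (E.image (fun j => m * L + (E.filter (· < j)).card * m + (v j : ℕ))) := by
      rw [Finset.disjoint_left]
      intro a ha hb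
      simp only [Finset.mem_image, Finset.mem_range] at ha hb
      obtain ⟨x, hx, rfl⟩ := ha
      obtain ⟨j, hj, hjeq⟩ := hb
      have hvm : (v (J.min' hJ) : ℕ) < m := (v (J.min' hJ)).isLt
      have h1 : ((v (J.min' hJ) : ℕ) + 1) * L ≤ m * L := Nat.mul_le_mul_right _ (by omega)
      have h2 : ((v (J.min' hJ) : ℕ) + 1) * L = (v (J.min' hJ) : ℕ) * L + L := by ring
      omega
    rw [Finset.card_union_of_disjoint hdisj, hbig, hsing,
      Finset.card_erase_of_mem (J.min'_mem hJ)]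
    have h2 : 1 ≤ J.card := Finset.card_pos.mpr hJ
    omega
  · exact Finset.card_range k

lemma blockC_subset {n : ℕ} (hkn : m * k ≤ n) (hk1 : k ≤ n) (hJk : J.card ≤ k) :
    blockC t m k J v ⊆ Finset.range n := by
  unfold blockC
  split_ifs with hJ
  · set L := k + 1 - J.card with hL
    set E := J.erase (J.min' hJ) with hE
    intro a ha
    rw [Finset.mem_range]
    simp only [Finset.mem_union, Finset.mem_image, Finset.mem_range] at ha
    have hr1 : 1 ≤ J.card := Finset.card_pos.mpr hJ
    rcases ha with ⟨x, hx, heq⟩ | ⟨j, hj, heq⟩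
    · have heq2 : (v (J.min' hJ) : ℕ) * L + x = a := heq
      have hvm : (v (J.min' hJ) : ℕ) < m := (v (J.min' hJ)).isLt
      have h1 : ((v (J.min' hJ) : ℕ) + 1) * L ≤ m * L := Nat.mul_le_mul_right _ (by omega)
      have h2 : ((v (J.min' hJ) : ℕ) + 1) * L = (v (J.min' hJ) : ℕ) * L + L := by ring
      have h3 : m * L ≤ m * k := Nat.mul_le_mul_left _ (by omega)
      omega
    · have heq2 : m * L + (E.filter (· < j)).card * m + (v j : ℕ) = a := heq
      have hrk : (E.filter (· < j)).card + 2 ≤ J.card := myRank_le hJ hj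
      have hvm : (v j : ℕ) < m := (v j).isLt
      have h1 : (E.filter (· < j)).card * m ≤ (J.card - 2) * m :=
        Nat.mul_le_mul_right _ (by omega)
      have h2 : m * L + (J.card - 2) * m + m = m * k := by
        have h3 : L + (J.card - 2) + 1 = k := by omega
        calc m * L + (J.card - 2) * m + m = m * (L + (J.card - 2) + 1) := by ring
        _ = m * k := by rw [h3]
      omega
  · intro a ha; rw [Finset.mem_range] at ha ⊢; omega

lemma blockC_eq_of_empty (hJ : ¬ J.Nonempty) : blockC t m k J v = Finset.range k :=
  dif_neg hJ

lemma blockC_inter_eq_empty (hJk : J.card ≤ k) (hJ : J.Nonempty) :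
    blockC t m k J v ∩ blockC t m k J w = ∅ ↔ ∀ j ∈ J, v j ≠ w j := by
  have hr1 : 1 ≤ J.card := Finset.card_pos.mpr hJ
  have hL1 : 1 ≤ k + 1 - J.card := by omega
  unfold blockC
  rw [dif_pos hJ, dif_pos hJ]
  set L := k + 1 - J.card with hL
  set E := J.erase (J.min' hJ) with hE
  rw [Finset.eq_empty_iff_forall_notMem]
  constructor
  · intro h j hj hvw
    by_cases hmin : j = J.min' hJ
    · apply h ((v (J.min' hJ) : ℕ) * L + 0)
      rw [Finset.mem_inter]
      constructor
      · apply Finset.mem_union_left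
        exact Finset.mem_image.mpr ⟨0, Finset.mem_range.mpr (by omega), rfl⟩
      · apply Finset.mem_union_left
        refine Finset.mem_image.mpr ⟨0, Finset.mem_range.mpr (by omega), ?_⟩
        rw [← hmin, ← hvw]
    · have hjE : j ∈ E := Finset.mem_erase.mpr ⟨hmin, hj⟩
      apply h (m * L + (E.filter (· < j)).card * m + (v j : ℕ))
      rw [Finset.mem_inter]
      constructor
      · exact Finset.mem_union_right _ (Finset.mem_image.mpr ⟨j, hjE, rfl⟩)
      · refine Finset.mem_union_right _ (Finset.mem_image.mpr ⟨j, hjE, ?_⟩)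
        rw [hvw]
  · intro hall a ha
    rw [Finset.mem_inter, Finset.mem_union, Finset.mem_union] at ha
    obtain ⟨ha1, ha2⟩ := ha
    have hbig_lt : ∀ (u : Fin t → Fin m) x, x < L → (u (J.min' hJ) : ℕ) * L + x < m * L := by
      intro u x hx
      have h1 : ((u (J.min' hJ) : ℕ) + 1) * L ≤ m * L :=
        Nat.mul_le_mul_right _ (by have := (u (J.min' hJ)).isLt; omega)
      have h2 : ((u (J.min' hJ) : ℕ) + 1) * L = (u (J.min' hJ) : ℕ) * L + L := by ring
      omega
    rcases ha1 with h1 | h1 <;> rcases ha2 with h2 | h2 <;>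
      simp only [Finset.mem_image, Finset.mem_range] at h1 h2
    · obtain ⟨x, hx, hxe⟩ := h1
      obtain ⟨y, hy, hye⟩ := h2
      have hxe2 : (v (J.min' hJ) : ℕ) * L + x = a := hxe
      have hye2 : (w (J.min' hJ) : ℕ) * L + y = a := hye
      have := euclid_aux hx hy
        (by omega : (v (J.min' hJ) : ℕ) * L + x = (w (J.min' hJ) : ℕ) * L + y)
      exact hall _ (J.min'_mem hJ) (Fin.ext this.1)
    · obtain ⟨x, hx, hxe⟩ := h1
      obtain ⟨j, hj, hje⟩ := h2
      have hxe2 : (v (J.min' hJ) : ℕ) * L + x = a := hxe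
      have hje2 : m * L + (E.filter (· < j)).card * m + (w j : ℕ) = a := hje
      have := hbig_lt v x hx
      omega
    · obtain ⟨j, hj, hje⟩ := h1
      obtain ⟨y, hy, hye⟩ := h2
      have hye2 : (w (J.min' hJ) : ℕ) * L + y = a := hye
      have hje2 : m * L + (E.filter (· < j)).card * m + (v j : ℕ) = a := hje
      have := hbig_lt w y hy
      omega
    · obtain ⟨j, hj, hje⟩ := h1
      obtain ⟨j', hj', hje'⟩ := h2
      have hje2 : m * L + (E.filter (· < j)).card * m + (v j : ℕ) = a := hje
      have hje2' : m * L + (E.filter (· < j')).card * m + (w j' : ℕ) = a := hje'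
      have he : (E.filter (· < j)).card * m + (v j : ℕ) =
          (E.filter (· < j')).card * m + (w j' : ℕ) := by omega
      have := euclid_aux (v j).isLt (w j').isLt he
      have hjj : j = j' := rank_injOn hJ j hj j' hj' this.1
      subst hjj
      exact hall j (Finset.mem_of_mem_erase hj) (Fin.ext this.2)

lemma blockC_nonempty (hJk : J.card ≤ k) (hk1 : 1 ≤ k) : (blockC t m k J v).Nonempty := by
  rw [← Finset.card_pos, blockC_card hJk]; omega

end blockC

open Finset

def famS (ℓ t m k : ℕ) (J : Fin ℓ → Finset (Fin t)) (v : Fin t → Fin m) :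
    Finset (Fin ℓ × ℕ) :=
  Finset.univ.biUnion (fun i => {i} ×ˢ blockC t m k (J i) v)

lemma mem_famS {ℓ t m k : ℕ} {J : Fin ℓ → Finset (Fin t)} {v : Fin t → Fin m}
    {x : Fin ℓ × ℕ} : x ∈ famS ℓ t m k J v ↔ x.2 ∈ blockC t m k (J x.1) v := by
  simp only [famS, Finset.mem_biUnion, Finset.mem_univ, true_and, Finset.mem_product,
    Finset.mem_singleton]
  constructor
  · rintro ⟨i, h1, h2⟩; rwa [h1]
  · intro h; exact ⟨x.1, rfl, h⟩

set_option maxHeartbeats 1000000 in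
/-- For all `ℓ, n ≥ 1` and `k ≥ ⌊log₂(ℓ+1)⌋` with `k ≥ 1`, there is an
`ℓ`-semi-intersecting family with parameters `n` and `k` of size at least
`⌊n/k⌋ ^ ⌊log₂(ℓ+1)⌋`. -/
theorem stmt_14 (ℓ n k : ℕ) (hℓ : 1 ≤ ℓ) (hn : 1 ≤ n) (hk : 1 ≤ k)
    (hklog : Nat.log 2 (ℓ + 1) ≤ k) :
    ∃ (A : Fin ℓ → Finset ℕ) (𝒮 : Finset (Finset ℕ)),
      IsSemiIntersecting ℓ n k A 𝒮 ∧
      (n / k) ^ (Nat.log 2 (ℓ + 1)) ≤ 𝒮.card := by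
  classical
  set t := Nat.log 2 (ℓ + 1) with htdef
  have ht : 1 ≤ t := Nat.log_pos (by norm_num) (by omega)
  have h2t : 2 ^ t ≤ ℓ + 1 := Nat.pow_log_le_self 2 (by omega)
  set m := n / k with hmdef
  have hkn : m * k ≤ n := by
    have := Nat.div_mul_le_self n k
    rw [hmdef]; omega
  have hcard : Fintype.card {s : Finset (Fin t) // s.Nonempty} = 2 ^ t - 1 := by
    rw [Fintype.card_subtype]
    have h1 : (Finset.univ.filter (fun s : Finset (Fin t) => s.Nonempty)) =
        Finset.univ.erase ∅ := by
      ext s; simp [Finset.nonempty_iff_ne_empty]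
    rw [h1, Finset.card_erase_of_mem (Finset.mem_univ _), Finset.card_univ,
      Fintype.card_finset, Fintype.card_fin]
  let f : {s : Finset (Fin t) // s.Nonempty} ≃ Fin (2 ^ t - 1) :=
    Fintype.equivFinOfCardEq hcard
  set J : Fin ℓ → Finset (Fin t) := fun i =>
    if h : (i : ℕ) < 2 ^ t - 1 then (f.symm ⟨(i : ℕ), h⟩ : {s : Finset (Fin t) // s.Nonempty}).val
    else ∅ with hJdef
  have hJk : ∀ i, (J i).card ≤ k := by
    intro i
    calc (J i).card ≤ Fintype.card (Fin t) := Finset.card_le_univ _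
    _ = t := Fintype.card_fin t
    _ ≤ k := hklog
  have hJempty : ∀ i : Fin ℓ, ¬ ((i : ℕ) < 2 ^ t - 1) → J i = ∅ := by
    intro i h; simp only [hJdef, dif_neg h]
  have hJne : ∀ i : Fin ℓ, (h : (i : ℕ) < 2 ^ t - 1) →
      J i = (f.symm ⟨(i : ℕ), h⟩ : {s : Finset (Fin t) // s.Nonempty}).val := by
    intro i h; simp only [hJdef, dif_pos h]
  have hJsurj : ∀ s : Finset (Fin t), s.Nonempty → ∃ i : Fin ℓ, J i = s := by
    intro s hs
    have hlt : ((f ⟨s, hs⟩ : Fin (2 ^ t - 1)) : ℕ) < 2 ^ t - 1 := (f ⟨s, hs⟩).isLt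
    refine ⟨⟨((f ⟨s, hs⟩ : Fin (2 ^ t - 1)) : ℕ), by omega⟩, ?_⟩
    rw [hJne _ hlt]
    have h2 : (⟨((f ⟨s, hs⟩ : Fin (2 ^ t - 1)) : ℕ), hlt⟩ : Fin (2 ^ t - 1)) = f ⟨s, hs⟩ :=
      Fin.ext rfl
    rw [h2, Equiv.symm_apply_apply]
  have hJinj : ∀ i i' : Fin ℓ, (J i).Nonempty → J i = J i' → i = i' := by
    intro i i' hne heq
    have hi : (i : ℕ) < 2 ^ t - 1 := by
      by_contra h
      rw [hJempty i h] at hne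
      exact Finset.not_nonempty_empty hne
    have hi' : (i' : ℕ) < 2 ^ t - 1 := by
      by_contra h
      rw [heq, hJempty i' h] at hne
      exact Finset.not_nonempty_empty hne
    rw [hJne i hi, hJne i' hi'] at heq
    have h1 : (f.symm ⟨(i : ℕ), hi⟩) = (f.symm ⟨(i' : ℕ), hi'⟩) := Subtype.ext heq
    have h2 := f.symm.injective h1
    have h3 : (i : ℕ) = (i' : ℕ) := by simpa using h2
    exact Fin.ext h3
  -- the embedding into ℕ
  set e : Fin ℓ × ℕ ↪ ℕ := Encodable.encode' (Fin ℓ × ℕ) with hedef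
  set A : Fin ℓ → Finset ℕ :=
    fun i => (({i} : Finset (Fin ℓ)) ×ˢ Finset.range n).map e with hAdef
  set S0 : (Fin t → Fin m) → Finset (Fin ℓ × ℕ) := famS ℓ t m k J with hS0def
  set 𝒮 : Finset (Finset ℕ) := Finset.univ.image (fun v => (S0 v).map e) with h𝒮def
  -- per-v facts
  have hk1 : ∀ (_ : Fin t → Fin m), k ≤ n := by
    intro v
    have hm0 : 0 < m := (v ⟨0, by omega⟩).pos
    rw [hmdef] at hm0
    exact (Nat.one_le_div_iff (by omega)).mp hm0
  have hS0A : ∀ (v : Fin t → Fin m) (i : Fin ℓ),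
      S0 v ∩ ({i} ×ˢ Finset.range n) = {i} ×ˢ blockC t m k (J i) v := by
    intro v i
    have hsub : blockC t m k (J i) v ⊆ Finset.range n :=
      blockC_subset hkn (hk1 v) (hJk i)
    ext x
    simp only [Finset.mem_inter, hS0def, mem_famS, Finset.mem_product, Finset.mem_singleton]
    constructor
    · rintro ⟨h1, h2, h3⟩; exact ⟨h2, by rwa [h2] at h1⟩
    · rintro ⟨h1, h2⟩; exact ⟨by rwa [h1], h1, hsub h2⟩
  have hSSi : ∀ (v w : Fin t → Fin m) (i : Fin ℓ),
      (S0 v ∩ S0 w ∩ ({i} ×ˢ Finset.range n) = ∅) ↔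
        (blockC t m k (J i) v ∩ blockC t m k (J i) w = ∅) := by
    intro v w i
    have hsub : blockC t m k (J i) v ⊆ Finset.range n :=
      blockC_subset hkn (hk1 v) (hJk i)
    constructor
    · intro h
      rw [Finset.eq_empty_iff_forall_notMem] at h ⊢
      intro b hb
      rw [Finset.mem_inter] at hb
      apply h (i, b)
      rw [Finset.mem_inter, Finset.mem_inter]
      refine ⟨⟨?_, ?_⟩, ?_⟩
      · exact mem_famS.mpr hb.1
      · exact mem_famS.mpr hb.2
      · rw [Finset.mem_product, Finset.mem_singleton]
        exact ⟨rfl, hsub hb.1⟩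
    · intro h
      rw [Finset.eq_empty_iff_forall_notMem] at h ⊢
      intro x hx
      rw [Finset.mem_inter, Finset.mem_inter, Finset.mem_product, Finset.mem_singleton] at hx
      obtain ⟨⟨h1, h2⟩, h3, _⟩ := hx
      rw [hS0def] at h1 h2
      rw [mem_famS] at h1 h2
      apply h x.2
      rw [Finset.mem_inter, ← h3]
      exact ⟨h1, h2⟩
  have hS0card : ∀ (v : Fin t → Fin m) (i : Fin ℓ), (S0 v ∩ ({i} ×ˢ Finset.range n)).card = k := by
    intro v i
    rw [hS0A v i, Finset.card_product, Finset.card_singleton, one_mul, blockC_card (hJk i)]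
  -- injectivity
  have hinj : Function.Injective (fun v : Fin t → Fin m => (S0 v).map e) := by
    intro v w h
    by_contra hvw
    obtain ⟨j, hj⟩ := Function.ne_iff.mp hvw
    obtain ⟨i, hJi⟩ := hJsurj {j} (Finset.singleton_nonempty j)
    have hemp : blockC t m k (J i) v ∩ blockC t m k (J i) w = ∅ := by
      rw [blockC_inter_eq_empty (hJk i) (hJi ▸ Finset.singleton_nonempty j)]
      intro j' hj'
      rw [hJi, Finset.mem_singleton] at hj'
      rwa [hj']
    obtain ⟨b, hb⟩ := blockC_nonempty (v := v) (J := J i) (hJk i) hk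
    have h2 : S0 v = S0 w := Finset.map_injective e h
    have hb2 : b ∈ blockC t m k (J i) w := by
      have : ((i, b) : Fin ℓ × ℕ) ∈ S0 v := mem_famS.mpr hb
      rw [h2] at this
      exact (mem_famS (J := J) (x := (i, b))).mp this
    have : b ∈ blockC t m k (J i) v ∩ blockC t m k (J i) w := Finset.mem_inter.mpr ⟨hb, hb2⟩
    rw [hemp] at this
    exact absurd this (Finset.notMem_empty b)
  refine ⟨A, 𝒮, ⟨?_, ?_, ?_, ?_, ?_⟩, ?_⟩
  · -- disjointness of base sets
    intro i j hij
    rw [hAdef]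
    rw [Finset.disjoint_map]
    rw [Finset.disjoint_left]
    intro x hx hx'
    rw [Finset.mem_product, Finset.mem_singleton] at hx hx'
    exact hij (by rw [← hx.1, hx'.1])
  · -- cardinality of base sets
    intro i
    rw [hAdef]
    rw [Finset.card_map, Finset.card_product, Finset.card_singleton, one_mul, Finset.card_range]
  · -- subset of union
    intro S hS
    rw [h𝒮def, Finset.mem_image] at hS
    obtain ⟨v, _, rfl⟩ := hS
    intro x hx
    rw [Finset.mem_map] at hx
    obtain ⟨y, hy, rfl⟩ := hx
    have hy2 : y.2 ∈ blockC t m k (J y.1) v := mem_famS.mp hy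
    have hsub : blockC t m k (J y.1) v ⊆ Finset.range n :=
      blockC_subset hkn (hk1 v) (hJk y.1)
    rw [Finset.mem_biUnion]
    refine ⟨y.1, Finset.mem_univ _, ?_⟩
    rw [hAdef, Finset.mem_map]
    refine ⟨y, ?_, rfl⟩
    rw [Finset.mem_product, Finset.mem_singleton]
    exact ⟨rfl, hsub hy2⟩
  · -- intersection cardinalities
    intro S hS i
    rw [h𝒮def, Finset.mem_image] at hS
    obtain ⟨v, _, rfl⟩ := hS
    rw [hAdef]
    rw [← Finset.map_inter, Finset.card_map]
    exact hS0card v i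
  · -- parity
    intro S hS T hT hST
    rw [h𝒮def, Finset.mem_image] at hS hT
    obtain ⟨v, _, rfl⟩ := hS
    obtain ⟨w, _, rfl⟩ := hT
    have hvw : v ≠ w := fun hc => hST (by rw [hc])
    set D := Finset.univ.filter (fun j => v j ≠ w j) with hD
    have hDne : D.Nonempty := by
      obtain ⟨j, hj⟩ := Function.ne_iff.mp hvw
      exact ⟨j, by simp [hD, hj]⟩
    have hchar : ∀ i : Fin ℓ,
        (blockC t m k (J i) v ∩ blockC t m k (J i) w = ∅) ↔
          ((J i).Nonempty ∧ J i ⊆ D) := by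
      intro i
      by_cases hJi : (J i).Nonempty
      · rw [blockC_inter_eq_empty (hJk i) hJi]
        constructor
        · intro h
          refine ⟨hJi, fun j hj => ?_⟩
          rw [hD, Finset.mem_filter]
          exact ⟨Finset.mem_univ _, h j hj⟩
        · intro h j hj
          have := h.2 hj
          rw [hD, Finset.mem_filter] at this
          exact this.2
      · rw [blockC_eq_of_empty hJi, blockC_eq_of_empty hJi, Finset.inter_self]
        simp only [hJi, false_and, iff_false]
        rw [Finset.range_eq_empty_iff]
        omega
    have hfilter : (Finset.univ.filter
          (fun i => (S0 v).map e ∩ (S0 w).map e ∩ A i = ∅)) =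
        Finset.univ.filter (fun i => (J i).Nonempty ∧ J i ⊆ D) := by
      apply Finset.filter_congr
      intro i _
      rw [hAdef, ← Finset.map_inter, ← Finset.map_inter, Finset.map_eq_empty, hSSi v w i,
        hchar i]
    rw [hfilter]
    have hcount : (Finset.univ.filter (fun i => (J i).Nonempty ∧ J i ⊆ D)).card =
        (D.powerset.filter (fun s => s.Nonempty)).card := by
      apply Finset.card_bij (fun i _ => J i)
      · intro i hi
        rw [Finset.mem_filter] at hi
        rw [Finset.mem_filter, Finset.mem_powerset]
        exact ⟨hi.2.2, hi.2.1⟩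
      · intro i hi i' hi' heq
        rw [Finset.mem_filter] at hi
        exact hJinj i i' hi.2.1 heq
      · intro s hs
        rw [Finset.mem_filter, Finset.mem_powerset] at hs
        obtain ⟨i, hJi⟩ := hJsurj s hs.2
        refine ⟨i, ?_, hJi⟩
        rw [Finset.mem_filter]
        exact ⟨Finset.mem_univ _, hJi ▸ hs.2, hJi ▸ hs.1⟩
    have hpow : (D.powerset.filter (fun s => s.Nonempty)).card = 2 ^ D.card - 1 := by
      have h1 : D.powerset.filter (fun s => s.Nonempty) = D.powerset.erase ∅ := by
        ext s
        simp [Finset.nonempty_iff_ne_empty, and_comm]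
      rw [h1, Finset.card_erase_of_mem (Finset.empty_mem_powerset _), Finset.card_powerset]
    rw [hcount, hpow]
    obtain ⟨d, hd⟩ : ∃ d, D.card = d + 1 :=
      ⟨D.card - 1, by have := Finset.card_pos.mpr hDne; omega⟩
    refine ⟨2 ^ d - 1, ?_⟩
    rw [hd, pow_succ]
    have h1 : 1 ≤ 2 ^ d := Nat.one_le_two_pow
    omega
  · -- cardinality bound
    rw [h𝒮def, Finset.card_image_of_injective _ hinj, Finset.card_univ, Fintype.card_fun,
      Fintype.card_fin, Fintype.card_fin]
end
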